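/- arXiv:2411.19603 — 7 statements merged into one kernel-verified Lean document; each statement's English description precedes it below -/
import Mathlib

section
/- Let P be an n×n irreducible row-stochastic matrix with eigenvalues λ₁,…,λ_{n-1}, λ_n = 1 (where 1 is a simple eigenvalue), and let v be any vector with vᵀ𝟙 = 1. Then trace((I - P + 𝟙vᵀ)⁻¹) - 1 = Σ_{i=1}^{n-1} 1/(1 - λ_i). -/
open Matrix Polynomial

lemma my_eval_charpoly {n : ℕ} (M : Matrix (Fin n) (Fin n) ℂ) (x : ℂ) :
    M.charpoly.eval x = (x • (1 : Matrix (Fin n) (Fin n) ℂ) - M).det := by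
  rw [Matrix.charpoly, ← Polynomial.coe_evalRingHom, RingHom.map_det]
  congr 1
  ext i j
  by_cases h : i = j <;>
    simp [h, Matrix.charmatrix_apply, Matrix.one_apply, Matrix.diagonal_apply]

lemma my_erase_eq_filter {s : Multiset ℂ} (a : ℂ) (h : s.count a = 1) :
    s.erase a = s.filter (· ≠ a) := by
  ext b
  rcases eq_or_ne b a with rfl | hb
  · simp [Multiset.count_erase_self, h, Multiset.count_filter]
  · simp [Multiset.count_erase_of_ne hb, Multiset.count_filter, hb]

lemma my_card_roots {n : ℕ} (M : Matrix (Fin n) (Fin n) ℂ) :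
    Multiset.card M.charpoly.roots = n := by
  rw [(splits_iff_card_roots).1 (IsAlgClosed.splits M.charpoly),
    M.charpoly_natDegree_eq_dim, Fintype.card_fin]

lemma my_prod_roots {n : ℕ} (M : Matrix (Fin n) (Fin n) ℂ) :
    M.charpoly = (M.charpoly.roots.map (fun a => X - C a)).prod :=
  (IsAlgClosed.splits M.charpoly).eq_prod_roots_of_monic
    M.charpoly_monic

/-- Key polynomial identity. -/
lemma my_poly_id {n : ℕ} (Q : Matrix (Fin n) (Fin n) ℂ)
    (hQ1 : Q.mulVec (fun _ => 1) = fun _ => 1)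
    (w : Fin n → ℂ) (hw : ∑ i, w i = 1) :
    X * (1 - Q + vecMulVec (fun _ => 1) w).charpoly
      = (X - 1) * (1 - Q).charpoly := by
  set Bc := (1 : Matrix (Fin n) (Fin n) ℂ) - Q with hBc
  set Ac := Bc + vecMulVec (fun _ => 1) w with hAc
  apply Polynomial.eq_of_infinite_eval_eq
  have hfin : ({x : ℂ | x = 0 ∨ Bc.charpoly.eval x = 0}).Finite := by
    have h1 : ({x : ℂ | x = 0}).Finite := Set.finite_singleton 0
    have h2 : ({x : ℂ | Bc.charpoly.eval x = 0}).Finite :=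
      Polynomial.finite_setOf_isRoot (Bc.charpoly_monic.ne_zero)
    exact (h1.union h2).subset (by intro x hx; rcases hx with h | h <;> simp [h])
  refine (hfin.infinite_compl).mono ?_
  intro x hx
  simp only [Set.mem_compl_iff, Set.mem_setOf_eq, not_or] at hx
  obtain ⟨hx0, hxB⟩ := hx
  set M := x • (1 : Matrix (Fin n) (Fin n) ℂ) - Bc with hM
  have hdet : M.det ≠ 0 := by rw [← my_eval_charpoly]; exact hxB
  have hMu : IsUnit M.det := isUnit_iff_ne_zero.2 hdet
  have hB1 : Bc.mulVec (fun _ => 1) = 0 := by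
    rw [hBc, Matrix.sub_mulVec, Matrix.one_mulVec, hQ1, sub_self]
  have hM1 : M.mulVec (fun _ => 1) = x • (fun _ => 1 : Fin n → ℂ) := by
    rw [hM, Matrix.sub_mulVec, hB1, sub_zero, Matrix.smul_mulVec,
      Matrix.one_mulVec]
  have hMinv1 : M⁻¹.mulVec (fun _ => 1) = x⁻¹ • (fun _ => 1 : Fin n → ℂ) := by
    have h1 : x • M⁻¹.mulVec (fun _ => 1) = (fun _ => 1 : Fin n → ℂ) := by
      rw [← Matrix.mulVec_smul, ← hM1, Matrix.mulVec_mulVec,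
        Matrix.nonsing_inv_mul M hMu, Matrix.one_mulVec]
    calc M⁻¹.mulVec (fun _ => 1)
        = x⁻¹ • (x • M⁻¹.mulVec (fun _ => 1)) := by
          rw [smul_smul, inv_mul_cancel₀ hx0, one_smul]
      _ = x⁻¹ • (fun _ => 1 : Fin n → ℂ) := by rw [h1]
  have hsplit : x • (1 : Matrix (Fin n) (Fin n) ℂ) - Ac
      = M + replicateCol Unit (fun _ => (-1 : ℂ)) * replicateRow Unit w := by
    rw [← Matrix.vecMulVec_eq, hAc, hM]
    ext i j
    simp [Matrix.vecMulVec_apply]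
    ring
  have hdot : w ⬝ᵥ (M⁻¹.mulVec (fun _ => (-1 : ℂ))) = -x⁻¹ := by
    have hneg : M⁻¹.mulVec (fun _ => (-1 : ℂ))
        = -(x⁻¹ • (fun _ => 1 : Fin n → ℂ)) := by
      have h2 : (fun _ => (-1 : ℂ) : Fin n → ℂ) = -(fun _ => (1:ℂ)) := by
        funext i; simp
      rw [h2, Matrix.mulVec_neg, hMinv1]
    rw [hneg]
    simp only [dotProduct, Pi.neg_apply, Pi.smul_apply, smul_eq_mul, mul_one,
      mul_neg]
    simp only [← mul_neg]
    rw [← Finset.sum_mul, hw, one_mul]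
  have hdet1 : ((1 : Matrix Unit Unit ℂ) + replicateRow Unit w * M⁻¹ * replicateCol Unit (fun _ : Fin n => (-1:ℂ))).det
      = 1 - x⁻¹ := by
    have h3 : (replicateRow Unit w * M⁻¹ * replicateCol Unit (fun _ : Fin n => (-1:ℂ)))
        = replicateRow Unit w * replicateCol Unit (M⁻¹.mulVec (fun _ => (-1:ℂ))) := by
      rw [Matrix.replicateCol_mulVec, Matrix.mul_assoc]
    rw [Matrix.det_unique, Matrix.add_apply, Matrix.one_apply_eq, h3,
      Matrix.replicateRow_mul_replicateCol_apply, hdot]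
    ring
  have hdetA : (x • (1 : Matrix (Fin n) (Fin n) ℂ) - Ac).det
      = M.det * (1 - x⁻¹) := by
    rw [hsplit, Matrix.det_add_replicateCol_mul_replicateRow hMu, hdet1]
  simp only [Set.mem_setOf_eq]
  rw [eval_mul, eval_mul, eval_X, eval_sub, eval_X, eval_one,
    my_eval_charpoly, my_eval_charpoly, hdetA, ← hM]
  field_simp

/-- roots of charpoly of `1 - Q`. -/
lemma my_B_roots {n : ℕ} (Q : Matrix (Fin n) (Fin n) ℂ) :
    ((1 : Matrix (Fin n) (Fin n) ℂ) - Q).charpoly.roots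
      = Q.charpoly.roots.map (fun l => 1 - l) := by
  have hB : ((1 : Matrix (Fin n) (Fin n) ℂ) - Q).charpoly
      = ((Q.charpoly.roots.map (fun l => (1:ℂ) - l)).map (fun a => X - C a)).prod := by
    apply Polynomial.funext
    intro x
    rw [my_eval_charpoly]
    have h1 : x • (1 : Matrix (Fin n) (Fin n) ℂ) - (1 - Q)
        = -((1 - x) • (1 : Matrix (Fin n) (Fin n) ℂ) - Q) := by
      ext i j
      simp [Matrix.one_apply]
      split_ifs <;> ring
    rw [h1, Matrix.det_neg, ← my_eval_charpoly, Fintype.card_fin]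
    nth_rewrite 1 [my_prod_roots Q]
    rw [eval_multiset_prod, eval_multiset_prod, Multiset.map_map, Multiset.map_map,
      Multiset.map_map]
    have h2 : ((eval x ∘ fun a => X - C a) ∘ fun l => (1:ℂ) - l)
        = fun l : ℂ => -((1 - x) - l) := by
      funext l; simp; ring
    rw [h2]
    have h3 : (Q.charpoly.roots.map fun l : ℂ => -((1 - x) - l))
        = (Q.charpoly.roots.map fun l : ℂ => (1 - x) - l).map Neg.neg := by
      rw [Multiset.map_map]; rfl
    rw [h3, Multiset.prod_map_neg, Multiset.card_map, my_card_roots]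
    have h4 : Q.charpoly.roots.map (eval (1 - x) ∘ fun a => X - C a)
        = Q.charpoly.roots.map (fun l : ℂ => 1 - x - l) :=
      Multiset.map_congr rfl (by intro l _; simp)
    rw [h4]
  rw [hB, roots_multiset_prod_X_sub_C]

/-- roots of charpoly of `1 - Q + 𝟙wᵀ`. -/
lemma my_A_roots {n : ℕ} (Q : Matrix (Fin n) (Fin n) ℂ)
    (hQ1 : Q.mulVec (fun _ => 1) = fun _ => 1)
    (hs : Q.charpoly.roots.count 1 = 1)
    (w : Fin n → ℂ) (hw : ∑ i, w i = 1) :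
    (1 - Q + vecMulVec (fun _ => 1) w).charpoly.roots
      = 1 ::ₘ ((Q.charpoly.roots.filter (· ≠ 1)).map (fun l => 1 - l)) := by
  set pA := (1 - Q + vecMulVec (fun _ => 1) w).charpoly with hpA
  set pB := ((1 : Matrix (Fin n) (Fin n) ℂ) - Q).charpoly with hpB
  have hpoly := my_poly_id Q hQ1 w hw
  have hroots : (0 : ℂ) ::ₘ pA.roots = 1 ::ₘ pB.roots := by
    have h1 : (X * pA).roots = 0 ::ₘ pA.roots := by
      rw [roots_mul (mul_ne_zero X_ne_zero (charpoly_monic _).ne_zero),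
        roots_X, Multiset.singleton_add]
    have h2 : ((X - 1) * pB).roots = 1 ::ₘ pB.roots := by
      have : (X - 1 : ℂ[X]) = X - C 1 := by rw [Polynomial.C_1]
      rw [roots_mul (mul_ne_zero (by rw [this]; exact X_sub_C_ne_zero 1)
        (charpoly_monic _).ne_zero), this, roots_X_sub_C, Multiset.singleton_add]
    rw [← h1, ← h2, hpoly]
  have h4 : pA.roots = (1 ::ₘ pB.roots).erase 0 := by
    rw [← hroots, Multiset.erase_cons_head]
  have h5 : (1 ::ₘ pB.roots).erase 0 = 1 ::ₘ (pB.roots.erase 0) :=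
    Multiset.erase_cons_tail _ (by norm_num)
  have hinj : Function.Injective (fun l : ℂ => 1 - l) := by
    intro a b h; simpa using h
  have h6 : pB.roots.erase 0 = (Q.charpoly.roots.filter (· ≠ 1)).map (fun l => 1 - l) := by
    rw [hpB, my_B_roots]
    have h0 : (0 : ℂ) = (fun l : ℂ => 1 - l) 1 := by norm_num
    rw [h0, ← Multiset.map_erase _ hinj, my_erase_eq_filter 1 hs]
  rw [h4, h5, h6]

lemma my_trace_inv {n : ℕ} (M : Matrix (Fin n) (Fin n) ℂ)
    (h0 : (0 : ℂ) ∉ M.charpoly.roots) :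
    M⁻¹.trace = (M.charpoly.roots.map (fun μ => μ⁻¹)).sum := by
  have hdet : M.det ≠ 0 := by
    rw [Matrix.det_eq_prod_roots_charpoly]
    exact Multiset.prod_ne_zero h0
  have hMu : IsUnit M.det := isUnit_iff_ne_zero.2 hdet
  have hchar : M⁻¹.charpoly
      = ((M.charpoly.roots.map (fun μ => μ⁻¹)).map (fun a => X - C a)).prod := by
    apply Polynomial.eq_of_infinite_eval_eq
    refine ((Set.finite_singleton (0 : ℂ)).infinite_compl).mono ?_
    intro x hx
    have hx0 : x ≠ 0 := by simpa using hx
    simp only [Set.mem_setOf_eq]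
    rw [my_eval_charpoly]
    have e1 : x • (1 : Matrix (Fin n) (Fin n) ℂ) - M⁻¹ = M⁻¹ * (x • M - 1) := by
      rw [Matrix.mul_sub, Matrix.mul_smul, Matrix.nonsing_inv_mul M hMu,
        Matrix.mul_one]
    have e2 : x • M - (1 : Matrix (Fin n) (Fin n) ℂ)
        = (-x) • (x⁻¹ • (1 : Matrix (Fin n) (Fin n) ℂ) - M) := by
      ext i j
      simp [Matrix.one_apply]
      split_ifs <;> field_simp <;> ring
    rw [e1, Matrix.det_mul, e2, Matrix.det_smul, Fintype.card_fin,
      ← my_eval_charpoly, Matrix.det_nonsing_inv, Ring.inverse_eq_inv']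
    have hev : eval x⁻¹ M.charpoly
        = (M.charpoly.roots.map (fun μ => x⁻¹ - μ)).prod := by
      conv_lhs => rw [my_prod_roots M]
      rw [eval_multiset_prod, Multiset.map_map]
      exact congrArg _ (Multiset.map_congr rfl (by intro l _; simp))
    have hev2 : eval x (((M.charpoly.roots.map (fun μ => μ⁻¹)).map
          (fun a => X - C a)).prod)
        = (M.charpoly.roots.map (fun μ => x - μ⁻¹)).prod := by
      rw [eval_multiset_prod, Multiset.map_map, Multiset.map_map]
      exact congrArg _ (Multiset.map_congr rfl (by intro l _; simp))
    rw [hev, hev2, Matrix.det_eq_prod_roots_charpoly]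
    have hpow : ((-x) ^ n : ℂ) = (M.charpoly.roots.map (fun _ => -x)).prod := by
      rw [Multiset.map_const', Multiset.prod_replicate, my_card_roots]
    rw [hpow, ← Multiset.prod_map_inv', ← Multiset.prod_map_mul,
      ← Multiset.prod_map_mul]
    refine congrArg Multiset.prod (Multiset.map_congr rfl ?_)
    intro l hl
    have hl0 : l ≠ 0 := fun h => h0 (h ▸ hl)
    field_simp
    ring
  rw [Matrix.trace_eq_sum_roots_charpoly, hchar, roots_multiset_prod_X_sub_C]

/-- Kemeny-type sum: `∑ 1/(1-λ)` over the eigenvalues `λ ≠ 1` of `P`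
(roots of the characteristic polynomial over `ℂ`, with multiplicity). -/
noncomputable def kemeny {n : ℕ} (P : Matrix (Fin n) (Fin n) ℝ) : ℂ :=
  ((((P.map (fun x : ℝ => (x : ℂ))).charpoly.roots).filter (· ≠ 1)).map
    (fun μ => (1 - μ)⁻¹)).sum

/-- for an irreducible row-stochastic `P` (so `1` is a simple
eigenvalue) and any `v` with `vᵀ𝟙 = 1`,
`trace((I - P + 𝟙vᵀ)⁻¹) - 1 = ∑_{λ ≠ 1} 1/(1-λ)`. -/
theorem kemeny_trace_formula {n : ℕ} (hn : 1 ≤ n)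
    (P : Matrix (Fin n) (Fin n) ℝ)
    (hnonneg : ∀ i j, 0 ≤ P i j)
    (hstoch : P.mulVec (fun _ => 1) = fun _ => 1)
    (hirr : ∀ i j, ∃ k : ℕ, 0 < (P ^ k) i j)
    (hsimple : ((P.map (fun x : ℝ => (x : ℂ))).charpoly.roots).count 1 = 1)
    (v : Fin n → ℝ) (hv : ∑ i, v i = 1) :
    ((Matrix.trace ((1 - P + Matrix.vecMulVec (fun _ => 1) v)⁻¹) : ℝ) : ℂ) - 1
      = kemeny P := by
  classical
  set A := 1 - P + Matrix.vecMulVec (fun _ => 1) v with hA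
  set Q := P.map (fun x : ℝ => (x : ℂ)) with hQ
  set wc := fun i => ((v i : ℝ) : ℂ) with hwc
  set Ac := 1 - Q + Matrix.vecMulVec (fun _ => (1:ℂ)) wc with hAc
  -- mapped hypotheses
  have hQ1 : Q.mulVec (fun _ => 1) = fun _ => 1 := by
    funext i
    have := congrFun hstoch i
    simp only [Matrix.mulVec, dotProduct, mul_one] at this ⊢
    rw [hQ]
    push_cast [Matrix.map_apply]
    exact_mod_cast congrArg (fun x : ℝ => (x : ℂ)) this
  have hwsum : ∑ i, wc i = 1 := by
    rw [hwc]; beta_reduce; exact_mod_cast hv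
  -- A maps to Ac
  have hmapA : A.map (fun x : ℝ => (x : ℂ)) = Ac := by
    ext i j
    simp [hA, hAc, hQ, hwc, Matrix.map_apply, Matrix.vecMulVec_apply, Matrix.one_apply,
      apply_ite]
  -- roots of Ac
  have hAroots : Ac.charpoly.roots
      = 1 ::ₘ ((Q.charpoly.roots.filter (· ≠ 1)).map (fun l => 1 - l)) :=
    my_A_roots Q hQ1 hsimple wc hwsum
  -- 0 is not a root
  have h0 : (0 : ℂ) ∉ Ac.charpoly.roots := by
    rw [hAroots]
    intro h
    rcases Multiset.mem_cons.1 h with h | h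
    · exact one_ne_zero h.symm
    · obtain ⟨l, hl, hl0⟩ := Multiset.mem_map.1 h
      have : l ≠ 1 := by
        have := Multiset.mem_filter.1 hl
        simpa using this.2
      exact this (by linear_combination -hl0)
  -- Ac invertible; A invertible
  have hdetAc : Ac.det ≠ 0 := by
    rw [Matrix.det_eq_prod_roots_charpoly]
    exact Multiset.prod_ne_zero h0
  have hdetA : A.det ≠ 0 := by
    intro h
    apply hdetAc
    have : ((A.det : ℝ) : ℂ) = Ac.det := by
      rw [← hmapA]
      exact RingHom.map_det Complex.ofRealHom A
    rw [← this, h]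
    norm_num
  have hAu : IsUnit A.det := isUnit_iff_ne_zero.2 hdetA
  -- inverse commutes with map
  have hinvmap : (A⁻¹).map (fun x : ℝ => (x : ℂ)) = Ac⁻¹ := by
    refine (Matrix.inv_eq_left_inv ?_).symm
    rw [← hmapA]
    have : (A⁻¹).map (fun x : ℝ => (x : ℂ)) * A.map (fun x : ℝ => (x : ℂ))
        = (A⁻¹ * A).map (fun x : ℝ => (x : ℂ)) :=
      (map_mul Complex.ofRealHom.mapMatrix A⁻¹ A).symm
    rw [this, Matrix.nonsing_inv_mul A hAu]
    exact Matrix.map_one _ (by norm_num) (by norm_num)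
  -- trace
  have htrace : ((A⁻¹.trace : ℝ) : ℂ) = Ac⁻¹.trace := by
    rw [← hinvmap]
    simp [Matrix.trace, Matrix.diag, Matrix.map_apply]
  rw [htrace, my_trace_inv Ac h0, hAroots]
  rw [Multiset.map_cons, Multiset.sum_cons, Multiset.map_map]
  have : ((fun μ : ℂ => μ⁻¹) ∘ fun l : ℂ => 1 - l) = fun μ : ℂ => (1 - μ)⁻¹ := by
    funext l; simp
  rw [this, inv_one, kemeny]
  ring
end

section
/- Let G be a connected weighted undirected graph with adjacency matrix A, let e = (i,j) be a cut-edge, and let Ĝ be the graph with adjacency matrix Â = A + a_{ij}(e_i - e_j)(e_i - e_j)ᵀ (remove edge e, add loops of weight a_{ij} at i and j). Order the vertices so that those of the component Ĝ₁ containing i come first, partitioning P = D_A⁻¹A into blocks [[P₁₁, P₁₂],[P₂₁, P₂₂]]. Then the stochastic matrix P̂₁ of the random walk on Ĝ₁ equals the stochastic complement P₁₁ + P₁₂(I - P₂₂)⁻¹P₂₁. -/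
/-!
Split `P = D⁻¹A` into blocks. Since `e` is the only edge between the blocks, the walk enters
`Ĝ₁` from the second block only at `i`: `P₂₁ = u eᵢᵀ` with `u = P₂₁ eᵢ`. As `P` is stochastic,
`(I - P₂₂) 𝟙 = P₂₁ 𝟙 = u`, so `(I - P₂₂)⁻¹ P₂₁ = 𝟙 eᵢᵀ` and the stochastic complement is
`P₁₁ + (P₁₂ 𝟙) eᵢᵀ`: the mass that leaves the first block is returned at `i`. Here that mass is
`a_{ij}/d_i`, in row `i` only, which is the loop weight of `Ĝ₁` over its degree at `i`; all
degrees of `Ĝ₁` agree with those of `G`.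

`I - P₂₂` is invertible by a maximum principle: for a fixed vector `v` of the substochastic
`P₂₂`, the set where `|v|` is maximal is closed under transitions; by connectivity it contains
`j`, whose row of `P₂₂` has sum `1 - a_{ij}/d_j < 1`, which forces the maximum to be `0`.
-/

open Matrix Relation

theorem Relation.ReflTransGen.inr_exit_of_inr_inl {α β : Type*} {R : α ⊕ β → α ⊕ β → Prop}
    {j : β} (hexit : ∀ c y, R (Sum.inr c) (Sum.inl y) → c = j) {c : β} {y : α}
    (h : ReflTransGen R (Sum.inr c) (Sum.inl y)) :
    ReflTransGen (fun a b => R (Sum.inr a) (Sum.inr b)) c j := by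
  suffices ∀ x, ReflTransGen R x (Sum.inl y) → ∀ c, x = Sum.inr c →
      ReflTransGen (fun a b => R (Sum.inr a) (Sum.inr b)) c j from this _ h c rfl
  intro x hx
  induction hx using ReflTransGen.head_induction_on with
  | refl => intro c h; cases h
  | @head x z hxz _ ih =>
    rintro c rfl
    cases z with
    | inl y' => rw [hexit c y' hxz]
    | inr c' => exact .head hxz (ih c' rfl)

namespace Matrix

variable {n K : Type*} [Fintype n] [Field K]

theorem inv_diagonal_of_ne_zero [DecidableEq n] {d : n → K} (hd : ∀ a, d a ≠ 0) :
    (diagonal d)⁻¹ = diagonal d⁻¹ :=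
  inv_eq_right_inv <| by
    rw [diagonal_mul_diagonal, ← diagonal_one]
    exact congrArg diagonal (funext fun a => mul_inv_cancel₀ (hd a))

theorem inv_diagonal_mulVec_one_mul_mulVec_one [DecidableEq n] {A : Matrix n n K}
    (hA : ∀ a, (A *ᵥ 1) a ≠ 0) : ((diagonal (A *ᵥ 1))⁻¹ * A) *ᵥ 1 = 1 := by
  ext a
  rw [← mulVec_mulVec, inv_diagonal_of_ne_zero hA, mulVec_diagonal]
  exact inv_mul_cancel₀ (hA a)

section StochasticComplement

variable {ι₁ ι₂ : Type*} [Fintype ι₁] [Fintype ι₂] {P : Matrix (ι₁ ⊕ ι₂) (ι₁ ⊕ ι₂) K}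

theorem sum_toBlocks₂₂_apply (hP : P *ᵥ 1 = 1) (c : ι₂) :
    ∑ b, P.toBlocks₂₂ c b = 1 - ∑ y, P.toBlocks₂₁ c y := by
  have := congrFun hP (Sum.inr c)
  simp only [mulVec, dotProduct, Pi.one_apply, mul_one, Fintype.sum_sum_type] at this
  simp only [toBlocks₂₂, toBlocks₂₁, of_apply]
  rw [← this, add_sub_cancel_left]

theorem toBlocks₁₂_mul_inv_mul_toBlocks₂₁_eq_vecMulVec [DecidableEq ι₁] [DecidableEq ι₂]
    (hP : P *ᵥ 1 = 1) {i : ι₁} (h21 : ∀ c y, y ≠ i → P.toBlocks₂₁ c y = 0)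
    (hdet : IsUnit (1 - P.toBlocks₂₂).det) :
    P.toBlocks₁₂ * (1 - P.toBlocks₂₂)⁻¹ * P.toBlocks₂₁ =
      vecMulVec (P.toBlocks₁₂ *ᵥ 1) (Pi.single i 1) := by
  set u : ι₂ → K := fun c => P.toBlocks₂₁ c i
  have hsum (c : ι₂) : ∑ y, P.toBlocks₂₁ c y = u c :=
    Finset.sum_eq_single i (fun y _ hy => h21 c y hy) (by simp)
  have h21' : P.toBlocks₂₁ = vecMulVec u (Pi.single i 1) := by
    ext c y
    rcases eq_or_ne y i with rfl | hy
    · simp [u, vecMulVec_apply]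
    · simp [vecMulVec_apply, hy, h21 c y hy]
  have hu : (1 - P.toBlocks₂₂) *ᵥ 1 = u := by
    ext c
    have : (P.toBlocks₂₂ *ᵥ 1) c = ∑ b, P.toBlocks₂₂ c b := by simp [mulVec, dotProduct]
    rw [sub_mulVec, one_mulVec, Pi.sub_apply, this, sum_toBlocks₂₂_apply hP, hsum]
    simp
  have hNu : (1 - P.toBlocks₂₂)⁻¹ *ᵥ u = 1 := by
    rw [← hu, mulVec_mulVec, nonsing_inv_mul _ hdet, one_mulVec]
  rw [h21', Matrix.mul_assoc, mul_vecMulVec, hNu, mul_vecMulVec]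

end StochasticComplement

section CutEdge

variable {ι₁ ι₂ : Type*} [Fintype ι₂] [DecidableEq ι₁]
  {A : Matrix (ι₁ ⊕ ι₂) (ι₁ ⊕ ι₂) K} {i : ι₁} {j : ι₂}

theorem toBlocks₁₂_mulVec_one_of_cut
    (hcut : ∀ a b, A (Sum.inl a) (Sum.inr b) ≠ 0 → a = i ∧ b = j) :
    A.toBlocks₁₂ *ᵥ 1 = A (Sum.inl i) (Sum.inr j) • Pi.single i 1 := by
  ext x
  simp only [mulVec, dotProduct, Pi.one_apply, mul_one, toBlocks₁₂, of_apply]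
  rw [Finset.sum_eq_single j (fun b _ hb => not_not.1 fun h => hb (hcut x b h).2) (by simp)]
  rcases eq_or_ne x i with rfl | hx
  · simp
  · simpa [hx] using not_not.1 fun h => hx (hcut x j h).1

theorem mulVec_one_toBlocks₁₁_add_loop [Fintype ι₁]
    (hcut : ∀ a b, A (Sum.inl a) (Sum.inr b) ≠ 0 → a = i ∧ b = j) :
    (A.toBlocks₁₁ + A (Sum.inl i) (Sum.inr j) • single i i 1) *ᵥ 1 = (A *ᵥ 1) ∘ Sum.inl := by
  have hsplit : (A *ᵥ 1) ∘ Sum.inl = A.toBlocks₁₁ *ᵥ 1 + A.toBlocks₁₂ *ᵥ 1 := by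
    ext x
    simp [mulVec, dotProduct, Fintype.sum_sum_type, toBlocks₁₁, toBlocks₁₂]
  rw [hsplit, toBlocks₁₂_mulVec_one_of_cut hcut, add_mulVec, smul_mulVec, single_mulVec_eq]
  simp

theorem inv_diagonal_mul_toBlocks₁₁_add_loop [Fintype ι₁] [DecidableEq ι₂]
    (hcut : ∀ a b, A (Sum.inl a) (Sum.inr b) ≠ 0 → a = i ∧ b = j) (hd : ∀ a, (A *ᵥ 1) a ≠ 0) :
    (diagonal ((A.toBlocks₁₁ + A (Sum.inl i) (Sum.inr j) • single i i 1) *ᵥ 1))⁻¹ *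
        (A.toBlocks₁₁ + A (Sum.inl i) (Sum.inr j) • single i i 1) =
      ((diagonal (A *ᵥ 1))⁻¹ * A).toBlocks₁₁ +
        vecMulVec (((diagonal (A *ᵥ 1))⁻¹ * A).toBlocks₁₂ *ᵥ 1) (Pi.single i 1) := by
  have h12 (x : ι₁) : ∑ c, A (Sum.inl x) (Sum.inr c) =
      A (Sum.inl i) (Sum.inr j) * (Pi.single i 1 : ι₁ → K) x := by
    simpa [mulVec, dotProduct, toBlocks₁₂] using congrFun (toBlocks₁₂_mulVec_one_of_cut hcut) x
  rw [mulVec_one_toBlocks₁₁_add_loop hcut, inv_diagonal_of_ne_zero hd,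
    inv_diagonal_of_ne_zero (d := (A *ᵥ 1) ∘ Sum.inl) fun _ => hd _]
  ext x y
  simp only [single_eq_single_vecMulVec_single, toBlocks₁₁, toBlocks₁₂, of_apply, add_apply,
    diagonal_mul, mulVec, dotProduct, vecMulVec_apply, Pi.one_apply, mul_one,
    Function.comp_apply, Pi.inv_apply, smul_apply, smul_eq_mul, ← Finset.mul_sum, h12]
  ring

end CutEdge

section MaximumPrinciple

variable {𝕜 : Type*} [Field 𝕜] [LinearOrder 𝕜] [IsStrictOrderedRing 𝕜]

theorem reflTransGen_of_pow_apply_pos [DecidableEq n] {A : Matrix n n 𝕜}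
    (hA : ∀ a b, 0 ≤ A a b) :
    ∀ {k : ℕ} {a b : n}, 0 < (A ^ k) a b → ReflTransGen (fun x y => 0 < A x y) a b
  | 0, a, b, h => by
    rcases eq_or_ne a b with rfl | hab
    · exact .refl
    · simp [one_apply_ne hab] at h
  | k + 1, a, b, h => by
    rw [pow_succ, mul_apply] at h
    obtain ⟨c, -, hc⟩ := (Finset.sum_pos_iff_of_nonneg fun c _ =>
      mul_nonneg (pow_apply_nonneg hA k a c) (hA c b)).1 h
    have hpos : 0 < (A ^ k) a c ∧ 0 < A c b :=
      (pos_and_pos_or_neg_and_neg_of_mul_pos hc).resolve_right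
        fun h => (pow_apply_nonneg hA k a c).not_gt h.1
    exact .tail (reflTransGen_of_pow_apply_pos hA hpos.1) hpos.2

variable {Q : Matrix n n 𝕜} {v : n → 𝕜}

theorem abs_apply_le_sum_mul_abs_of_mulVec_eq_self (hQ : ∀ a b, 0 ≤ Q a b)
    (hv : Q *ᵥ v = v) (a : n) : |v a| ≤ ∑ b, Q a b * |v b| :=
  calc |v a| = |∑ b, Q a b * v b| := by rw [← congrFun hv a]; rfl
    _ ≤ ∑ b, |Q a b * v b| := Finset.abs_sum_le_sum_abs _ _
    _ = ∑ b, Q a b * |v b| := by simp only [abs_mul, abs_of_nonneg (hQ a _)]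

theorem abs_apply_eq_of_pos_of_mulVec_eq_self (hQ : ∀ a b, 0 ≤ Q a b)
    (hrow : ∀ a, ∑ b, Q a b ≤ 1) (hv : Q *ᵥ v = v) {M : 𝕜} (hM : ∀ b, |v b| ≤ M)
    {a b : n} (ha : |v a| = M) (hab : 0 < Q a b) : |v b| = M := by
  refine (hM b).antisymm (not_lt.1 fun hb => ?_)
  have hlt : ∑ c, Q a c * |v c| < (∑ c, Q a c) * M := by
    rw [Finset.sum_mul]
    exact Finset.sum_lt_sum (fun c _ => mul_le_mul_of_nonneg_left (hM c) (hQ a c))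
      ⟨b, Finset.mem_univ b, mul_lt_mul_of_pos_left hb hab⟩
  have hle : (∑ c, Q a c) * M ≤ M := mul_le_of_le_one_left ((abs_nonneg _).trans (hM a)) (hrow a)
  linarith [abs_apply_le_sum_mul_abs_of_mulVec_eq_self hQ hv a]

theorem eq_zero_of_mulVec_eq_self (hQ : ∀ a b, 0 ≤ Q a b) (hrow : ∀ a, ∑ b, Q a b ≤ 1)
    (hreach : ∀ a, ∃ b, ReflTransGen (fun x y => 0 < Q x y) a b ∧ ∑ c, Q b c < 1)
    (hv : Q *ᵥ v = v) : v = 0 := by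
  by_contra hne
  obtain ⟨a, ha⟩ := Function.ne_iff.1 hne
  obtain ⟨a₀, -, hmax⟩ :=
    Finset.exists_max_image Finset.univ (fun b => |v b|) ⟨a, Finset.mem_univ a⟩
  have hM : ∀ b, |v b| ≤ |v a₀| := fun b => hmax b (Finset.mem_univ b)
  have hMpos : 0 < |v a₀| := (abs_pos.2 ha).trans_le (hM a)
  have hclosed {b : n} (hab : ReflTransGen (fun x y => 0 < Q x y) a₀ b) : |v b| = |v a₀| := by
    induction hab with
    | refl => rfl
    | tail _ hcd ih => exact abs_apply_eq_of_pos_of_mulVec_eq_self hQ hrow hv hM ih hcd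
  obtain ⟨b, hab, hdef⟩ := hreach a₀
  have : |v a₀| < |v a₀| :=
    calc |v a₀| = |v b| := (hclosed hab).symm
      _ ≤ ∑ c, Q b c * |v c| := abs_apply_le_sum_mul_abs_of_mulVec_eq_self hQ hv b
      _ ≤ ∑ c, Q b c * |v a₀| :=
        Finset.sum_le_sum fun c _ => mul_le_mul_of_nonneg_left (hM c) (hQ b c)
      _ < |v a₀| := by rw [← Finset.sum_mul]; exact mul_lt_of_lt_one_left hMpos hdef
  exact this.false

theorem det_one_sub_ne_zero_of_reflTransGen [DecidableEq n] (hQ : ∀ a b, 0 ≤ Q a b)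
    (hrow : ∀ a, ∑ b, Q a b ≤ 1)
    (hreach : ∀ a, ∃ b, ReflTransGen (fun x y => 0 < Q x y) a b ∧ ∑ c, Q b c < 1) :
    (1 - Q).det ≠ 0 := fun h => by
  obtain ⟨v, hv0, hv⟩ := exists_mulVec_eq_zero_iff.2 h
  rw [sub_mulVec, one_mulVec, sub_eq_zero] at hv
  exact hv0 (eq_zero_of_mulVec_eq_self hQ hrow hreach hv.symm)

theorem det_one_sub_toBlocks₂₂_ne_zero {ι₁ ι₂ : Type*} [Fintype ι₁] [Fintype ι₂] [DecidableEq ι₂]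
    {P : Matrix (ι₁ ⊕ ι₂) (ι₁ ⊕ ι₂) 𝕜} (hP0 : ∀ a b, 0 ≤ P a b) (hP : P *ᵥ 1 = 1)
    (hexit : ∀ c, ∃ c' y, ReflTransGen (fun x y => 0 < P.toBlocks₂₂ x y) c c' ∧
      0 < P (Sum.inr c') (Sum.inl y)) :
    (1 - P.toBlocks₂₂).det ≠ 0 := by
  have hrow (c : ι₂) : ∑ b, P.toBlocks₂₂ c b ≤ 1 := by
    have : 0 ≤ ∑ y, P.toBlocks₂₁ c y := Finset.sum_nonneg fun y _ => hP0 _ _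
    linarith [sum_toBlocks₂₂_apply hP c]
  refine det_one_sub_ne_zero_of_reflTransGen (fun _ _ => hP0 _ _) hrow fun c => ?_
  obtain ⟨c', y, hcc', hy⟩ := hexit c
  refine ⟨c', hcc', ?_⟩
  have : P.toBlocks₂₁ c' y ≤ ∑ y, P.toBlocks₂₁ c' y :=
    Finset.single_le_sum (fun y _ => hP0 (Sum.inr c') (Sum.inl y)) (Finset.mem_univ y)
  linarith [sum_toBlocks₂₂_apply hP c', show 0 < P.toBlocks₂₁ c' y from hy]

end MaximumPrinciple

end Matrix

/-- for a cut-edge `e = (i,j)` of a connected weighted graph, the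
stochastic matrix of the random walk on the component `Ĝ₁` (obtained by deleting
`e` and adding a loop of weight `a_{ij}` at `i`) equals the stochastic
complement `P₁₁ + P₁₂(I - P₂₂)⁻¹P₂₁` of `P = D_A⁻¹A`.

Vertices are ordered so that those of `Ĝ₁` come first: the index type is
`Fin n₁ ⊕ Fin n₂`, with the vertices of `Ĝ₁` in the first summand. -/
theorem stochastic_complement_cut_edge {n₁ n₂ : ℕ}
    (A : Matrix (Fin n₁ ⊕ Fin n₂) (Fin n₁ ⊕ Fin n₂) ℝ)
    (hsym : A.IsSymm)
    (hnonneg : ∀ a b, 0 ≤ A a b)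
    -- `G` is connected:
    (hconn : ∀ a b, ∃ k : ℕ, 0 < (A ^ k) a b)
    (i : Fin n₁) (j : Fin n₂)
    -- `e = (i,j)` is an edge, and it is the only edge between the two blocks
    -- (so it is a cut-edge separating the two blocks):
    (hedge : 0 < A (Sum.inl i) (Sum.inr j))
    (hcut : ∀ a b, A (Sum.inl a) (Sum.inr b) ≠ 0 → a = i ∧ b = j)
    (d : Fin n₁ ⊕ Fin n₂ → ℝ) (hd : d = A.mulVec (fun _ => 1))
    (hdpos : ∀ a, 0 < d a)
    (P : Matrix (Fin n₁ ⊕ Fin n₂) (Fin n₁ ⊕ Fin n₂) ℝ)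
    (hP : P = (Matrix.diagonal d)⁻¹ * A)
    -- adjacency matrix of `Ĝ₁`: the `(1,1)` block of `A` plus the loop at `i`
    (A₁ : Matrix (Fin n₁) (Fin n₁) ℝ)
    (hA₁ : A₁ = A.toBlocks₁₁ +
      A (Sum.inl i) (Sum.inr j) • Matrix.single i i 1)
    (d₁ : Fin n₁ → ℝ) (hd₁ : d₁ = A₁.mulVec (fun _ => 1)) :
    (Matrix.diagonal d₁)⁻¹ * A₁
      = P.toBlocks₁₁ + P.toBlocks₁₂ * (1 - P.toBlocks₂₂)⁻¹ * P.toBlocks₂₁ := by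
  subst hd₁ hA₁
  have hPapp (a b) : P a b = (d a)⁻¹ * A a b := by
    rw [hP, inv_diagonal_of_ne_zero fun a => (hdpos a).ne', diagonal_mul, Pi.inv_apply]
  have hstoch : P *ᵥ 1 = 1 := by
    subst hP hd
    exact inv_diagonal_mulVec_one_mul_mulVec_one fun a => (hdpos a).ne'
  have hP0 (a b) : 0 ≤ P a b := by
    rw [hPapp]; exact mul_nonneg (inv_nonneg.2 (hdpos a).le) (hnonneg a b)
  have hPpos {a b} : 0 < P a b ↔ 0 < A a b := by
    rw [hPapp]; exact mul_pos_iff_of_pos_left (inv_pos.2 (hdpos a))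
  have hP21 (c y) (h : P (Sum.inr c) (Sum.inl y) ≠ 0) : y = i ∧ c = j :=
    hcut y c (by rw [← hsym.apply]; exact right_ne_zero_of_mul (hPapp _ _ ▸ h))
  have hreach (c) : ReflTransGen (fun a b => 0 < P.toBlocks₂₂ a b) c j := by
    obtain ⟨k, hk⟩ := hconn (Sum.inr c) (Sum.inl i)
    have hAP := ReflTransGen.mono (fun _ _ => hPpos.2) _ _
      (reflTransGen_of_pow_apply_pos hnonneg hk)
    exact hAP.inr_exit_of_inr_inl fun c y h => (hP21 c y h.ne').2
  have hdet : (1 - P.toBlocks₂₂).det ≠ 0 :=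
    det_one_sub_toBlocks₂₂_ne_zero hP0 hstoch fun c =>
      ⟨j, i, hreach c, hPpos.2 (by rw [← hsym.apply]; exact hedge)⟩
  rw [toBlocks₁₂_mul_inv_mul_toBlocks₂₁_eq_vecMulVec hstoch
    (fun c y hy => not_not.1 fun h => hy (hP21 c y h).1) (isUnit_iff_ne_zero.2 hdet)]
  subst hP hd
  exact inv_diagonal_mul_toBlocks₁₁_add_loop hcut fun a => (hdpos a).ne'
end

section
/- Let G be a tree with n vertices and no loops, with degree vector d and distance matrix Δ = (δ_{ij}) where δ_{ij} is the graph distance between vertices i and j. Then Kemeny's constant of the random walk on G equals dᵀΔd / (4(n-1)). -/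
open Matrix Polynomial

namespace KemenyAux

open SimpleGraph Finset

variable {V : Type*} {G : SimpleGraph V}

lemma length_eq_dist (ht : G.IsTree) {u v : V} (p : G.Walk u v) (hp : p.IsPath) :
    p.length = G.dist u v := by
  classical
  refine le_antisymm ?_ (SimpleGraph.dist_le p)
  obtain ⟨q, hq⟩ := SimpleGraph.Reachable.exists_walk_length_eq_dist ⟨p⟩
  have hb : q.bypass.IsPath := SimpleGraph.Walk.bypass_isPath q
  have hpq : p = q.bypass := ((ht.existsUnique_path u v).unique hp hb)
  rw [hpq]
  calc q.bypass.length ≤ q.length := SimpleGraph.Walk.length_bypass_le q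
  _ = G.dist u v := hq

lemma dist_adj_cases (ht : G.IsTree) {r j l : V} (h : G.Adj j l) :
    G.dist r l = G.dist r j + 1 ∨ G.dist r j = G.dist r l + 1 := by
  classical
  obtain ⟨q, hq, -⟩ := ht.existsUnique_path j r
  have hlen : q.length = G.dist j r := length_eq_dist ht q hq
  by_cases hl : l ∈ q.support
  · right
    have hs : (q.dropUntil l hl).length = G.dist l r :=
      length_eq_dist ht _ (hq.dropUntil hl)
    have htk : (q.takeUntil l hl).length = G.dist j l :=
      length_eq_dist ht _ (hq.takeUntil hl)
    have hadd : (q.takeUntil l hl).length + (q.dropUntil l hl).length = q.length := by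
      rw [← SimpleGraph.Walk.length_append, SimpleGraph.Walk.take_spec]
    have h1 : G.dist j l = 1 := SimpleGraph.dist_eq_one_iff_adj.2 h
    have c1 : G.dist r j = G.dist j r := SimpleGraph.dist_comm
    have c2 : G.dist r l = G.dist l r := SimpleGraph.dist_comm
    omega
  · left
    have hp : (SimpleGraph.Walk.cons h.symm q).IsPath := by
      rw [SimpleGraph.Walk.cons_isPath_iff]; exact ⟨hq, hl⟩
    have h2 := length_eq_dist ht _ hp
    rw [SimpleGraph.Walk.length_cons, hlen] at h2
    have c1 : G.dist r j = G.dist j r := SimpleGraph.dist_comm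
    have c2 : G.dist r l = G.dist l r := SimpleGraph.dist_comm
    omega

lemma unique_parent (ht : G.IsTree) {r j : V} (hne : j ≠ r) :
    ∃! l : V, G.Adj j l ∧ G.dist r j = G.dist r l + 1 := by
  classical
  obtain ⟨q, hq, -⟩ := ht.existsUnique_path j r
  cases q with
  | nil => exact absurd rfl hne
  | @cons _ b _ hadj q' =>
    rw [SimpleGraph.Walk.cons_isPath_iff] at hq
    have hq'len : q'.length = G.dist b r := length_eq_dist ht q' hq.1
    have hqlen : q'.length + 1 = G.dist j r := by
      have := length_eq_dist ht _ ((SimpleGraph.Walk.cons_isPath_iff hadj q').2 hq)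
      simpa using this
    refine ⟨b, ⟨hadj, ?_⟩, ?_⟩
    · have c1 : G.dist r j = G.dist j r := SimpleGraph.dist_comm
      have c2 : G.dist r b = G.dist b r := SimpleGraph.dist_comm
      omega
    · rintro l' ⟨hadj', hdist'⟩
      obtain ⟨p', hp', -⟩ := ht.existsUnique_path l' r
      have hp'len : p'.length = G.dist l' r := length_eq_dist ht p' hp'
      have hjp' : j ∉ p'.support := by
        intro hmem
        have h1 : G.dist j r ≤ (p'.dropUntil j hmem).length := SimpleGraph.dist_le _
        have h2 : (p'.dropUntil j hmem).length ≤ p'.length :=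
          SimpleGraph.Walk.length_dropUntil_le p' hmem
        have c1 : G.dist r j = G.dist j r := SimpleGraph.dist_comm
        have c2 : G.dist r l' = G.dist l' r := SimpleGraph.dist_comm
        omega
      have hcons : (SimpleGraph.Walk.cons hadj' p').IsPath :=
        (SimpleGraph.Walk.cons_isPath_iff hadj' p').2 ⟨hp', hjp'⟩
      have hcons' : (SimpleGraph.Walk.cons hadj q').IsPath :=
        (SimpleGraph.Walk.cons_isPath_iff hadj q').2 hq
      have heq : SimpleGraph.Walk.cons hadj' p' = SimpleGraph.Walk.cons hadj q' :=
        (ht.existsUnique_path j r).unique hcons hcons'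
      have := congrArg (fun w => SimpleGraph.Walk.getVert w 1) heq
      simpa [SimpleGraph.Walk.getVert_cons_succ] using this


section Sums

variable [Fintype V] [DecidableEq V] [DecidableRel G.Adj]

set_option linter.unusedSectionVars false

lemma sum_parent (ht : G.IsTree) {r j : V} (hne : j ≠ r) :
    ∑ l ∈ G.neighborFinset j, ((G.dist r j : ℝ) - G.dist r l)
      = 2 - G.degree j := by
  classical
  obtain ⟨b, ⟨hb, hbd⟩, hbu⟩ := unique_parent ht hne
  have hbmem : b ∈ G.neighborFinset j := by simpa using hb
  have hterm : ∀ l ∈ G.neighborFinset j,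
      ((G.dist r j : ℝ) - G.dist r l) = if l = b then 1 else -1 := by
    intro l hl
    have hadj : G.Adj j l := by simpa using hl
    by_cases hlb : l = b
    · subst hlb
      rw [if_pos rfl, hbd]
      push_cast; ring
    · rw [if_neg hlb]
      rcases dist_adj_cases ht (r := r) hadj with hc | hc
      · rw [hc]; push_cast; ring
      · exact absurd (hbu l ⟨hadj, hc⟩) hlb
  rw [Finset.sum_congr rfl hterm]
  have : ∀ l : V, (if l = b then (1:ℝ) else -1) = (if l = b then (2:ℝ) else 0) - 1 := by
    intro l; split <;> norm_num
  simp_rw [this]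
  rw [Finset.sum_sub_distrib, Finset.sum_ite_eq' _ b (fun _ => (2:ℝ)), if_pos hbmem,
    Finset.sum_const, SimpleGraph.card_neighborFinset_eq_degree]
  simp

lemma sum_self_dist (j : V) :
    ∑ l ∈ G.neighborFinset j, ((G.dist j l : ℝ)) = G.degree j := by
  have hterm : ∀ l ∈ G.neighborFinset j, ((G.dist j l : ℝ)) = 1 := by
    intro l hl
    have hadj : G.Adj j l := by simpa using hl
    rw [SimpleGraph.dist_eq_one_iff_adj.2 hadj]; norm_num
  rw [Finset.sum_congr rfl hterm, Finset.sum_const, SimpleGraph.card_neighborFinset_eq_degree]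
  simp

lemma lap_F (ht : G.IsTree) {i j k : V} (hj : j ≠ i) (hk : k ≠ i) :
    ∑ l, G.lapMatrix ℝ j l * (((G.dist i l : ℝ) + G.dist i k - G.dist l k) / 2)
      = if j = k then 1 else 0 := by
  classical
  have hlap : ∀ l, G.lapMatrix ℝ j l
      = (if j = l then (G.degree j : ℝ) else 0) - (if G.Adj j l then 1 else 0) := by
    intro l
    simp [SimpleGraph.lapMatrix, SimpleGraph.degMatrix, Matrix.diagonal_apply,
      SimpleGraph.adjMatrix_apply, Matrix.sub_apply]
  have e1 : ∀ l, G.lapMatrix ℝ j l * (((G.dist i l : ℝ) + G.dist i k - G.dist l k) / 2)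
      = (if j = l then (G.degree j : ℝ) * (((G.dist i l : ℝ) + G.dist i k - G.dist l k) / 2) else 0)
        - (if G.Adj j l then (((G.dist i l : ℝ) + G.dist i k - G.dist l k) / 2) else 0) := by
    intro l; rw [hlap]; split_ifs <;> ring
  rw [Finset.sum_congr rfl (fun l _ => e1 l), Finset.sum_sub_distrib,
    Finset.sum_ite_eq _ j
      (fun l => (G.degree j : ℝ) * (((G.dist i l : ℝ) + G.dist i k - G.dist l k) / 2)),
    if_pos (Finset.mem_univ j)]
  rw [show (∑ l, if G.Adj j l then (((G.dist i l : ℝ) + G.dist i k - G.dist l k) / 2) else 0)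
      = ∑ l ∈ G.neighborFinset j, (((G.dist i l : ℝ) + G.dist i k - G.dist l k) / 2) from by
    rw [SimpleGraph.neighborFinset_eq_filter, Finset.sum_filter]]
  have hcard : ((G.degree j : ℝ)) * (((G.dist i j : ℝ) + G.dist i k - G.dist j k) / 2)
      = ∑ _l ∈ G.neighborFinset j, (((G.dist i j : ℝ) + G.dist i k - G.dist j k) / 2) := by
    rw [Finset.sum_const, SimpleGraph.card_neighborFinset_eq_degree, nsmul_eq_mul]
  rw [hcard, ← Finset.sum_sub_distrib]
  have hsplit : ∑ l ∈ G.neighborFinset j,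
        ((((G.dist i j : ℝ) + G.dist i k - G.dist j k) / 2)
          - (((G.dist i l : ℝ) + G.dist i k - G.dist l k) / 2))
      = (∑ l ∈ G.neighborFinset j, ((G.dist i j : ℝ) - G.dist i l)
        + ∑ l ∈ G.neighborFinset j, ((G.dist l k : ℝ) - G.dist j k)) / 2 := by
    rw [← Finset.sum_add_distrib, Finset.sum_div]
    exact Finset.sum_congr rfl fun l _ => by ring
  rw [hsplit]
  have hA : ∑ l ∈ G.neighborFinset j, ((G.dist i j : ℝ) - G.dist i l)
      = 2 - G.degree j := sum_parent ht hj
  by_cases hjk : j = k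
  · subst hjk
    have hB : ∑ l ∈ G.neighborFinset j, ((G.dist l j : ℝ) - G.dist j j)
        = G.degree j := by
      have hcg : ∀ l ∈ G.neighborFinset j, ((G.dist l j : ℝ) - G.dist j j)
          = (G.dist j l : ℝ) := by
        intro l hl
        have c1 : G.dist l j = G.dist j l := SimpleGraph.dist_comm
        rw [c1, SimpleGraph.dist_self]
        push_cast; ring
      rw [Finset.sum_congr rfl hcg, sum_self_dist]
    rw [if_pos rfl, hA, hB]
    ring
  · have hB : ∑ l ∈ G.neighborFinset j, ((G.dist l k : ℝ) - G.dist j k)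
        = -(2 - G.degree j) := by
      have h2 : ∑ l ∈ G.neighborFinset j, ((G.dist k j : ℝ) - G.dist k l)
          = 2 - G.degree j := sum_parent ht hjk
      rw [← neg_eq_iff_eq_neg, ← Finset.sum_neg_distrib, ← h2]
      refine Finset.sum_congr rfl fun l hl => ?_
      have c1 : G.dist l k = G.dist k l := SimpleGraph.dist_comm
      have c2 : G.dist j k = G.dist k j := SimpleGraph.dist_comm
      rw [c1, c2]; ring
    rw [if_neg hjk, hA, hB]
    ring

/-- candidate inverse of the Laplacian with row `i` replaced by `eᵢ`. -/
noncomputable def Wm (G : SimpleGraph V) (i : V) : Matrix V V ℝ :=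
  Matrix.of fun l k => if k = i then 1
    else ((G.dist i l : ℝ) + G.dist i k - G.dist l k) / 2

lemma B_mul_W (ht : G.IsTree) (i : V) :
    (G.lapMatrix ℝ).updateRow i (Pi.single i 1) * Wm G i = 1 := by
  classical
  ext j k
  rw [Matrix.mul_apply, Matrix.one_apply]
  by_cases hj : j = i
  · subst hj
    have hrow : ∀ l, (G.lapMatrix ℝ).updateRow j (Pi.single j 1) j l
        = if l = j then 1 else 0 := by
      intro l
      rw [Matrix.updateRow_self, Pi.single_apply]
    simp_rw [hrow, ite_mul, one_mul, zero_mul]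
    rw [Finset.sum_ite_eq' _ j (fun l => Wm G j l k), if_pos (Finset.mem_univ j)]
    by_cases hk : k = j
    · rw [if_pos (hk ▸ rfl : j = k)]
      simp only [Wm, Matrix.of_apply, if_pos hk]
    · rw [if_neg (fun h => hk h.symm)]
      simp only [Wm, Matrix.of_apply, if_neg hk]
      rw [SimpleGraph.dist_self]
      norm_num
  · have hrow : ∀ l, (G.lapMatrix ℝ).updateRow i (Pi.single i 1) j l
        = G.lapMatrix ℝ j l := fun l => by rw [Matrix.updateRow_ne hj]
    simp_rw [hrow]
    by_cases hk : k = i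
    · have hW : ∀ l, Wm G i l k = 1 := fun l => by
        simp only [Wm, Matrix.of_apply, if_pos hk]
      simp_rw [hW, mul_one]
      have hmv := congrFun (SimpleGraph.lapMatrix_mulVec_const_eq_zero (R := ℝ) G) j
      simp only [Matrix.mulVec, dotProduct, mul_one, Pi.zero_apply] at hmv
      rw [hmv, if_neg (fun h => hj (h.trans hk))]
    · have hW : ∀ l, Wm G i l k
          = ((G.dist i l : ℝ) + G.dist i k - G.dist l k) / 2 := fun l => by
        simp only [Wm, Matrix.of_apply, if_neg hk]
      simp_rw [hW]
      rw [lap_F ht hj hk]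

end Sums

section Det

variable {m : Type*} [Fintype m] [DecidableEq m] {S : Type*} [CommRing S]

lemma det_rows_add (s : Finset m) (A B : Matrix m m S) :
    Matrix.det (Matrix.of fun a b => if a ∈ s then A a b + B a b else A a b)
      = ∑ t ∈ s.powerset,
          Matrix.det (Matrix.of fun a b => if a ∈ t then B a b else A a b) := by
  classical
  induction s using Finset.induction_on generalizing A with
  | empty => simp
  | @insert i s' hi ih =>
    have h1 : (Matrix.of fun a b => if a ∈ insert i s' then A a b + B a b else A a b)
        = Matrix.updateRow (Matrix.of fun a b => if a ∈ s' then A a b + B a b else A a b) i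
            ((fun b => A i b) + (fun b => B i b)) := by
      ext a b
      rw [Matrix.updateRow_apply]
      by_cases hai : a = i
      · subst hai; simp
      · simp [hai, Finset.mem_insert]
    rw [h1, Matrix.det_updateRow_add]
    have hMi : Matrix.updateRow
          (Matrix.of fun a b => if a ∈ s' then A a b + B a b else A a b) i (fun b => A i b)
        = Matrix.of fun a b => if a ∈ s' then A a b + B a b else A a b := by
      ext a b
      rw [Matrix.updateRow_apply]
      by_cases hai : a = i
      · subst hai; simp [hi]
      · simp [hai]
    have hsec : Matrix.updateRow
          (Matrix.of fun a b => if a ∈ s' then A a b + B a b else A a b) i (fun b => B i b)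
        = Matrix.of fun a b => if a ∈ s' then (A.updateRow i (B i)) a b + B a b
            else (A.updateRow i (B i)) a b := by
      ext a b
      rw [Matrix.updateRow_apply]
      by_cases hai : a = i
      · subst hai; simp [hi]
      · simp [hai, Matrix.updateRow_ne hai]
    rw [hMi, hsec, ih A, ih (A.updateRow i (B i))]
    have hcg : ∀ t ∈ s'.powerset,
        Matrix.det (Matrix.of fun a b => if a ∈ t then B a b else (A.updateRow i (B i)) a b)
          = Matrix.det (Matrix.of fun a b => if a ∈ insert i t then B a b else A a b) := by
      intro t htm
      have hit : i ∉ t := fun h => hi (Finset.mem_powerset.1 htm h)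
      congr 1
      ext a b
      by_cases hai : a = i
      · subst hai; simp [hit]
      · simp [hai, Matrix.updateRow_ne hai, Finset.mem_insert]
    rw [Finset.sum_congr rfl hcg, Finset.sum_powerset_insert hi]

lemma det_rows_mul (t : Finset m) (c : m → S) (E A : Matrix m m S) :
    Matrix.det (Matrix.of fun a b => if a ∈ t then c a * E a b else A a b)
      = (∏ a ∈ t, c a) *
          Matrix.det (Matrix.of fun a b => if a ∈ t then E a b else A a b) := by
  classical
  induction t using Finset.induction_on generalizing A with
  | empty => simp
  | @insert i t' hi ih =>
    have h1 : (Matrix.of fun a b => if a ∈ insert i t' then c a * E a b else A a b)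
        = Matrix.updateRow (Matrix.of fun a b => if a ∈ t' then c a * E a b else A a b) i
            (c i • (fun b => E i b)) := by
      ext a b
      rw [Matrix.updateRow_apply]
      by_cases hai : a = i
      · subst hai; simp
      · simp [hai, Finset.mem_insert]
    rw [h1, Matrix.det_updateRow_smul]
    have hsec : Matrix.updateRow
          (Matrix.of fun a b => if a ∈ t' then c a * E a b else A a b) i (fun b => E i b)
        = Matrix.of fun a b => if a ∈ t' then c a * E a b else (A.updateRow i (E i)) a b := by
      ext a b
      rw [Matrix.updateRow_apply]
      by_cases hai : a = i
      · subst hai; simp [hi]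
      · simp [hai, Matrix.updateRow_ne hai]
    rw [hsec, ih (A.updateRow i (E i))]
    have hcg : Matrix.det (Matrix.of fun a b => if a ∈ t' then E a b else (A.updateRow i (E i)) a b)
        = Matrix.det (Matrix.of fun a b => if a ∈ insert i t' then E a b else A a b) := by
      congr 1
      ext a b
      by_cases hai : a = i
      · subst hai; simp [hi]
      · simp [hai, Matrix.updateRow_ne hai, Finset.mem_insert]
    rw [hcg, Finset.prod_insert hi, mul_assoc]

lemma det_poly_expand (L₀ : Matrix m m ℝ) (w : m → ℝ) :
    Matrix.det (L₀.map Polynomial.C + (X : ℝ[X]) • (Matrix.diagonal w).map Polynomial.C)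
      = ∑ t ∈ (Finset.univ : Finset m).powerset,
          X ^ t.card * Polynomial.C ((∏ a ∈ t, w a) *
            Matrix.det (Matrix.of fun a b =>
              if a ∈ t then (1 : Matrix m m ℝ) a b else L₀ a b)) := by
  classical
  have h0 : (L₀.map Polynomial.C + (X : ℝ[X]) • (Matrix.diagonal w).map Polynomial.C)
      = Matrix.of fun a b => if a ∈ (Finset.univ : Finset m) then
          (L₀.map Polynomial.C) a b + ((X : ℝ[X]) • (Matrix.diagonal w).map Polynomial.C) a b
        else (L₀.map Polynomial.C) a b := by
    ext a b; simp
  rw [h0, det_rows_add]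
  refine Finset.sum_congr rfl fun t _ => ?_
  have h1 : (Matrix.of fun a b => if a ∈ t then
        ((X : ℝ[X]) • (Matrix.diagonal w).map Polynomial.C) a b else (L₀.map Polynomial.C) a b)
      = Matrix.of fun a b => if a ∈ t then
          (X * Polynomial.C (w a)) * (1 : Matrix m m ℝ[X]) a b else (L₀.map Polynomial.C) a b := by
    ext a b
    by_cases hab : a ∈ t
    · simp only [Matrix.of_apply, if_pos hab, Matrix.smul_apply, Matrix.map_apply,
        Matrix.diagonal_apply, Matrix.one_apply, smul_eq_mul]
      by_cases h : a = b
      · simp [h]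
      · simp [h]
    · simp [hab]
  rw [h1, det_rows_mul t (fun a => X * Polynomial.C (w a)) (1 : Matrix m m ℝ[X])
    (L₀.map Polynomial.C)]
  have h2 : (∏ a ∈ t, (X * Polynomial.C (w a)))
      = X ^ t.card * Polynomial.C (∏ a ∈ t, w a) := by
    rw [Finset.prod_mul_distrib, Finset.prod_const, map_prod]
  have h3 : Matrix.det (Matrix.of fun a b =>
        if a ∈ t then (1 : Matrix m m ℝ[X]) a b else (L₀.map Polynomial.C) a b)
      = Polynomial.C (Matrix.det (Matrix.of fun a b =>
          if a ∈ t then (1 : Matrix m m ℝ) a b else L₀ a b)) := by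
    rw [RingHom.map_det]
    congr 1
    ext a b
    by_cases hab : a ∈ t
    · simp [hab, Matrix.one_apply, apply_ite]
    · simp [hab]
  rw [h2, h3, mul_assoc, ← Polynomial.C_mul]

lemma coeff_det_poly (L₀ : Matrix m m ℝ) (w : m → ℝ) (k : ℕ) :
    (Matrix.det (L₀.map Polynomial.C
        + (X : ℝ[X]) • (Matrix.diagonal w).map Polynomial.C)).coeff k
      = ∑ t ∈ Finset.powersetCard k (Finset.univ : Finset m),
          (∏ a ∈ t, w a) * Matrix.det (Matrix.of fun a b =>
            if a ∈ t then (1 : Matrix m m ℝ) a b else L₀ a b) := by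
  classical
  rw [det_poly_expand, Polynomial.finset_sum_coeff]
  have h1 : ∀ t : Finset m,
      (X ^ t.card * Polynomial.C ((∏ a ∈ t, w a) * Matrix.det (Matrix.of fun a b =>
          if a ∈ t then (1 : Matrix m m ℝ) a b else L₀ a b))).coeff k
      = if t.card = k then (∏ a ∈ t, w a) * Matrix.det (Matrix.of fun a b =>
          if a ∈ t then (1 : Matrix m m ℝ) a b else L₀ a b) else 0 := by
    intro t
    rw [mul_comm, Polynomial.coeff_C_mul, Polynomial.coeff_X_pow]
    by_cases h : t.card = k
    · simp [h]
    · rw [if_neg h, if_neg (fun hh : k = t.card => h hh.symm), mul_zero]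
  rw [Finset.sum_congr rfl fun t _ => h1 t, ← Finset.sum_filter, ← Finset.powersetCard_eq_filter]

end Det

section Adj

variable [Fintype V] [DecidableEq V] [DecidableRel G.Adj]

lemma adjugate_lap_const (ht : G.IsTree) (a b a' b' : V) :
    (G.lapMatrix ℝ).adjugate a b = (G.lapMatrix ℝ).adjugate a' b' := by
  classical
  have hnV : Nonempty V := ht.isConnected.nonempty
  have hdet : (G.lapMatrix ℝ).det = 0 := by
    refine Matrix.exists_mulVec_eq_zero_iff.mp ⟨fun _ => 1, ?_, ?_⟩
    · intro h
      exact one_ne_zero (congrFun h (Classical.arbitrary V))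
    · exact SimpleGraph.lapMatrix_mulVec_const_eq_zero G
  have hcol : ∀ x y z : V, (G.lapMatrix ℝ).adjugate x z = (G.lapMatrix ℝ).adjugate y z := by
    intro x y z
    have hmv : G.lapMatrix ℝ *ᵥ (fun r => (G.lapMatrix ℝ).adjugate r z) = 0 := by
      ext r
      have h1 := congrFun (congrFun (Matrix.mul_adjugate (G.lapMatrix ℝ)) r) z
      rw [hdet, zero_smul] at h1
      rw [Matrix.mul_apply] at h1
      simpa [Matrix.mulVec, dotProduct] using h1
    have hker := (SimpleGraph.lapMatrix_mulVec_eq_zero_iff_forall_reachable (G := G)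
      (x := fun r => (G.lapMatrix ℝ).adjugate r z)).mp
      hmv
    exact hker x y (ht.isConnected.preconnected x y)
  have hsym : ∀ x y : V, (G.lapMatrix ℝ).adjugate x y = (G.lapMatrix ℝ).adjugate y x := by
    intro x y
    have hLsym : (G.lapMatrix ℝ)ᵀ = G.lapMatrix ℝ := G.isSymm_lapMatrix ℝ
    calc (G.lapMatrix ℝ).adjugate x y = ((G.lapMatrix ℝ).adjugate)ᵀ y x := rfl
    _ = ((G.lapMatrix ℝ)ᵀ).adjugate y x := by rw [Matrix.adjugate_transpose]
    _ = (G.lapMatrix ℝ).adjugate y x := by rw [hLsym]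
  calc (G.lapMatrix ℝ).adjugate a b = (G.lapMatrix ℝ).adjugate a' b := hcol a a' b
  _ = (G.lapMatrix ℝ).adjugate b a' := hsym a' b
  _ = (G.lapMatrix ℝ).adjugate b' a' := hcol b b' a'
  _ = (G.lapMatrix ℝ).adjugate a' b' := hsym b' a'

lemma det_single_eq (i : V) :
    Matrix.det (Matrix.of fun a b => if a ∈ ({i} : Finset V) then (1 : Matrix V V ℝ) a b
        else G.lapMatrix ℝ a b) = (G.lapMatrix ℝ).adjugate i i := by
  rw [Matrix.adjugate_apply]
  congr 1
  ext a b
  by_cases hai : a = i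
  · subst hai
    rw [Matrix.updateRow_self]
    by_cases hb : b = a
    · simp [hb, Matrix.one_apply, Pi.single_apply]
    · simp [Matrix.one_apply, Pi.single_apply, hb, Ne.symm hb]
  · simp [hai, Matrix.updateRow_ne hai]

lemma det_pair_eq {i j : V} (hj : j ≠ i) :
    Matrix.det (Matrix.of fun a b => if a ∈ ({i, j} : Finset V) then (1 : Matrix V V ℝ) a b
        else G.lapMatrix ℝ a b)
      = (((G.lapMatrix ℝ).updateRow i (Pi.single i 1)).updateRow j (Pi.single j 1)).det := by
  congr 1
  ext a b
  by_cases haj : a = j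
  · subst haj
    rw [Matrix.updateRow_self]
    by_cases hb : b = a
    · simp [hb, Matrix.one_apply, Pi.single_apply]
    · simp [Matrix.one_apply, Pi.single_apply, hb, Ne.symm hb]
  · rw [Matrix.updateRow_ne haj]
    by_cases hai : a = i
    · subst hai
      rw [Matrix.updateRow_self]
      by_cases hb : b = a
      · simp [hb, Matrix.one_apply, Pi.single_apply]
      · simp [Matrix.one_apply, Pi.single_apply, hb, Ne.symm hb]
    · rw [Matrix.updateRow_ne hai]
      simp [Finset.mem_insert, hai, haj]

lemma det_B_unit (ht : G.IsTree) (i : V) :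
    IsUnit ((G.lapMatrix ℝ).updateRow i (Pi.single i 1)).det := by
  have h := congrArg Matrix.det (B_mul_W ht i)
  rw [Matrix.det_mul, Matrix.det_one] at h
  exact IsUnit.of_mul_eq_one _ h

lemma adjugate_B (ht : G.IsTree) {i j : V} (hj : j ≠ i) :
    (((G.lapMatrix ℝ).updateRow i (Pi.single i 1)).updateRow j (Pi.single j 1)).det
      = ((G.lapMatrix ℝ).updateRow i (Pi.single i 1)).det * (G.dist i j : ℝ) := by
  set B := (G.lapMatrix ℝ).updateRow i (Pi.single i 1) with hB
  have hdetu : IsUnit B.det := det_B_unit ht i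
  have hWinv : B⁻¹ = Wm G i := Matrix.inv_eq_right_inv (B_mul_W ht i)
  have hadj : B.adjugate = B.det • B⁻¹ := by
    rw [Matrix.nonsing_inv_apply _ hdetu, smul_smul]
    rw [hdetu.mul_val_inv, one_smul]
  have h1 : (B.updateRow j (Pi.single j 1)).det = B.adjugate j j :=
    (Matrix.adjugate_apply B j j).symm
  rw [h1, hadj, hWinv]
  have hW : Wm G i j j = (G.dist i j : ℝ) := by
    simp only [Wm, Matrix.of_apply, if_neg hj]
    rw [SimpleGraph.dist_self]
    push_cast
    ring
  rw [Matrix.smul_apply, hW, smul_eq_mul]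

end Adj

section Coeffs

variable [Fintype V] [DecidableEq V] [DecidableRel G.Adj]

lemma det_lap_zero (ht : G.IsTree) : (G.lapMatrix ℝ).det = 0 := by
  have hnV : Nonempty V := ht.isConnected.nonempty
  refine Matrix.exists_mulVec_eq_zero_iff.mp ⟨fun _ => 1, ?_, ?_⟩
  · intro h
    exact one_ne_zero (congrFun h (Classical.arbitrary V))
  · exact SimpleGraph.lapMatrix_mulVec_const_eq_zero G

lemma coeff0_eq (ht : G.IsTree) :
    (Matrix.det ((G.lapMatrix ℝ).map Polynomial.C + (X : ℝ[X]) •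
        (Matrix.diagonal (fun v => (G.degree v : ℝ))).map Polynomial.C)).coeff 0 = 0 := by
  rw [coeff_det_poly, Finset.powersetCard_zero, Finset.sum_singleton]
  have h1 : (Matrix.of fun a b => if a ∈ (∅ : Finset V) then (1 : Matrix V V ℝ) a b
      else G.lapMatrix ℝ a b) = G.lapMatrix ℝ := by
    ext a b; simp
  rw [h1, det_lap_zero ht]
  simp

lemma coeff1_eq (ht : G.IsTree) (v₀ : V) :
    (Matrix.det ((G.lapMatrix ℝ).map Polynomial.C + (X : ℝ[X]) •
        (Matrix.diagonal (fun v => (G.degree v : ℝ))).map Polynomial.C)).coeff 1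
      = (∑ v, (G.degree v : ℝ)) * (G.lapMatrix ℝ).adjugate v₀ v₀ := by
  rw [coeff_det_poly, Finset.powersetCard_one, Finset.sum_map]
  have h1 : ∀ i : V, (∏ a ∈ ({i} : Finset V), ((G.degree a : ℝ))) *
      Matrix.det (Matrix.of fun a b => if a ∈ ({i} : Finset V) then (1 : Matrix V V ℝ) a b
        else G.lapMatrix ℝ a b)
      = (G.degree i : ℝ) * (G.lapMatrix ℝ).adjugate v₀ v₀ := by
    intro i
    rw [Finset.prod_singleton, det_single_eq, adjugate_lap_const ht i i v₀ v₀]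
  calc ∑ i, (∏ a ∈ ({i} : Finset V), ((G.degree a : ℝ))) *
      Matrix.det (Matrix.of fun a b => if a ∈ ({i} : Finset V) then (1 : Matrix V V ℝ) a b
        else G.lapMatrix ℝ a b)
      = ∑ i, (G.degree i : ℝ) * (G.lapMatrix ℝ).adjugate v₀ v₀ :=
        Finset.sum_congr rfl fun i _ => h1 i
  _ = (∑ v, (G.degree v : ℝ)) * (G.lapMatrix ℝ).adjugate v₀ v₀ := by
        rw [Finset.sum_mul]

lemma coeff2_eq (ht : G.IsTree) (v₀ : V) :
    2 * (Matrix.det ((G.lapMatrix ℝ).map Polynomial.C + (X : ℝ[X]) •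
        (Matrix.diagonal (fun v => (G.degree v : ℝ))).map Polynomial.C)).coeff 2
      = (∑ i, ∑ j, (G.degree i : ℝ) * (G.dist i j : ℝ) * (G.degree j : ℝ))
          * (G.lapMatrix ℝ).adjugate v₀ v₀ := by
  classical
  rw [coeff_det_poly]
  set c := (G.lapMatrix ℝ).adjugate v₀ v₀ with hc
  -- value of each pair term
  have hval : ∀ i j : V, i ≠ j →
      (∏ a ∈ ({i, j} : Finset V), ((G.degree a : ℝ))) *
        Matrix.det (Matrix.of fun a b => if a ∈ ({i, j} : Finset V) then (1 : Matrix V V ℝ) a b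
          else G.lapMatrix ℝ a b)
      = (G.degree i : ℝ) * (G.dist i j : ℝ) * (G.degree j : ℝ) * c := by
    intro i j hij
    rw [Finset.prod_pair hij, det_pair_eq (Ne.symm hij), adjugate_B ht (Ne.symm hij)]
    have hdetB : ((G.lapMatrix ℝ).updateRow i (Pi.single i 1)).det = c := by
      rw [← Matrix.adjugate_apply, hc]
      exact adjugate_lap_const ht i i v₀ v₀
    rw [hdetB]
    ring
  -- identify the index set as an image of ordered pairs
  have himg : (Finset.univ.offDiag.image fun p : V × V => ({p.1, p.2} : Finset V))
      = Finset.powersetCard 2 (Finset.univ : Finset V) := by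
    ext t
    simp only [Finset.mem_image, Finset.mem_powersetCard_univ]
    constructor
    · rintro ⟨⟨a, b⟩, hab, rfl⟩
      exact Finset.card_pair (Finset.mem_offDiag.1 hab).2.2
    · intro hcard
      obtain ⟨a, b, hne, rfl⟩ := Finset.card_eq_two.1 hcard
      exact ⟨(a, b), Finset.mem_offDiag.2 ⟨Finset.mem_univ _, Finset.mem_univ _, hne⟩, rfl⟩
  rw [← himg]
  have hfib : ∀ p : V × V, p ∈ Finset.univ.offDiag →
      (fun t => (∏ a ∈ t, ((G.degree a : ℝ))) *
        Matrix.det (Matrix.of fun a b => if a ∈ t then (1 : Matrix V V ℝ) a b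
          else G.lapMatrix ℝ a b)) (({p.1, p.2} : Finset V))
      = ∑ q ∈ Finset.univ.offDiag.filter
            (fun q : V × V => ({q.1, q.2} : Finset V) = ({p.1, p.2} : Finset V)),
          ((G.degree q.1 : ℝ) * (G.dist q.1 q.2 : ℝ) * (G.degree q.2 : ℝ) * c) / 2 := by
    rintro ⟨i, j⟩ hp
    have hij : i ≠ j := (Finset.mem_offDiag.1 hp).2.2
    have hfilter : Finset.univ.offDiag.filter
          (fun q : V × V => ({q.1, q.2} : Finset V) = ({i, j} : Finset V))
        = {(i, j), (j, i)} := by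
      ext ⟨a, b⟩
      simp only [Finset.mem_filter, Finset.mem_offDiag, Finset.mem_insert,
        Finset.mem_singleton, Prod.mk.injEq, Finset.mem_univ, true_and]
      constructor
      · rintro ⟨hab, hset⟩
        have ha : a ∈ ({i, j} : Finset V) := by rw [← hset]; simp
        have hb : b ∈ ({i, j} : Finset V) := by rw [← hset]; simp
        simp only [Finset.mem_insert, Finset.mem_singleton] at ha hb
        rcases ha with ha | ha <;> rcases hb with hb | hb
        · exact absurd (ha.trans hb.symm) hab
        · exact Or.inl ⟨ha, hb⟩
        · exact Or.inr ⟨ha, hb⟩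
        · exact absurd (ha.trans hb.symm) hab
      · rintro (⟨rfl, rfl⟩ | ⟨rfl, rfl⟩)
        · exact ⟨hij, rfl⟩
        · exact ⟨Ne.symm hij, Finset.pair_comm a b⟩
    dsimp only
    rw [hfilter, Finset.sum_pair (by simp [hij] : ((i, j) : V × V) ≠ (j, i))]
    dsimp only
    rw [hval i j hij]
    have hcd : G.dist j i = G.dist i j := SimpleGraph.dist_comm
    rw [hcd]
    ring
  rw [Finset.sum_image' _ hfib]
  have hoff : Finset.univ.offDiag
      = (Finset.univ ×ˢ Finset.univ : Finset (V × V)).filter (fun p => p.1 ≠ p.2) := by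
    ext p
    simp [Finset.mem_offDiag, Finset.mem_filter, Finset.mem_product]
  rw [hoff]
  have hzero : ∑ p ∈ (Finset.univ ×ˢ Finset.univ : Finset (V × V)).filter
        (fun p => ¬ p.1 ≠ p.2),
      ((G.degree p.1 : ℝ) * (G.dist p.1 p.2 : ℝ) * (G.degree p.2 : ℝ) * c) / 2 = 0 := by
    refine Finset.sum_eq_zero ?_
    rintro ⟨a, b⟩ hp
    simp only [Finset.mem_filter, not_not] at hp
    have hab : a = b := hp.2
    subst hab
    rw [SimpleGraph.dist_self]
    simp
  have hfull := Finset.sum_filter_add_sum_filter_not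
    (Finset.univ ×ˢ Finset.univ : Finset (V × V)) (fun p => p.1 ≠ p.2)
    (fun p => ((G.degree p.1 : ℝ) * (G.dist p.1 p.2 : ℝ) * (G.degree p.2 : ℝ) * c) / 2)
  rw [hzero, add_zero] at hfull
  rw [hfull, Finset.sum_product, Finset.sum_mul, Finset.mul_sum]
  refine Finset.sum_congr rfl fun i _ => ?_
  rw [Finset.mul_sum, Finset.sum_mul]
  refine Finset.sum_congr rfl fun j _ => ?_
  ring

end Coeffs

section Poly

noncomputable def Qp (s : Multiset ℂ) : ℂ[X] := (s.map (fun a => X - Polynomial.C a)).prod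

lemma Qp_cons (a : ℂ) (s : Multiset ℂ) :
    Qp (a ::ₘ s) = (X - Polynomial.C a) * Qp s := by
  simp [Qp]

lemma Qp_sum (s : Multiset ℂ) (h : ∀ a ∈ s, a ≠ 1) :
    (s.map (fun a => (1 - a)⁻¹)).sum * (Qp s).eval 1 = (derivative (Qp s)).eval 1 := by
  induction s using Multiset.induction_on with
  | empty => simp [Qp]
  | cons a s ih =>
    have ha : a ≠ 1 := h a (Multiset.mem_cons_self a s)
    have hs : ∀ b ∈ s, b ≠ 1 := fun b hb => h b (Multiset.mem_cons_of_mem hb)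
    have h1a : (1 : ℂ) - a ≠ 0 := sub_ne_zero.2 (Ne.symm ha)
    have hinv : (1 - a)⁻¹ * (1 - a) = 1 := inv_mul_cancel₀ h1a
    have ihs := ih hs
    rw [Qp_cons]
    simp only [Multiset.map_cons, Multiset.sum_cons, derivative_mul, derivative_sub,
      derivative_X, derivative_C, sub_zero, eval_add, eval_mul, eval_sub, eval_X, eval_C,
      eval_one, one_mul]
    linear_combination ((Qp s).eval 1) * hinv + (1 - a) * ihs

lemma kemeny_roots (p : ℂ[X]) (hm : p.Monic) (h0 : p.eval 1 = 0)
    (h1 : (derivative p).eval 1 ≠ 0) :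
    ((p.roots.filter (· ≠ 1)).map (fun μ => (1 - μ)⁻¹)).sum
      = (derivative (derivative p)).eval 1 / (2 * (derivative p).eval 1) := by
  classical
  have hprod : p = Qp p.roots :=
    (IsAlgClosed.splits p).eq_prod_roots_of_monic hm
  set m := p.roots.count 1 with hmdef
  set s₀ := p.roots.filter (· ≠ 1) with hs₀
  have hsplit0 : p.roots.filter (fun a => a = 1) + p.roots.filter (fun a => ¬ a = 1)
      = p.roots := Multiset.filter_add_not _ _
  have hrepl : p.roots.filter (fun a => a = 1) = Multiset.replicate m 1 :=
    Multiset.filter_eq' _ _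
  have hfc : p.roots.filter (fun a => ¬ a = 1) = s₀ :=
    Multiset.filter_congr (fun x _ => Iff.rfl)
  have hdecomp : p.roots = Multiset.replicate m 1 + s₀ := by
    rw [← hsplit0, hrepl, hfc]
  have hQadd : Qp (Multiset.replicate m 1 + s₀)
      = (X - Polynomial.C 1) ^ m * Qp s₀ := by
    rw [Qp, Multiset.map_add, Multiset.prod_add, Multiset.map_replicate,
      Multiset.prod_replicate]
    rfl
  have hp2 : p = (X - Polynomial.C 1) ^ m * Qp s₀ := by
    rw [hprod, hdecomp, hQadd]
  have hs₀ne : ∀ a ∈ s₀, a ≠ 1 := fun a ha => (Multiset.mem_filter.1 ha).2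
  have hmem1 : (1 : ℂ) ∈ p.roots := mem_roots'.2 ⟨hm.ne_zero, h0⟩
  have hm_pos : 1 ≤ m := Multiset.count_pos.2 hmem1
  have hm1 : m = 1 := by
    by_contra hne
    have h2m : 2 ≤ m := by omega
    apply h1
    rw [hp2, derivative_mul, derivative_pow]
    simp only [derivative_sub, derivative_X, derivative_C, sub_zero, mul_one,
      eval_add, eval_mul, eval_pow, eval_sub, eval_X, eval_C, eval_natCast, sub_self]
    rw [zero_pow (by omega : m - 1 ≠ 0), zero_pow (by omega : m ≠ 0)]
    ring
  have hp3 : p = (X - Polynomial.C 1) * Qp s₀ := by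
    rw [hp2, hm1, pow_one]
  have hq1 : (derivative p).eval 1 = (Qp s₀).eval 1 := by
    rw [hp3, derivative_mul]
    simp [derivative_sub, derivative_X, derivative_C]
  have hq2 : (derivative (derivative p)).eval 1 = 2 * (derivative (Qp s₀)).eval 1 := by
    rw [hp3]
    simp only [derivative_mul, derivative_add, derivative_sub, derivative_X, derivative_C,
      sub_zero, one_mul, derivative_one, eval_add, eval_mul, eval_sub, eval_X, eval_C,
      sub_self, zero_mul, mul_zero, add_zero, zero_add, eval_zero]
    ring
  have hsum := Qp_sum s₀ hs₀ne
  have hq1ne : (Qp s₀).eval 1 ≠ 0 := by rw [← hq1]; exact h1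
  rw [eq_div_iff (mul_ne_zero two_ne_zero h1)]
  rw [hq2, hq1]
  linear_combination 2 * hsum

end Poly

end KemenyAux

open Matrix Polynomial

/-- for a tree `G` on `n` vertices with degree vector `d` and
distance matrix `Δ`, Kemeny's constant of the random walk on `G` equals
`dᵀΔd / (4(n-1))`. -/
theorem kemeny_tree {n : ℕ} (hn : 2 ≤ n)
    (G : SimpleGraph (Fin n)) [DecidableRel G.Adj]
    (htree : G.IsTree)
    (d : Fin n → ℝ) (hd : d = (G.adjMatrix ℝ).mulVec (fun _ => 1)) :
    kemeny ((Matrix.diagonal d)⁻¹ * G.adjMatrix ℝ)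
      = (((∑ i, ∑ j, d i * (G.dist i j : ℝ) * d j) / (4 * (n - 1)) : ℝ) : ℂ) := by
  classical
  have hdeg : d = fun v => (G.degree v : ℝ) := by
    funext v
    rw [hd, SimpleGraph.adjMatrix_mulVec_apply, Finset.sum_const,
      SimpleGraph.card_neighborFinset_eq_degree, nsmul_eq_mul, mul_one]
  subst hdeg
  have hnR : (2 : ℝ) ≤ (n : ℝ) := by exact_mod_cast hn
  have hdegpos : ∀ v : Fin n, 0 < G.degree v := by
    intro v
    obtain ⟨u, hu⟩ := Fintype.exists_ne_of_one_lt_card (by rw [Fintype.card_fin]; omega) v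
    obtain ⟨p, hp, -⟩ := htree.existsUnique_path v u
    cases p with
    | nil => exact absurd rfl hu
    | cons h q => exact (G.degree_pos_iff_exists_adj v).2 ⟨_, h⟩
  set w : Fin n → ℝ := fun v => (G.degree v : ℝ) with hw
  have hdetD : (Matrix.diagonal w).det = ∏ v, w v := Matrix.det_diagonal
  have hdetne : (Matrix.diagonal w).det ≠ 0 := by
    rw [hdetD]
    refine Finset.prod_ne_zero_iff.2 fun v _ => ?_
    have hv : (0:ℝ) < (G.degree v : ℝ) := Nat.cast_pos.mpr (hdegpos v)
    exact ne_of_gt hv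
  have hDunit : IsUnit (Matrix.diagonal w).det := isUnit_iff_ne_zero.2 hdetne
  set Pm := (Matrix.diagonal w)⁻¹ * G.adjMatrix ℝ with hPm
  have hDP : Matrix.diagonal w * Pm = G.adjMatrix ℝ := by
    rw [hPm, ← Matrix.mul_assoc, Matrix.mul_nonsing_inv _ hDunit, Matrix.one_mul]
  have hDPe : ∀ a b, w a * Pm a b = G.adjMatrix ℝ a b := by
    intro a b
    have h := congrFun (congrFun hDP a) b
    rwa [Matrix.diagonal_mul] at h
  set gp := Matrix.det ((G.lapMatrix ℝ).map Polynomial.C + (X : ℝ[X]) •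
      (Matrix.diagonal w).map Polynomial.C) with hgp
  set φ := Polynomial.eval₂RingHom (Polynomial.C : ℝ →+* ℝ[X]) (X - 1 : ℝ[X]) with hφ
  have hmat : (Matrix.diagonal w).map Polynomial.C * Pm.charmatrix
      = ((G.lapMatrix ℝ).map Polynomial.C + (X : ℝ[X]) •
          (Matrix.diagonal w).map Polynomial.C).map φ := by
    have hmap : (Matrix.diagonal w).map Polynomial.C
        = Matrix.diagonal (fun v => Polynomial.C (w v)) :=
      Matrix.diagonal_map (map_zero _)
    have hRHS : ∀ a b, (((G.lapMatrix ℝ).map Polynomial.C + (X : ℝ[X]) •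
          (Matrix.diagonal w).map Polynomial.C).map φ) a b
        = Polynomial.C (G.lapMatrix ℝ a b)
            + (X - 1) * Polynomial.C (Matrix.diagonal w a b) := by
      intro a b
      rw [Matrix.map_apply, Matrix.add_apply, Matrix.smul_apply, Matrix.map_apply,
        Matrix.map_apply, smul_eq_mul, map_add, _root_.map_mul]
      rw [hφ]
      simp only [Polynomial.coe_eval₂RingHom, Polynomial.eval₂_C, Polynomial.eval₂_X]
    have hLe : ∀ a b, G.lapMatrix ℝ a b = Matrix.diagonal w a b - G.adjMatrix ℝ a b := by
      intro a b
      simp [SimpleGraph.lapMatrix, SimpleGraph.degMatrix, Matrix.sub_apply, hw]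
    ext a b
    rw [hRHS a b, hmap, Matrix.diagonal_mul, hLe a b, map_sub]
    by_cases hab : a = b
    · subst hab
      rw [Matrix.charmatrix_apply_eq, Matrix.diagonal_apply_eq]
      rw [mul_sub, ← Polynomial.C_mul, hDPe a a]
      ring
    · rw [Matrix.charmatrix_apply_ne _ _ _ hab, Matrix.diagonal_apply_ne _ hab]
      rw [mul_neg, ← Polynomial.C_mul, hDPe a b]
      simp
  have hrel : Polynomial.C ((Matrix.diagonal w).det) * Pm.charpoly = gp.comp (X - 1) := by
    rw [Matrix.charpoly, RingHom.map_det, ← Matrix.det_mul, RingHom.mapMatrix_apply,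
      hmat, hgp, ← RingHom.mapMatrix_apply, ← RingHom.map_det]
    rw [hφ]
    rfl
  have v₀ : Fin n := ⟨0, by omega⟩
  set c := (G.lapMatrix ℝ).adjugate v₀ v₀ with hc
  have hg0 : gp.coeff 0 = 0 := KemenyAux.coeff0_eq htree
  have hg1 : gp.coeff 1 = (∑ v, (G.degree v : ℝ)) * c := KemenyAux.coeff1_eq htree v₀
  have hg2 : 2 * gp.coeff 2
      = (∑ i, ∑ j, (G.degree i : ℝ) * (G.dist i j : ℝ) * (G.degree j : ℝ)) * c :=
    KemenyAux.coeff2_eq htree v₀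
  have hcne : c ≠ 0 := by
    have hBunit := KemenyAux.det_B_unit htree (G := G) v₀
    rw [hc, Matrix.adjugate_apply]
    exact hBunit.ne_zero
  have hsd : (∑ v, (G.degree v : ℝ)) = 2 * ((n : ℝ) - 1) := by
    have hedge : G.edgeFinset.card + 1 = Fintype.card (Fin n) := htree.card_edgeFinset
    have hsum : ∑ v : Fin n, G.degree v = 2 * G.edgeFinset.card :=
      SimpleGraph.sum_degrees_eq_twice_card_edges G
    have hcast : (∑ v : Fin n, (G.degree v : ℝ)) = ((∑ v : Fin n, G.degree v : ℕ) : ℝ) := by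
      push_cast; rfl
    rw [Fintype.card_fin] at hedge
    have hcard : G.edgeFinset.card = n - 1 := by omega
    rw [hcast, hsum, hcard]
    have h1n : (1 : ℕ) ≤ n := by omega
    push_cast [h1n]
    ring
  -- evaluations of the charpoly derivatives
  have heval0 : (Matrix.diagonal w).det * Pm.charpoly.eval 1 = 0 := by
    have h := congrArg (Polynomial.eval 1) hrel
    rw [Polynomial.eval_mul, Polynomial.eval_C, Polynomial.eval_comp] at h
    simp only [Polynomial.eval_sub, Polynomial.eval_X, Polynomial.eval_one, sub_self] at h
    rw [h, ← Polynomial.coeff_zero_eq_eval_zero, hg0]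
  have hrel1 : Polynomial.C ((Matrix.diagonal w).det) * derivative Pm.charpoly
      = (derivative gp).comp (X - 1) := by
    have h := congrArg derivative hrel
    rw [Polynomial.derivative_C_mul, Polynomial.derivative_comp] at h
    simpa [Polynomial.derivative_sub, Polynomial.derivative_X, Polynomial.derivative_one] using h
  have heval1 : (Matrix.diagonal w).det * (derivative Pm.charpoly).eval 1 = gp.coeff 1 := by
    have h := congrArg (Polynomial.eval 1) hrel1
    rw [Polynomial.eval_mul, Polynomial.eval_C, Polynomial.eval_comp] at h
    simp only [Polynomial.eval_sub, Polynomial.eval_X, Polynomial.eval_one, sub_self] at h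
    rw [h, ← Polynomial.coeff_zero_eq_eval_zero, Polynomial.coeff_derivative]
    push_cast; ring
  have hrel2 : Polynomial.C ((Matrix.diagonal w).det) * derivative (derivative Pm.charpoly)
      = (derivative (derivative gp)).comp (X - 1) := by
    have h := congrArg derivative hrel1
    rw [Polynomial.derivative_C_mul, Polynomial.derivative_comp] at h
    simpa [Polynomial.derivative_sub, Polynomial.derivative_X, Polynomial.derivative_one] using h
  have heval2 : (Matrix.diagonal w).det * (derivative (derivative Pm.charpoly)).eval 1
      = 2 * gp.coeff 2 := by
    have h := congrArg (Polynomial.eval 1) hrel2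
    rw [Polynomial.eval_mul, Polynomial.eval_C, Polynomial.eval_comp] at h
    simp only [Polynomial.eval_sub, Polynomial.eval_X, Polynomial.eval_one, sub_self] at h
    rw [h, ← Polynomial.coeff_zero_eq_eval_zero, Polynomial.coeff_derivative,
      Polynomial.coeff_derivative]
    push_cast; ring
  have hpR1ne : (derivative Pm.charpoly).eval 1 ≠ 0 := by
    intro h
    rw [h, mul_zero] at heval1
    rw [hg1, hsd] at heval1
    have hne : (2 * ((n : ℝ) - 1)) * c ≠ 0 :=
      mul_ne_zero (mul_ne_zero two_ne_zero (by linarith)) hcne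
    exact hne heval1.symm
  -- complex side
  set pC := ((Pm.map (fun x : ℝ => (x : ℂ))).charpoly) with hpC
  have hmapC : pC = Pm.charpoly.map Complex.ofRealHom :=
    Matrix.charpoly_map Pm Complex.ofRealHom
  have hC0 : pC.eval 1 = Complex.ofRealHom (Pm.charpoly.eval 1) := by
    rw [hmapC, Polynomial.eval_map,
      show (1 : ℂ) = Complex.ofRealHom 1 by simp, Polynomial.eval₂_at_apply]
  have hC1 : (derivative pC).eval 1
      = Complex.ofRealHom ((derivative Pm.charpoly).eval 1) := by
    rw [hmapC, Polynomial.derivative_map, Polynomial.eval_map,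
      show (1 : ℂ) = Complex.ofRealHom 1 by simp, Polynomial.eval₂_at_apply]
  have hC2 : (derivative (derivative pC)).eval 1
      = Complex.ofRealHom ((derivative (derivative Pm.charpoly)).eval 1) := by
    rw [hmapC, Polynomial.derivative_map, Polynomial.derivative_map, Polynomial.eval_map,
      show (1 : ℂ) = Complex.ofRealHom 1 by simp, Polynomial.eval₂_at_apply]
  have hmon : pC.Monic := Matrix.charpoly_monic _
  have hpc0 : pC.eval 1 = 0 := by
    rw [hC0, (mul_eq_zero.mp heval0).resolve_left hdetne]
    simp
  have hpc1ne : (derivative pC).eval 1 ≠ 0 := by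
    rw [hC1]
    simpa using hpR1ne
  have hker := KemenyAux.kemeny_roots pC hmon hpc0 hpc1ne
  have hkun : kemeny Pm
      = ((pC.roots.filter (· ≠ 1)).map (fun μ => (1 - μ)⁻¹)).sum := rfl
  rw [hkun, hker, hC1, hC2]
  -- final arithmetic
  have h4ne : (4 : ℝ) * ((n : ℝ) - 1) ≠ 0 :=
    mul_ne_zero (by norm_num) (by linarith)
  have hrealeq : (derivative (derivative Pm.charpoly)).eval 1
        / (2 * (derivative Pm.charpoly).eval 1)
      = (∑ i, ∑ j, (G.degree i : ℝ) * (G.dist i j : ℝ) * (G.degree j : ℝ))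
        / (4 * ((n : ℝ) - 1)) := by
    rw [div_eq_div_iff (mul_ne_zero two_ne_zero hpR1ne) h4ne]
    apply mul_left_cancel₀ hdetne
    linear_combination (4 * ((n : ℝ) - 1)) * heval2 + (4 * ((n : ℝ) - 1)) * hg2
      - 2 * (∑ i, ∑ j, (G.degree i : ℝ) * (G.dist i j : ℝ) * (G.degree j : ℝ)) * heval1
      - 2 * (∑ i, ∑ j, (G.degree i : ℝ) * (G.dist i j : ℝ) * (G.degree j : ℝ)) * hg1
      - 2 * (∑ i, ∑ j, (G.degree i : ℝ) * (G.dist i j : ℝ) * (G.degree j : ℝ)) * c * hsd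
  have hcast : (Complex.ofRealHom ((derivative (derivative Pm.charpoly)).eval 1))
        / (2 * Complex.ofRealHom ((derivative Pm.charpoly).eval 1))
      = Complex.ofRealHom ((derivative (derivative Pm.charpoly)).eval 1
          / (2 * (derivative Pm.charpoly).eval 1)) := by
    rw [map_div₀, _root_.map_mul, map_ofNat]
  rw [hcast, hrealeq]
  simp only [hw]
  rfl
end

section
/- For the star K_{1,n-1} with n ≥ 3 and e a pendant edge, the cut-edge centrality c(e) = κ(K_{1,n-1}) - κ(Ĝ₁) - κ(Ĝ₂) equals (4n-7)/(4n-6), where Ĝ₁ is the single vertex with a loop (κ = 0) and Ĝ₂ is the star on n-1 vertices with a loop of weight 1 at the center. -/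
open Matrix Polynomial

/-- Adjacency matrix of the star `K_{1,n-1}` on `Fin n`, center = last vertex. -/
noncomputable def starA (n : ℕ) : Matrix (Fin n) (Fin n) ℝ :=
  Matrix.of fun i j =>
    if i ≠ j ∧ ((i : ℕ) = n - 1 ∨ (j : ℕ) = n - 1) then 1 else 0

/-! The walk matrices of both stars are hub matrices: each leaf moves to the centre, and the
centre stays with probability `s` and moves to each leaf with probability `t`. A hub matrix
factors through `Fin 2`, so its characteristic polynomial is `X ^ (m - 2)` times that of a
`2 × 2` matrix, namely `X ^ 2 - s X - (m - 1) t = (X - 1) (X + (m - 1) t)` when the rows sum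
to `1`. Hence `κ = m - 2 + 1 / (1 + (m - 1) t)`: this is `n - 3/2` for the star and
`n - 3 + (n - 1) / (2n - 3)` for the looped star, while the looped vertex has `κ = 0`. -/

namespace Matrix

variable {ι R : Type*} [DecidableEq ι] [CommRing R]

def hubMatrix (c : ι) (s t : R) : Matrix ι ι R :=
  of fun i j => if i = c then (if j = c then s else t) else (if j = c then 1 else 0)

theorem hubMatrix_eq_mul (c : ι) (s t : R) :
    hubMatrix c s t =
      (of fun i => ![if i = c then 1 else 0, if i = c then 0 else 1] : Matrix ι (Fin 2) R) *
        of ![fun j => if j = c then s else t, fun j => if j = c then 1 else 0] := by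
  ext i j
  by_cases hi : i = c <;> simp [hubMatrix, mul_apply, Fin.sum_univ_two, hi]

theorem hubMatrix_add_single (c : ι) (s t a : R) :
    hubMatrix c s t + single c c a = hubMatrix c (s + a) t := by
  ext i j
  simp only [hubMatrix, add_apply, of_apply, single_apply]
  split_ifs <;> grind

variable [Fintype ι]

theorem charpoly_hubMatrix [Nontrivial R] (c : ι) (s t : R) (hι : 2 ≤ Fintype.card ι) :
    (hubMatrix c s t).charpoly =
      X ^ (Fintype.card ι - 2) * (X ^ 2 - C s * X - C ((Fintype.card ι - 1 : R) * t)) := by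
  have hVU : (of ![fun j => if j = c then s else t, fun j => if j = c then 1 else 0] :
      Matrix (Fin 2) ι R) *
        (of fun i => ![if i = c then 1 else 0, if i = c then 0 else 1] : Matrix ι (Fin 2) R)
      = !![s, (Fintype.card ι - 1 : R) * t; 1, 0] := by
    ext i j
    fin_cases i <;> fin_cases j <;>
      simp [mul_apply, Finset.sum_ite, Finset.filter_ne', Finset.filter_eq', Finset.card_univ,
        Nat.cast_sub (by omega : 1 ≤ Fintype.card ι)]
  rw [hubMatrix_eq_mul, charpoly_mul_comm_of_le _ _ (by simpa using hι), Fintype.card_fin, hVU,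
    charpoly_fin_two, trace_fin_two_of, det_fin_two_of]
  simp only [add_zero, mul_zero, mul_one, zero_sub, C_neg]
  ring

theorem sum_hubMatrix_apply (c : ι) (s t : R) (i : ι) :
    ∑ k, hubMatrix c s t i k = if i = c then s + (Fintype.card ι - 1) * t else 1 := by
  by_cases hi : i = c
  · simp [hubMatrix, hi, Finset.sum_ite, Finset.filter_ne', Finset.filter_eq', Finset.card_univ,
      Nat.cast_sub (Fintype.card_pos_iff.mpr ⟨c⟩)]
  · simp [hubMatrix, hi]

variable {K : Type*} [Field K]

theorem inv_diagonal_mulVec_one_mul_apply {A : Matrix ι ι K} (hA : ∀ i, ∑ k, A i k ≠ 0)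
    (i j : ι) : ((diagonal (A *ᵥ fun _ => 1))⁻¹ * A) i j = (∑ k, A i k)⁻¹ * A i j := by
  have hdiag : A *ᵥ (fun _ => 1) = fun i => ∑ k, A i k := by
    ext i; simp [mulVec, dotProduct]
  have hinv : (diagonal fun i => ∑ k, A i k)⁻¹ = diagonal fun i => (∑ k, A i k)⁻¹ :=
    inv_eq_left_inv <| by simp [diagonal_mul_diagonal, inv_mul_cancel₀ (hA _)]
  rw [hdiag, hinv, diagonal_mul]

theorem inv_diagonal_mulVec_one_mul_hubMatrix (c : ι) {s t : K}
    (hst : s + (Fintype.card ι - 1) * t ≠ 0) :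
    (diagonal (hubMatrix c s t *ᵥ fun _ => 1))⁻¹ * hubMatrix c s t =
      hubMatrix c ((s + (Fintype.card ι - 1) * t)⁻¹ * s)
        ((s + (Fintype.card ι - 1) * t)⁻¹ * t) := by
  have hrow : ∀ i, ∑ k, hubMatrix c s t i k ≠ 0 := by
    intro i
    rw [sum_hubMatrix_apply]
    split_ifs
    exacts [hst, one_ne_zero]
  ext i j
  rw [inv_diagonal_mulVec_one_mul_apply hrow, sum_hubMatrix_apply]
  by_cases hi : i = c <;> by_cases hj : j = c <;> simp [hubMatrix, hi, hj]

end Matrix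

theorem kemeny_eq_of_charpoly {m : ℕ} {P : Matrix (Fin m) (Fin m) ℝ} (k : ℕ) {c : ℝ} (hc : c ≠ 1)
    (hP : P.charpoly = X ^ k * ((X - C 1) * (X - C c))) :
    kemeny P = ((k + (1 - c)⁻¹ : ℝ) : ℂ) := by
  have hmonic : ((X - C 1) * (X - C (c : ℂ))).Monic := (monic_X_sub_C _).mul (monic_X_sub_C _)
  have hroots : (P.map (fun x : ℝ => (x : ℂ))).charpoly.roots =
      Multiset.replicate k 0 + ({1} + {(c : ℂ)}) := by
    rw [show (fun x : ℝ => (x : ℂ)) = Complex.ofRealHom from rfl, charpoly_map, hP]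
    simp only [Polynomial.map_mul, Polynomial.map_pow, Polynomial.map_sub, map_X, map_C,
      Complex.ofRealHom_eq_coe, Complex.ofReal_one]
    rw [roots_mul ((monic_X_pow k).mul hmonic).ne_zero, roots_mul hmonic.ne_zero, roots_pow,
      roots_X, roots_X_sub_C, roots_X_sub_C, Multiset.nsmul_singleton]
  have hc' : (c : ℂ) ≠ 1 := by exact_mod_cast hc
  rw [kemeny, hroots, Multiset.filter_add, Multiset.filter_add, Multiset.filter_singleton,
    Multiset.filter_singleton, Multiset.filter_eq_self.mpr]
  · simp [hc']
  · intro a ha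
    simp [Multiset.eq_of_mem_replicate ha]

theorem kemeny_one (m : ℕ) : kemeny (1 : Matrix (Fin m) (Fin m) ℝ) = 0 := by
  have hroots : ((1 : Matrix (Fin m) (Fin m) ℝ).map (fun x : ℝ => (x : ℂ))).charpoly.roots =
      Multiset.replicate m 1 := by
    rw [Matrix.map_one _ Complex.ofReal_zero Complex.ofReal_one, charpoly_one, ← C_1, roots_pow,
      roots_X_sub_C, Fintype.card_fin, Multiset.nsmul_singleton]
  rw [kemeny, hroots, Multiset.filter_eq_nil.mpr]
  · simp
  · intro a ha
    simpa using Multiset.eq_of_mem_replicate ha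

theorem starA_eq_hubMatrix {m : ℕ} {c : Fin m} (hc : (c : ℕ) = m - 1) :
    starA m = hubMatrix c 0 1 := by
  ext i j
  have hi : (i : ℕ) = m - 1 ↔ i = c := by rw [← hc, Fin.val_inj]
  have hj : (j : ℕ) = m - 1 ↔ j = c := by rw [← hc, Fin.val_inj]
  by_cases hic : i = c <;> by_cases hjc : j = c <;> simp [starA, hubMatrix, hi, hj, hic, hjc, hc]
  exact fun h => hjc h.symm

theorem kemeny_hubMatrix {m : ℕ} (hm : 2 ≤ m) (c : Fin m) {s t : ℝ}
    (hst : s + (m - 1) * t = 1) (ht : (m - 1) * t ≠ -1) :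
    kemeny (hubMatrix c s t) = ((m - 2 + (1 + (m - 1) * t)⁻¹ : ℝ) : ℂ) := by
  have hcharpoly : (hubMatrix c s t).charpoly =
      X ^ (m - 2) * ((X - C 1) * (X - C (-((m - 1) * t)))) := by
    rw [charpoly_hubMatrix c s t (by simpa using hm), Fintype.card_fin,
      show s = 1 - (m - 1) * t by linarith]
    simp only [C_sub, C_neg, C_mul, C_1]
    ring
  rw [kemeny_eq_of_charpoly (m - 2) (by contrapose! ht; linarith) hcharpoly, Nat.cast_sub hm]
  norm_num

theorem kemeny_walk_starA_add_single {m : ℕ} (hm : 2 ≤ m) {c : Fin m} (hc : (c : ℕ) = m - 1)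
    {w : ℝ} (hw : 0 ≤ w) :
    kemeny ((diagonal ((starA m + single c c w) *ᵥ fun _ => 1))⁻¹ * (starA m + single c c w)) =
      ((m - 2 + (m - 1 + w) / (2 * (m - 1) + w) : ℝ) : ℂ) := by
  have hm' : (2 : ℝ) ≤ m := by exact_mod_cast hm
  have hdeg : 0 < w + (m - 1) := by linarith
  have hq : 0 ≤ (m - 1) * (w + (m - 1))⁻¹ := mul_nonneg (by linarith) (inv_nonneg.mpr hdeg.le)
  rw [starA_eq_hubMatrix hc, hubMatrix_add_single, zero_add,
    inv_diagonal_mulVec_one_mul_hubMatrix c (by simpa using hdeg.ne'), Fintype.card_fin, mul_one,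
    kemeny_hubMatrix hm c (by field_simp) (by linarith)]
  congr 1
  field_simp
  ring

/-- for the star `K_{1,n-1}` (`n ≥ 3`) and a pendant edge `e`, the
cut-edge centrality `c(e) = κ(K_{1,n-1}) - κ(Ĝ₁) - κ(Ĝ₂)` equals
`(4n-7)/(4n-6)`; here `Ĝ₁` is a single vertex with a loop and `Ĝ₂` is the star
on `n-1` vertices with a loop of weight 1 at its center. -/
theorem star_centrality {n : ℕ} (hn : 3 ≤ n)
    (P : Matrix (Fin n) (Fin n) ℝ)
    (hP : P = (Matrix.diagonal ((starA n).mulVec (fun _ => 1)))⁻¹ * starA n)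
    -- `Ĝ₁`: the single vertex `1` with a unit loop
    (A₁ : Matrix (Fin 1) (Fin 1) ℝ) (hA₁ : A₁ = Matrix.of fun _ _ => 1)
    -- `Ĝ₂`: the star on `n-1` vertices with a unit loop at its center
    (A₂ : Matrix (Fin (n - 1)) (Fin (n - 1)) ℝ)
    (hA₂ : A₂ = starA (n - 1) +
      Matrix.single ⟨n - 2, by omega⟩ ⟨n - 2, by omega⟩ 1) :
    kemeny P
      - kemeny ((Matrix.diagonal (A₁.mulVec (fun _ => 1)))⁻¹ * A₁)
      - kemeny ((Matrix.diagonal (A₂.mulVec (fun _ => 1)))⁻¹ * A₂)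
      = (((4 * n - 7) / (4 * n - 6) : ℝ) : ℂ) := by
  have hn' : (3 : ℝ) ≤ n := by exact_mod_cast hn
  have hκ : kemeny P = ((n - 2 + (n - 1) / (2 * (n - 1)) : ℝ) : ℂ) := by
    have h := kemeny_walk_starA_add_single (by omega : 2 ≤ n) (c := ⟨n - 1, by omega⟩) rfl le_rfl
    rwa [single_zero, add_zero, add_zero, add_zero, ← hP] at h
  have hκ₁ : kemeny ((diagonal (A₁ *ᵥ fun _ => 1))⁻¹ * A₁) = 0 := by
    have hA₁' : A₁ = 1 := by
      rw [hA₁]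
      ext i j
      fin_cases i; fin_cases j; rfl
    rw [hA₁', one_mulVec, diagonal_one, inv_one, one_mul, kemeny_one]
  have hκ₂ : kemeny ((diagonal (A₂ *ᵥ fun _ => 1))⁻¹ * A₂) =
      ((n - 3 + (n - 1) / (2 * n - 3) : ℝ) : ℂ) := by
    rw [hA₂, kemeny_walk_starA_add_single (by omega) (by simp only; omega) zero_le_one]
    push_cast [Nat.cast_sub (by omega : 1 ≤ n)]
    ring_nf
  rw [hκ, hκ₁, hκ₂, sub_zero, ← Complex.ofReal_sub, Complex.ofReal_inj]
  have h₁ : (n : ℝ) - 1 ≠ 0 := by linarith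
  have h₂ : (n : ℝ) * 2 - 3 ≠ 0 := by linarith
  have h₃ : (n : ℝ) * 4 - 6 ≠ 0 := by linarith
  field_simp
  ring
end

section
/- Let G be the graph obtained from the complete graph K_{n-1} on vertices 1,…,n-1 by attaching a pendant vertex n to vertex n-1. For n ≥ 3, the eigenvalues of the random walk transition matrix are 1, -1/(n-2) with multiplicity n-3, and (1/2)(-1/(n-2) ± √((4n²-19n+23)/((n-1)(n-2)²))), and Kemeny's constant equals (n-3)(n-2)/(n-1) + (2n²-5n+3)/(n²-3n+4). -/
open Matrix Polynomial

/-- Adjacency matrix of the graph obtained from the complete graph `K_{n-1}`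
(on the first `n-1` vertices) by attaching the pendant vertex `n-1`
(vertex `n` in 1-based labelling) to vertex `n-2` (vertex `n-1`). -/
noncomputable def kiteA (n : ℕ) : Matrix (Fin n) (Fin n) ℝ :=
  Matrix.of fun i j =>
    if i ≠ j ∧ (((i : ℕ) < n - 1 ∧ (j : ℕ) < n - 1) ∨
      ((i : ℕ) = n - 1 ∧ (j : ℕ) = n - 2) ∨
      ((i : ℕ) = n - 2 ∧ (j : ℕ) = n - 1)) then 1 else 0

namespace KitePf
open Finset

noncomputable def fS (m i j : ℕ) : ℂ :=
  if i = j then 1 else if j < m ∧ i = j + 1 then -1 else 0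
noncomputable def fA (m i j : ℕ) : ℂ :=
  if j < m then (if i = j then -((m:ℂ)+1)⁻¹ else 0)
  else if j = m then
    (if i < m then ((i:ℂ)+1) * ((m:ℂ)+1)⁻¹ else if i = m then (m:ℂ) * ((m:ℂ)+1)⁻¹
      else if i = m+1 then ((m:ℂ)+2)⁻¹ else 0)
  else if j = m+1 then
    (if i < m then ((i:ℂ)+1) * ((m:ℂ)+1)⁻¹ else if i = m then 1
      else if i = m+2 then 1 else 0)
  else (if i = m+1 then ((m:ℂ)+2)⁻¹ else 0)
noncomputable def fQ (m i j : ℕ) : ℂ :=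
  if i ≤ m then (if j ≠ i ∧ j < m+2 then ((m:ℂ)+1)⁻¹ else 0)
  else if i = m+1 then (if j ≠ i then ((m:ℂ)+2)⁻¹ else 0)
  else (if j = m+1 then 1 else 0)

lemma fA_lt {m j : ℕ} (i : ℕ) (h : j < m) :
    fA m i j = if i = j then -((m:ℂ)+1)⁻¹ else 0 := by
  rw [fA, if_pos h]
lemma fA_m (m i : ℕ) : fA m i m =
    (if i < m then ((i:ℂ)+1) * ((m:ℂ)+1)⁻¹ else if i = m then (m:ℂ) * ((m:ℂ)+1)⁻¹
      else if i = m+1 then ((m:ℂ)+2)⁻¹ else 0) := by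
  rw [fA, if_neg (by omega : ¬ (m < m)), if_pos rfl]
lemma fA_m1 (m i : ℕ) : fA m i (m+1) =
    (if i < m then ((i:ℂ)+1) * ((m:ℂ)+1)⁻¹ else if i = m then 1
      else if i = m+2 then 1 else 0) := by
  rw [fA, if_neg (by omega : ¬ (m+1 < m)), if_neg (by omega : ¬ (m+1 = m)), if_pos rfl]
lemma fA_m2 (m i : ℕ) : fA m i (m+2) = (if i = m+1 then ((m:ℂ)+2)⁻¹ else 0) := by
  rw [fA, if_neg (by omega : ¬ (m+2 < m)), if_neg (by omega : ¬ (m+2 = m)),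
    if_neg (by omega : ¬ (m+2 = m+1))]
lemma fQ_le {m i : ℕ} (h : i ≤ m) (j : ℕ) :
    fQ m i j = if j ≠ i ∧ j < m+2 then ((m:ℂ)+1)⁻¹ else 0 := by
  rw [fQ, if_pos h]
lemma fQ_m1 (m j : ℕ) : fQ m (m+1) j = if j ≠ m+1 then ((m:ℂ)+2)⁻¹ else 0 := by
  rw [fQ, if_neg (by omega : ¬ (m+1 ≤ m)), if_pos rfl]
lemma fQ_m2 (m j : ℕ) : fQ m (m+2) j = if j = m+1 then 1 else 0 := by
  rw [fQ, if_neg (by omega : ¬ (m+2 ≤ m)), if_neg (by omega : ¬ (m+2 = m+1))]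


noncomputable def fT (m i j : ℕ) : ℂ :=
  if j ≤ i ∧ i ≤ m then 1 else if i = j then 1 else 0

noncomputable def SM (m : ℕ) : Matrix (Fin (m+3)) (Fin (m+3)) ℂ :=
  Matrix.of fun i j => fS m i j
noncomputable def TM (m : ℕ) : Matrix (Fin (m+3)) (Fin (m+3)) ℂ :=
  Matrix.of fun i j => fT m i j
noncomputable def AM (m : ℕ) : Matrix (Fin (m+3)) (Fin (m+3)) ℂ :=
  Matrix.of fun i j => fA m i j
noncomputable def QM (m : ℕ) : Matrix (Fin (m+3)) (Fin (m+3)) ℂ :=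
  Matrix.of fun i j => fQ m i j

lemma mulS_row (m i : ℕ) (hi : i < m+3) (g : ℕ → ℂ) :
    ∑ k ∈ Finset.range (m+3), fS m i k * g k
      = g i - (if 1 ≤ i ∧ i ≤ m then g (i-1) else 0) := by
  have h : ∀ k, fS m i k * g k
      = (if k = i then g k else 0)
        + (if 1 ≤ i ∧ i ≤ m then (if k = i - 1 then -g k else 0) else 0) := by
    intro k
    simp only [fS]
    split_ifs <;> first | ring1 | (exfalso; omega)
  rw [Finset.sum_congr rfl (fun k _ => h k), Finset.sum_add_distrib,
    Finset.sum_ite_eq' (Finset.range (m+3)) i g]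
  by_cases hP : 1 ≤ i ∧ i ≤ m
  · simp only [if_pos hP, Finset.sum_ite_eq' (Finset.range (m+3)) (i-1) (fun k => -g k)]
    have : i - 1 ∈ Finset.range (m+3) := by simp; omega
    simp [this, Finset.mem_range.mpr hi, sub_eq_add_neg]
  · simp [hP, Finset.mem_range.mpr hi]

lemma mulS_col (m j : ℕ) (hj : j < m+3) (g : ℕ → ℂ) :
    ∑ k ∈ Finset.range (m+3), g k * fS m k j
      = g j - (if j < m then g (j+1) else 0) := by
  have h : ∀ k, g k * fS m k j
      = (if k = j then g k else 0)
        + (if j < m then (if k = j + 1 then -g k else 0) else 0) := by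
    intro k
    simp only [fS]
    split_ifs <;> first | ring1 | (exfalso; omega)
  rw [Finset.sum_congr rfl (fun k _ => h k), Finset.sum_add_distrib,
    Finset.sum_ite_eq' (Finset.range (m+3)) j g]
  by_cases hP : j < m
  · simp only [if_pos hP, Finset.sum_ite_eq' (Finset.range (m+3)) (j+1) (fun k => -g k)]
    have : j + 1 ∈ Finset.range (m+3) := by simp; omega
    simp [this, Finset.mem_range.mpr hj, sub_eq_add_neg]
  · simp [hP, Finset.mem_range.mpr hj]

lemma hST (m : ℕ) : SM m * TM m = 1 := by
  ext i j
  rw [Matrix.mul_apply]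
  have h1 : ∀ k : Fin (m+3), SM m i k * TM m k j = fS m ↑i ↑k * fT m ↑k ↑j := fun k => rfl
  rw [Finset.sum_congr rfl (fun k _ => h1 k),
    Fin.sum_univ_eq_sum_range (fun k => fS m ↑i k * fT m k ↑j) (m+3),
    mulS_row m ↑i i.isLt]
  have hj := j.isLt
  have hi := i.isLt
  simp only [fT, Matrix.one_apply, Fin.ext_iff]
  split_ifs <;> first | ring1 | (exfalso; omega)

set_option maxHeartbeats 1600000 in
lemma keyQS (m i j : ℕ) (hi : i < m+3) (hj : j < m+3) :
    fQ m i j - (if j < m then fQ m i (j+1) else 0)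
      = fA m i j - (if 1 ≤ i ∧ i ≤ m then fA m (i-1) j else 0) := by
  rcases (show i ≤ m ∨ m+1 = i ∨ m+2 = i by omega) with hir | hir | hir
  · rcases (show j < m ∨ m = j ∨ m+1 = j ∨ m+2 = j by omega) with hjr | hjr | hjr | hjr
    · simp only [fQ_le hir, fA_lt _ hjr]
      split_ifs <;> first | ring1 | (exfalso; omega)
    · -- j = m
      subst hjr
      rw [if_neg (by omega : ¬ (m < m))]
      simp only [fQ_le hir, fA_m]
      by_cases hg : 1 ≤ i ∧ i ≤ m
      · rw [if_pos hg]
        obtain ⟨k, rfl⟩ : ∃ k, i = k + 1 := ⟨i - 1, by omega⟩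
        simp only [Nat.add_sub_cancel]
        rcases (show k + 1 < m ∨ k + 1 = m by omega) with hkm | hkm
        · rw [if_pos (show m ≠ k+1 ∧ m < m+2 by omega), if_pos hkm,
            if_pos (by omega : k < m)]
          push_cast; ring1
        · subst hkm
          rw [if_neg (by omega : ¬ ((k+1) ≠ k+1 ∧ k+1 < k+1+2)),
            if_neg (by omega : ¬ (k+1 < k+1)), if_pos rfl, if_pos (by omega : k < k+1)]
          push_cast; ring1
      · rw [if_neg hg]
        obtain rfl : i = 0 := by omega
        rcases Nat.eq_zero_or_pos m with h0 | h0
        · subst h0; norm_num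
        · rw [if_pos (show m ≠ 0 ∧ m < m+2 by omega), if_pos h0]
          norm_num
    · -- j = m+1
      subst hjr
      rw [if_neg (by omega : ¬ (m+1 < m))]
      simp only [fQ_le hir, fA_m1]
      by_cases hg : 1 ≤ i ∧ i ≤ m
      · rw [if_pos hg]
        obtain ⟨k, rfl⟩ : ∃ k, i = k + 1 := ⟨i - 1, by omega⟩
        simp only [Nat.add_sub_cancel]
        rw [if_pos (show m+1 ≠ k+1 ∧ m+1 < m+2 by omega)]
        rcases (show k + 1 < m ∨ k + 1 = m by omega) with hkm | hkm
        · rw [if_pos hkm, if_pos (by omega : k < m)]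
          push_cast; ring1
        · subst hkm
          rw [if_neg (by omega : ¬ (k+1 < k+1)), if_pos rfl, if_pos (by omega : k < k+1)]
          have h2 : (2 + (k:ℂ)) ≠ 0 := by
            have : (2 + (k:ℂ)) = ((k+2 : ℕ) : ℂ) := by push_cast; ring
            rw [this]; exact (Nat.cast_ne_zero (R := ℂ)).mpr (by omega)
          push_cast
          have hinv : (2 + (k:ℂ)) * (2 + (k:ℂ))⁻¹ = 1 := mul_inv_cancel₀ h2
          linear_combination hinv
      · rw [if_neg hg]
        obtain rfl : i = 0 := by omega
        rw [if_pos (show m+1 ≠ 0 ∧ m+1 < m+2 by omega)]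
        rcases Nat.eq_zero_or_pos m with h0 | h0
        · subst h0; norm_num
        · rw [if_pos h0]; norm_num
    · -- j = m+2
      subst hjr
      simp only [fQ_le hir, fA_m2]
      split_ifs <;> first | ring1 | (exfalso; omega)
  · subst hir
    rcases (show j < m ∨ m = j ∨ m+1 = j ∨ m+2 = j by omega) with hjr | hjr | hjr | hjr
    · simp only [fQ_m1, fA_lt _ hjr]
      split_ifs <;> first | ring1 | (exfalso; omega)
    · subst hjr
      simp only [fQ_m1, fA_m]
      split_ifs <;> first | ring1 | (exfalso; omega)
    · subst hjr
      simp only [fQ_m1, fA_m1]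
      split_ifs <;> first | ring1 | (exfalso; omega)
    · subst hjr
      simp only [fQ_m1, fA_m2]
      split_ifs <;> first | ring1 | (exfalso; omega)
  · subst hir
    rcases (show j < m ∨ m = j ∨ m+1 = j ∨ m+2 = j by omega) with hjr | hjr | hjr | hjr
    · simp only [fQ_m2, fA_lt _ hjr]
      split_ifs <;> first | ring1 | (exfalso; omega)
    · subst hjr
      simp only [fQ_m2, fA_m]
      split_ifs <;> first | ring1 | (exfalso; omega)
    · subst hjr
      simp only [fQ_m2, fA_m1]
      split_ifs <;> first | ring1 | (exfalso; omega)
    · subst hjr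
      simp only [fQ_m2, fA_m2]
      split_ifs <;> first | ring1 | (exfalso; omega)

lemma hQS (m : ℕ) : QM m * SM m = SM m * AM m := by
  ext i j
  rw [Matrix.mul_apply, Matrix.mul_apply]
  have h1 : ∀ k : Fin (m+3), QM m i k * SM m k j = fQ m ↑i ↑k * fS m ↑k ↑j := fun k => rfl
  have h2 : ∀ k : Fin (m+3), SM m i k * AM m k j = fS m ↑i ↑k * fA m ↑k ↑j := fun k => rfl
  rw [Finset.sum_congr rfl (fun k _ => h1 k),
    Fin.sum_univ_eq_sum_range (fun k => fQ m ↑i k * fS m k ↑j) (m+3),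
    Finset.sum_congr rfl (fun k _ => h2 k),
    Fin.sum_univ_eq_sum_range (fun k => fS m ↑i k * fA m k ↑j) (m+3),
    mulS_col m ↑j j.isLt, mulS_row m ↑i i.isLt]
  exact keyQS m ↑i ↑j i.isLt j.isLt

lemma QM_conj (m : ℕ) : QM m = SM m * AM m * TM m := by
  have h := hST m
  calc QM m = QM m * (SM m * TM m) := by rw [h, Matrix.mul_one]
  _ = (QM m * SM m) * TM m := by rw [Matrix.mul_assoc]
  _ = (SM m * AM m) * TM m := by rw [hQS]

lemma charpoly_conj {N : ℕ} (S A T : Matrix (Fin N) (Fin N) ℂ) (h : S * T = 1) :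
    (S * A * T).charpoly = A.charpoly := by
  have hmap : ∀ (M M' : Matrix (Fin N) (Fin N) ℂ),
      (M * M').map (Polynomial.C : ℂ →+* ℂ[X]) = M.map Polynomial.C * M'.map Polynomial.C :=
    fun M M' => Matrix.map_mul
  have hone : (1 : Matrix (Fin N) (Fin N) ℂ).map (Polynomial.C : ℂ →+* ℂ[X]) = 1 :=
    Matrix.map_one _ (map_zero _) (map_one _)
  have hchar : charmatrix (S * A * T)
      = S.map Polynomial.C * charmatrix A * T.map Polynomial.C := by
    unfold charmatrix
    simp only [RingHom.mapMatrix_apply]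
    rw [Matrix.mul_sub, Matrix.sub_mul]
    congr 1
    · have hs : (Matrix.scalar (Fin N)) (X : ℂ[X]) = (X : ℂ[X]) • (1 : Matrix (Fin N) (Fin N) ℂ[X]) := by
        ext i j
        by_cases hij : i = j <;> simp [hij, Matrix.scalar_apply, Matrix.diagonal_apply, Matrix.one_apply]
      rw [hs, mul_smul_comm, Matrix.mul_one, smul_mul_assoc, ← hmap, h, hone]
    · rw [hmap, hmap]
  rw [Matrix.charpoly, hchar, Matrix.det_mul, Matrix.det_mul, Matrix.charpoly]
  have hdet : Matrix.det (S.map (Polynomial.C : ℂ →+* ℂ[X]))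
      * Matrix.det (T.map Polynomial.C) = 1 := by
    rw [← Matrix.det_mul, ← hmap, h, hone, Matrix.det_one]
  calc Matrix.det (S.map (Polynomial.C : ℂ →+* ℂ[X])) * (charmatrix A).det
        * Matrix.det (T.map Polynomial.C)
      = (charmatrix A).det * (Matrix.det (S.map (Polynomial.C : ℂ →+* ℂ[X]))
          * Matrix.det (T.map Polynomial.C)) := by ring
  _ = (charmatrix A).det := by rw [hdet, mul_one]

lemma charpoly_QM (m : ℕ) :
    (QM m).charpoly = (X - Polynomial.C (-((m:ℂ)+1)⁻¹))^m *
      ((Matrix.of ![![(m:ℂ) * ((m:ℂ)+1)⁻¹, 1, 0],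
        ![((m:ℂ)+2)⁻¹, 0, ((m:ℂ)+2)⁻¹], ![0, 1, 0]] : Matrix (Fin 3) (Fin 3) ℂ)).charpoly := by
  rw [QM_conj m, charpoly_conj _ _ _ (hST m)]
  rw [← Matrix.charpoly_reindex (finSumFinEquiv (m := m) (n := 3)).symm (AM m)]
  have hblock : Matrix.reindex finSumFinEquiv.symm finSumFinEquiv.symm (AM m)
      = Matrix.fromBlocks (Matrix.diagonal (fun _ : Fin m => -((m:ℂ)+1)⁻¹))
          (Matrix.of fun (i : Fin m) (k : Fin 3) => fA m i (m + k))
          0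
          (Matrix.of ![![(m:ℂ) * ((m:ℂ)+1)⁻¹, 1, 0],
            ![((m:ℂ)+2)⁻¹, 0, ((m:ℂ)+2)⁻¹], ![0, 1, 0]]) := by
    ext (i|i) (j|j)
    · simp only [Matrix.reindex_apply, Equiv.symm_symm, Matrix.submatrix_apply,
        finSumFinEquiv_apply_left, Matrix.fromBlocks_apply₁₁, Matrix.diagonal_apply]
      show fA m (Fin.castAdd 3 i) (Fin.castAdd 3 j) = _
      rw [fA_lt _ (by simpa using j.isLt)]
      simp only [Fin.coe_castAdd, Fin.ext_iff]
      all_goals (split_ifs <;> first | rfl | (exfalso; omega))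
    · rfl
    · simp only [Matrix.reindex_apply, Equiv.symm_symm, Matrix.submatrix_apply,
        finSumFinEquiv_apply_left, finSumFinEquiv_apply_right, Matrix.fromBlocks_apply₂₁,
        Matrix.zero_apply]
      show fA m ((Fin.natAdd m i : Fin (m+3)) : ℕ) ((Fin.castAdd 3 j : Fin (m+3)) : ℕ) = 0
      have hj : ((Fin.castAdd 3 j : Fin (m+3)) : ℕ) < m := by simp
      rw [fA_lt _ hj, if_neg (by simp; omega)]
    · simp only [Matrix.reindex_apply, Equiv.symm_symm, Matrix.submatrix_apply,
        finSumFinEquiv_apply_right, Matrix.fromBlocks_apply₂₂]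
      show fA m (Fin.natAdd m i) (Fin.natAdd m j) = _
      fin_cases i <;> fin_cases j <;>
        simp [fA_m, fA_m1, fA_m2, Fin.natAdd] <;>
        first
          | rfl
          | (rw [fA_m]; split_ifs <;> first | rfl | (exfalso; omega))
          | (rw [fA_m1]; split_ifs <;> first | rfl | (exfalso; omega))
          | (rw [fA_m2]; split_ifs <;> first | rfl | (exfalso; omega))
  rw [hblock, Matrix.charpoly_fromBlocks_zero₂₁]
  congr 1
  · unfold Matrix.charpoly
    have : charmatrix (Matrix.diagonal (fun _ : Fin m => -((m:ℂ)+1)⁻¹))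
        = Matrix.diagonal (fun _ : Fin m => X - Polynomial.C (-((m:ℂ)+1)⁻¹)) := by
      ext i j
      by_cases hij : i = j
      · subst hij; simp
      · rw [Matrix.charmatrix_apply_ne _ _ _ hij, Matrix.diagonal_apply_ne _ hij,
          Matrix.diagonal_apply_ne _ hij, map_zero, neg_zero]
    rw [this, Matrix.det_diagonal, Finset.prod_const, Finset.card_univ, Fintype.card_fin]



lemma charpoly_M3 (a b : ℂ) :
    (Matrix.of ![![a, 1, 0], ![b, 0, b], ![0, 1, 0]] : Matrix (Fin 3) (Fin 3) ℂ).charpoly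
      = X^3 - C a * X^2 - C (2*b) * X + C (a*b) := by
  rw [Matrix.charpoly, Matrix.det_fin_three]
  simp only [charmatrix_apply_eq, charmatrix_apply_ne _ _ _ (by decide : (0 : Fin 3) ≠ 1),
    charmatrix_apply_ne _ _ _ (by decide : (0 : Fin 3) ≠ 2),
    charmatrix_apply_ne _ _ _ (by decide : (1 : Fin 3) ≠ 0),
    charmatrix_apply_ne _ _ _ (by decide : (1 : Fin 3) ≠ 2),
    charmatrix_apply_ne _ _ _ (by decide : (2 : Fin 3) ≠ 0),
    charmatrix_apply_ne _ _ _ (by decide : (2 : Fin 3) ≠ 1)]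
  simp only [Matrix.of_apply, Matrix.cons_val', Matrix.cons_val_zero, Matrix.cons_val_one,
    Matrix.head_cons, Matrix.empty_val', Matrix.cons_val_fin_one, Matrix.head_fin_const,
    Matrix.cons_val_two, Matrix.tail_cons]
  simp only [Polynomial.C_mul, map_ofNat, Polynomial.C_1, Polynomial.C_0]
  ring1

lemma cubic_factor (a b u v : ℂ) (h1 : u + v = a - 1) (h2 : u * v = -(a*b))
    (h3 : a - 1 - a*b + 2*b = 0) :
    X^3 - C a * X^2 - C (2*b) * X + C (a*b)
      = (X - C 1) * (X - C u) * (X - C v) := by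
  have h1' : C u + C v = C a - 1 := by
    rw [← Polynomial.C_add, h1, Polynomial.C_sub, Polynomial.C_1]
  have h2' : C u * C v = -(C a * C b) := by
    rw [← Polynomial.C_mul, h2, Polynomial.C_neg, Polynomial.C_mul]
  have h3' : C a - 1 - C a * C b + 2 * C b = 0 := by
    have h := congrArg C h3
    simpa [Polynomial.C_sub, Polynomial.C_add, Polynomial.C_mul, Polynomial.C_1,
      map_ofNat, map_zero] using h
  simp only [Polynomial.C_mul, map_ofNat, Polynomial.C_1]
  linear_combination (X^2 - X) * h1' + (1 - X) * h2' - X * h3'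




noncomputable def fK (m i j : ℕ) : ℝ :=
  if i ≠ j ∧ ((i < m+2 ∧ j < m+2) ∨ (i = m+2 ∧ j = m+1) ∨ (i = m+1 ∧ j = m+2)) then 1 else 0

lemma kiteA_eq (m : ℕ) (i j : Fin (m+3)) : kiteA (m+3) i j = fK m ↑i ↑j := by
  have e1 : m+3-1 = m+2 := rfl
  have e2 : m+3-2 = m+1 := rfl
  simp only [kiteA, Matrix.of_apply, e1, e2, fK, ne_eq, Fin.ext_iff]

lemma sum_lt (m : ℕ) :
    ∑ j ∈ Finset.range (m+3), (if j < m+2 then (1:ℝ) else 0) = (m:ℝ)+2 := by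
  rw [Finset.sum_range_succ, if_neg (by omega)]
  rw [Finset.sum_congr rfl (fun j hj => if_pos (Finset.mem_range.mp hj))]
  rw [Finset.sum_const, Finset.card_range, nsmul_eq_mul, mul_one]
  push_cast; ring

lemma rowsum (m : ℕ) (i : Fin (m+3)) :
    (kiteA (m+3)).mulVec (fun _ => (1:ℝ)) i
      = if (i:ℕ) ≤ m then (m:ℝ)+1 else if (i:ℕ) = m+1 then (m:ℝ)+2 else 1 := by
  rw [Matrix.mulVec, dotProduct]
  rw [Finset.sum_congr rfl (fun j _ => by rw [kiteA_eq, mul_one])]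
  rw [Fin.sum_univ_eq_sum_range (fun j => fK m ↑i j) (m+3)]
  have hi := i.isLt
  rcases (show (i:ℕ) ≤ m ∨ m+1 = (i:ℕ) ∨ m+2 = (i:ℕ) by omega) with hir | hir | hir
  · rw [if_pos hir]
    have h : ∀ j, fK m (↑i) j
        = (if j < m+2 then (1:ℝ) else 0) - (if j = (i:ℕ) then 1 else 0) := by
      intro j; simp only [fK]; split_ifs <;> first | ring1 | (exfalso; omega)
    rw [Finset.sum_congr rfl (fun j _ => h j), Finset.sum_sub_distrib, sum_lt,
      Finset.sum_ite_eq' (Finset.range (m+3)) (i:ℕ) (fun _ => (1:ℝ)),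
      if_pos (Finset.mem_range.mpr hi)]
    ring
  · rw [if_neg (by omega), if_pos (by omega)]
    have h : ∀ j, fK m (↑i) j
        = (if j < m+2 then (1:ℝ) else 0) - (if j = (i:ℕ) then 1 else 0)
          + (if j = m+2 then 1 else 0) := by
      intro j; simp only [fK]; split_ifs <;> first | ring1 | (exfalso; omega)
    rw [Finset.sum_congr rfl (fun j _ => h j), Finset.sum_add_distrib,
      Finset.sum_sub_distrib, sum_lt,
      Finset.sum_ite_eq' (Finset.range (m+3)) (i:ℕ) (fun _ => (1:ℝ)),
      Finset.sum_ite_eq' (Finset.range (m+3)) (m+2) (fun _ => (1:ℝ)),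
      if_pos (Finset.mem_range.mpr hi), if_pos (Finset.mem_range.mpr (by omega))]
    ring
  · rw [if_neg (by omega), if_neg (by omega)]
    have h : ∀ j, fK m (↑i) j = (if j = m+1 then (1:ℝ) else 0) := by
      intro j; simp only [fK]; split_ifs <;> first | ring1 | (exfalso; omega)
    rw [Finset.sum_congr rfl (fun j _ => h j),
      Finset.sum_ite_eq' (Finset.range (m+3)) (m+1) (fun _ => (1:ℝ)),
      if_pos (Finset.mem_range.mpr (by omega))]

lemma PQ (m : ℕ) (P : Matrix (Fin (m+3)) (Fin (m+3)) ℝ)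
    (hP : P = (Matrix.diagonal ((kiteA (m+3)).mulVec (fun _ => 1)))⁻¹ * kiteA (m+3)) :
    P.map (fun x : ℝ => (x:ℂ)) = QM m := by
  subst hP
  set d : Fin (m+3) → ℝ := (kiteA (m+3)).mulVec (fun _ => 1) with hd
  have hdne : ∀ i, d i ≠ 0 := by
    intro i
    rw [hd, rowsum]
    split_ifs <;> positivity
  have hinv : (Matrix.diagonal d)⁻¹ = Matrix.diagonal (fun i => (d i)⁻¹) := by
    apply Matrix.inv_eq_right_inv
    rw [Matrix.diagonal_mul_diagonal,
      show (fun i => d i * (d i)⁻¹) = fun _ => (1:ℝ) from funext fun i => mul_inv_cancel₀ (hdne i),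
      Matrix.diagonal_one]
  rw [hinv]
  ext i j
  rw [Matrix.map_apply, Matrix.diagonal_mul, kiteA_eq]
  have hrow := rowsum m i
  rw [← hd] at hrow
  rw [hrow]
  have hi := i.isLt
  have hj := j.isLt
  show (((if (i:ℕ) ≤ m then (m:ℝ)+1 else if (i:ℕ) = m+1 then (m:ℝ)+2 else 1)⁻¹
      * fK m ↑i ↑j : ℝ) : ℂ) = fQ m ↑i ↑j
  simp only [fK, fQ]
  split_ifs <;> first | (exfalso; omega) | (push_cast; norm_num)


end KitePf

open KitePf in
set_option maxHeartbeats 1600000 in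
/-- for `K_{n-1}` with a pendant vertex attached (`n ≥ 3`), the
random-walk eigenvalues are `1`, `-1/(n-2)` with multiplicity `n-3`, and
`(1/2)(-1/(n-2) ± √((4n²-19n+23)/((n-1)(n-2)²)))`; Kemeny's constant equals
`(n-3)(n-2)/(n-1) + (2n²-5n+3)/(n²-3n+4)`. -/
theorem kemeny_complete_pendant {n : ℕ} (hn : 3 ≤ n)
    (P : Matrix (Fin n) (Fin n) ℝ)
    (hP : P = (Matrix.diagonal ((kiteA n).mulVec (fun _ => 1)))⁻¹ * kiteA n) :
    (P.map (fun x : ℝ => (x : ℂ))).charpoly.roots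
        = (1 : ℂ) ::ₘ
          (((1 / 2 * (-(1 / ((n : ℝ) - 2)) +
              Real.sqrt ((4 * n ^ 2 - 19 * n + 23) /
                ((n - 1) * (n - 2) ^ 2))) : ℝ) : ℂ)) ::ₘ
          (((1 / 2 * (-(1 / ((n : ℝ) - 2)) -
              Real.sqrt ((4 * n ^ 2 - 19 * n + 23) /
                ((n - 1) * (n - 2) ^ 2))) : ℝ) : ℂ)) ::ₘ
          Multiset.replicate (n - 3) (((-(1 / ((n : ℝ) - 2)) : ℝ) : ℂ)) ∧
    kemeny P = ((((n : ℝ) - 3) * (n - 2) / (n - 1)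
      + (2 * n ^ 2 - 5 * n + 3) / (n ^ 2 - 3 * n + 4) : ℝ) : ℂ) := by
  obtain ⟨m, rfl⟩ : ∃ m, n = m + 3 := ⟨n - 3, by omega⟩
  clear hn
  have hm3 : ((m+3:ℕ):ℝ) = (m:ℝ)+3 := by push_cast; ring
  have hR1 : ((m:ℝ)+1) ≠ 0 := by positivity
  have hR2 : ((m:ℝ)+2) ≠ 0 := by positivity
  have hC1 : ((m:ℂ)+1) ≠ 0 := by
    have h : ((m:ℂ)+1) = ((m+1:ℕ):ℂ) := by push_cast; ring
    rw [h]; exact Nat.cast_ne_zero.mpr (by omega)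
  have hC2 : ((m:ℂ)+2) ≠ 0 := by
    have h : ((m:ℂ)+2) = ((m+2:ℕ):ℂ) := by push_cast; ring
    rw [h]; exact Nat.cast_ne_zero.mpr (by omega)
  set dd : ℝ := (4 * ((m+3:ℕ):ℝ) ^ 2 - 19 * ((m+3:ℕ):ℝ) + 23) /
      ((((m+3:ℕ):ℝ) - 1) * (((m+3:ℕ):ℝ) - 2) ^ 2) with hdd_def
  have hdd : dd = (4*(m:ℝ)^2+5*(m:ℝ)+2)/(((m:ℝ)+2)*((m:ℝ)+1)^2) := by
    rw [hdd_def, hm3]; congr 1 <;> ring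
  have hd0 : (0:ℝ) ≤ dd := by rw [hdd]; positivity
  set s : ℝ := Real.sqrt dd with hs_def
  have hs2 : s^2 = dd := by rw [hs_def]; exact Real.sq_sqrt hd0
  set c0 : ℝ := -(1 / (((m+3:ℕ):ℝ) - 2)) with hc0
  set μp : ℝ := 1 / 2 * (c0 + s) with hμp
  set μm : ℝ := 1 / 2 * (c0 - s) with hμm
  have hc0v : c0 = -(((m:ℝ)+1))⁻¹ := by rw [hc0, hm3]; ring1
  have hsum : μp + μm = -(((m:ℝ)+1))⁻¹ := by
    rw [hμp, hμm, hc0v]; ring1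
  have hprod : μp * μm = -((m:ℝ)/(((m:ℝ)+1)*((m:ℝ)+2))) := by
    have h : μp * μm = 1/4 * (c0^2 - s^2) := by rw [hμp, hμm]; ring1
    rw [h, hs2, hc0v, hdd]
    field_simp
    ring1
  have hfact : (1-μp)*(1-μm) = ((m:ℝ)^2+3*(m:ℝ)+4)/(((m:ℝ)+1)*((m:ℝ)+2)) := by
    have h : (1-μp)*(1-μm) = 1 - (μp+μm) + μp*μm := by ring1
    rw [h, hsum, hprod]
    field_simp
    ring1
  have hRne : ((m:ℝ)^2+3*(m:ℝ)+4)/(((m:ℝ)+1)*((m:ℝ)+2)) ≠ 0 := by positivity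
  have hprodne : (1-μp)*(1-μm) ≠ 0 := by rw [hfact]; exact hRne
  have h1p : (1:ℝ)-μp ≠ 0 := left_ne_zero_of_mul hprodne
  have h1m : (1:ℝ)-μm ≠ 0 := right_ne_zero_of_mul hprodne
  have h1c : (1:ℝ)-c0 = ((m:ℝ)+2)/((m:ℝ)+1) := by
    rw [hc0v]; field_simp; ring1
  -- complex facts
  have hPQ : P.map (fun x : ℝ => (x:ℂ)) = QM m := PQ m P hP
  have h1C : ((μp:ℝ):ℂ) + ((μm:ℝ):ℂ) = (m:ℂ)*((m:ℂ)+1)⁻¹ - 1 := by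
    rw [← Complex.ofReal_add, hsum]
    push_cast
    field_simp
    ring1
  have h2C : ((μp:ℝ):ℂ) * ((μm:ℝ):ℂ) = -(((m:ℂ)*((m:ℂ)+1)⁻¹) * ((m:ℂ)+2)⁻¹) := by
    rw [← Complex.ofReal_mul, hprod]
    push_cast
    field_simp
  have h3C : ((m:ℂ)*((m:ℂ)+1)⁻¹) - 1 - ((m:ℂ)*((m:ℂ)+1)⁻¹)*((m:ℂ)+2)⁻¹
      + 2*((m:ℂ)+2)⁻¹ = 0 := by
    field_simp
    ring1
  have hcc : ((c0:ℝ):ℂ) = -((m:ℂ)+1)⁻¹ := by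
    rw [hc0v]; push_cast; ring1
  have hcp : (P.map (fun x : ℝ => (x:ℂ))).charpoly
      = (X - Polynomial.C ((c0:ℝ):ℂ))^m *
        ((X - Polynomial.C 1) * (X - Polynomial.C ((μp:ℝ):ℂ)) * (X - Polynomial.C ((μm:ℝ):ℂ))) := by
    rw [hPQ, charpoly_QM m, charpoly_M3, cubic_factor _ _ _ _ h1C h2C h3C, hcc]
  have hne : ∀ r : ℂ, (X - Polynomial.C r) ≠ 0 := fun r => Polynomial.X_sub_C_ne_zero r
  have hroots : (P.map (fun x : ℝ => (x:ℂ))).charpoly.roots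
      = (1:ℂ) ::ₘ ((μp:ℝ):ℂ) ::ₘ ((μm:ℝ):ℂ) ::ₘ Multiset.replicate m ((c0:ℝ):ℂ) := by
    rw [hcp,
      Polynomial.roots_mul (mul_ne_zero (pow_ne_zero _ (hne _))
        (mul_ne_zero (mul_ne_zero (hne _) (hne _)) (hne _))),
      Polynomial.roots_pow, Polynomial.roots_X_sub_C,
      Polynomial.roots_mul (mul_ne_zero (mul_ne_zero (hne _) (hne _)) (hne _)),
      Polynomial.roots_mul (mul_ne_zero (hne _) (hne _)),
      Polynomial.roots_X_sub_C, Polynomial.roots_X_sub_C, Polynomial.roots_X_sub_C,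
      Multiset.nsmul_singleton]
    rw [add_comm, add_assoc, add_assoc]
    simp only [Multiset.singleton_add]
  have hu1 : ((μp:ℝ):ℂ) ≠ 1 := by
    intro h
    apply h1p
    have h' : μp = 1 := by exact_mod_cast h
    rw [h']; ring1
  have hv1 : ((μm:ℝ):ℂ) ≠ 1 := by
    intro h
    apply h1m
    have h' : μm = 1 := by exact_mod_cast h
    rw [h']; ring1
  have hcne : ((c0:ℝ):ℂ) ≠ 1 := by
    rw [hcc]
    intro h
    have h2 := congrArg (fun z : ℂ => z * ((m:ℂ)+1)) h
    simp only [one_mul] at h2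
    rw [neg_mul, inv_mul_cancel₀ hC1] at h2
    have h3 : ((m:ℂ)+2) = 0 := by linear_combination -h2
    exact hC2 h3
  have hkem : kemeny P = (((((m+3:ℕ):ℝ) - 3) * (((m+3:ℕ):ℝ) - 2) / (((m+3:ℕ):ℝ) - 1)
      + (2 * ((m+3:ℕ):ℝ) ^ 2 - 5 * ((m+3:ℕ):ℝ) + 3) /
        (((m+3:ℕ):ℝ) ^ 2 - 3 * ((m+3:ℕ):ℝ) + 4) : ℝ) : ℂ) := by
    simp only [kemeny]
    rw [hroots]
    rw [Multiset.filter_cons_of_neg _ (by simp)]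
    rw [Multiset.filter_cons_of_pos _ (by simpa using hu1)]
    rw [Multiset.filter_cons_of_pos _ (by simpa using hv1)]
    rw [Multiset.filter_eq_self.mpr (fun a ha => by
      rw [Multiset.eq_of_mem_replicate ha]; simpa using hcne)]
    rw [Multiset.map_cons, Multiset.map_cons, Multiset.map_replicate,
      Multiset.sum_cons, Multiset.sum_cons, Multiset.sum_replicate, nsmul_eq_mul]
    have hcast : (1 - ((μp:ℝ):ℂ))⁻¹ + ((1 - ((μm:ℝ):ℂ))⁻¹ + (m:ℂ) * (1 - ((c0:ℝ):ℂ))⁻¹)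
        = ((((1-μp)⁻¹ + (1-μm)⁻¹ + (m:ℝ)*(1-c0)⁻¹ : ℝ)):ℂ) := by
      push_cast; ring1
    rw [hcast]
    apply Complex.ofReal_inj.mpr
    rw [inv_add_inv h1p h1m, show (1-μp)+(1-μm) = 2 - (μp+μm) from by ring1, hsum,
      hfact, h1c, hm3,
      show ((m:ℝ)+3)-1 = (m:ℝ)+2 from by ring1,
      show ((m:ℝ)+3)-2 = (m:ℝ)+1 from by ring1,
      show ((m:ℝ)+3)-3 = (m:ℝ) from by ring1,
      show (2 * ((m:ℝ)+3) ^ 2 - 5 * ((m:ℝ)+3) + 3) = 2*(m:ℝ)^2+7*(m:ℝ)+6 from by ring1,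
      show (((m:ℝ)+3) ^ 2 - 3 * ((m:ℝ)+3) + 4) = (m:ℝ)^2+3*(m:ℝ)+4 from by ring1]
    have hq : ((m:ℝ)^2+3*(m:ℝ)+4) ≠ 0 := by positivity
    field_simp
    ring1
  simp only [Nat.add_sub_cancel]
  exact ⟨hroots, hkem⟩
end

section
/- Let P be the n×n irreducible tridiagonal stochastic matrix of a birth-death chain with birth rates λ₀,…,λ_{n-2} > 0, death rates μ₁,…,μ_{n-1} > 0, and stationary distribution π. Then Kemeny's constant of P equals Σ_{k=0}^{n-2} σ_k(1-σ_k)/(λ_k π_k), where σ_k = Σ_{j=0}^{k} π_j. -/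
open Matrix Polynomial

/-- Tridiagonal transition matrix of a birth-death chain on states `0,…,n-1`
with birth rates `lam` and death rates `mu`. -/
noncomputable def bdP {n : ℕ} (lam mu : Fin n → ℝ) : Matrix (Fin n) (Fin n) ℝ :=
  Matrix.of fun i j =>
    if (j : ℕ) = (i : ℕ) + 1 then lam i
    else if (j : ℕ) + 1 = (i : ℕ) then mu i
    else if j = i then 1 - lam i - mu i
    else 0

section auxiliary

noncomputable def tridFun (l m : ℕ → ℝ) (i j : ℕ) : Polynomial ℝ :=
  if j = i + 1 then -Polynomial.C (l i)
  else if j + 1 = i then -Polynomial.C (m i)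
  else if j = i then Polynomial.X - Polynomial.C (1 - l i - m i)
  else 0

noncomputable def trid (l m : ℕ → ℝ) (k : ℕ) : Matrix (Fin k) (Fin k) (Polynomial ℝ) :=
  Matrix.of fun i j => tridFun l m (i : ℕ) (j : ℕ)

lemma trid_apply (l m : ℕ → ℝ) (k : ℕ) (i j : Fin k) :
    trid l m k i j = tridFun l m (i : ℕ) (j : ℕ) := rfl

lemma tridFun_eq_zero (l m : ℕ → ℝ) {i j : ℕ} (h1 : j ≠ i + 1) (h2 : j + 1 ≠ i)
    (h3 : j ≠ i) : tridFun l m i j = 0 := by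
  rw [tridFun, if_neg h1, if_neg h2, if_neg h3]

lemma coe_succAbove {N : ℕ} (p : Fin (N + 1)) (i : Fin N) :
    ((p.succAbove i : Fin (N + 1)) : ℕ) = if (i : ℕ) < (p : ℕ) then (i : ℕ) else (i : ℕ) + 1 := by
  rw [Fin.succAbove]
  split_ifs with h h' h'
  · rfl
  · exact absurd h h'
  · exact absurd h' h
  · rfl

lemma trid_rec (l m : ℕ → ℝ) (k : ℕ) :
    (trid l m (k+2)).det
      = (X - C (1 - l (k+1) - m (k+1))) * (trid l m (k+1)).det
        - C (m (k+1)) * C (l k) * (trid l m k).det := by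
  have hk : k < k + 2 := by omega
  set A := trid l m (k+2) with hA
  rw [Matrix.det_succ_row A (Fin.last (k+1))]
  have hne : (⟨k, hk⟩ : Fin (k+2)) ≠ Fin.last (k+1) := by
    intro h
    have := congrArg (Fin.val) h
    simp at this
  rw [← Finset.sum_subset (Finset.subset_univ ({⟨k, hk⟩, Fin.last (k+1)} : Finset (Fin (k+2))))
      (by
        intro j _ hj
        simp only [Finset.mem_insert, Finset.mem_singleton] at hj
        push_neg at hj
        have h1 : (j : ℕ) ≠ k := by
          intro h; exact hj.1 (Fin.ext (by simpa using h))
        have h2 : (j : ℕ) ≠ k + 1 := by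
          intro h; exact hj.2 (Fin.ext (by simpa using h))
        have hz : A (Fin.last (k+1)) j = 0 := by
          rw [hA, trid_apply]
          exact tridFun_eq_zero l m (by simp; omega) (by simp; omega) (by simp; omega)
        rw [hz]
        ring)]
  rw [Finset.sum_pair hne]
  -- identify the two minors
  have hminor2 : A.submatrix (Fin.last (k+1)).succAbove (Fin.last (k+1)).succAbove
      = trid l m (k+1) := by
    refine Matrix.ext fun i j => ?_
    rw [Matrix.submatrix_apply, hA, trid_apply, trid_apply, Fin.succAbove_last]
    simp
  have hval2 : A (Fin.last (k+1)) (Fin.last (k+1)) = X - C (1 - l (k+1) - m (k+1)) := by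
    rw [hA, trid_apply]
    simp only [Fin.val_last]
    rw [tridFun, if_neg (by omega), if_neg (by omega), if_pos rfl]
  have hval1 : A (Fin.last (k+1)) (⟨k, hk⟩ : Fin (k+2)) = -C (m (k+1)) := by
    rw [hA, trid_apply]
    simp only [Fin.val_last]
    rw [tridFun, if_neg (by omega), if_pos (by omega)]
  -- the first minor: expand along its last column
  set B := A.submatrix (Fin.last (k+1)).succAbove (⟨k, hk⟩ : Fin (k+2)).succAbove with hB
  have hBdet : B.det = (-C (l k)) * (trid l m k).det := by
    rw [Matrix.det_succ_column B (Fin.last k)]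
    rw [Finset.sum_eq_single_of_mem (Fin.last k) (Finset.mem_univ _)
      (by
        intro i _ hi
        have h1 : (i : ℕ) ≠ k := by
          intro h; exact hi (Fin.ext (by simpa using h))
        have h2 : (i : ℕ) < k := by have := i.isLt; omega
        have hz : B i (Fin.last k) = 0 := by
          rw [hB, Matrix.submatrix_apply, hA, trid_apply]
          rw [Fin.succAbove_last]
          refine tridFun_eq_zero l m ?_ ?_ ?_ <;>
            rw [coe_succAbove] <;> simp only [Fin.val_last, Fin.coe_castSucc] <;>
              rw [if_neg (by omega)] <;> omega
        rw [hz]; ring)]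
    have hval : B (Fin.last k) (Fin.last k) = -C (l k) := by
      rw [hB, Matrix.submatrix_apply, hA, trid_apply, Fin.succAbove_last]
      rw [coe_succAbove]
      simp only [Fin.val_last, Fin.coe_castSucc]
      rw [if_neg (by omega)]
      rw [tridFun, if_pos (by omega)]
    have hminor : B.submatrix (Fin.last k).succAbove (Fin.last k).succAbove
        = trid l m k := by
      refine Matrix.ext fun i j => ?_
      rw [Matrix.submatrix_apply, hB, Matrix.submatrix_apply, hA, trid_apply, trid_apply]
      rw [Fin.succAbove_last]
      have hi : ((Fin.castSucc ((Fin.last k).succAbove i)) : ℕ) = (i : ℕ) := by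
        simp only [Fin.coe_castSucc]
        rw [coe_succAbove]
        simp only [Fin.val_last]
        rw [if_pos i.isLt]
      have hj : (((⟨k, hk⟩ : Fin (k+2)).succAbove ((Fin.last k).succAbove j)) : ℕ) = (j : ℕ) := by
        rw [coe_succAbove, coe_succAbove]
        simp only [Fin.val_last]
        rw [if_pos j.isLt, if_pos j.isLt]
      rw [hi, hj]
    rw [hval, hminor]
    simp only [Fin.val_last]
    have h1 : ((-1 : Polynomial ℝ)) ^ ((k : ℕ) + (k : ℕ)) = 1 :=
      Even.neg_one_pow ⟨k, rfl⟩
    rw [h1]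
    ring
  rw [hminor2, hval2, hval1, hBdet]
  simp only [Fin.val_last, Fin.val_mk]
  have hsign1 : ((-1 : Polynomial ℝ)) ^ ((k + 1) + k) = -1 := by
    have : Odd ((k+1) + k) := by refine ⟨k, by ring⟩
    exact Odd.neg_one_pow this
  have hsign2 : ((-1 : Polynomial ℝ)) ^ ((k + 1) + (k + 1)) = 1 := by
    exact Even.neg_one_pow ⟨k+1, rfl⟩
  rw [hsign1, hsign2]
  ring

section seqs
variable (l m : ℕ → ℝ)

/-- `∏_{j<k} l j` -/
noncomputable def Pl (k : ℕ) : ℝ := ∏ j ∈ Finset.range k, l j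

/-- determinant (evaluated at 1) of the tridiagonal block on rows `i+1,…,k-1` -/
noncomputable def Gf (i k : ℕ) : ℝ :=
  ∑ a ∈ Finset.Ico i k, (∏ t ∈ Finset.Ioc i a, m t) * ∏ t ∈ Finset.Ioo a k, l t

noncomputable def Bc (k : ℕ) : ℝ := ∑ i ∈ Finset.range k, Pl l i * Gf l m i k

noncomputable def Hc (k : ℕ) : ℝ :=
  ∑ j ∈ Finset.range k, ∑ i ∈ Finset.range j, Pl l i * Gf l m i j * Gf l m j k

lemma Gf_self (k : ℕ) : Gf l m k k = 0 := by simp [Gf]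

lemma Gf_succ_self (k : ℕ) : Gf l m k (k+1) = 1 := by
  rw [Gf]
  rw [show Finset.Ico k (k+1) = {k} by ext a; simp, Finset.sum_singleton]
  rw [show Finset.Ioo k (k+1) = ∅ by ext a; simp]
  simp

lemma Gf_succ {i k : ℕ} (h : i ≤ k) :
    Gf l m i (k+1) = l k * Gf l m i k + ∏ t ∈ Finset.Ioc i k, m t := by
  rw [Gf, Finset.sum_Ico_succ_top (by omega)]
  rw [show Finset.Ioo k (k+1) = ∅ by ext a; simp]
  rw [Gf, Finset.mul_sum]
  simp only [Finset.prod_empty, mul_one]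
  congr 1
  refine Finset.sum_congr rfl fun a ha => ?_
  rw [Finset.mem_Ico] at ha
  rw [show Finset.Ioo a (k+1) = insert k (Finset.Ioo a k) by ext b; simp; omega]
  rw [Finset.prod_insert (by simp)]
  ring

lemma Gf_rec {i k : ℕ} (h : i ≤ k) :
    Gf l m i (k+2) = (l (k+1) + m (k+1)) * Gf l m i (k+1) - l k * m (k+1) * Gf l m i k := by
  have h1 := Gf_succ l m (show i ≤ k+1 by omega)
  have h2 := Gf_succ l m h
  have h3 : ∏ t ∈ Finset.Ioc i (k+1), m t = m (k+1) * ∏ t ∈ Finset.Ioc i k, m t := by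
    rw [show Finset.Ioc i (k+1) = insert (k+1) (Finset.Ioc i k) by ext b; simp; omega]
    rw [Finset.prod_insert (by simp)]
  have h4 : ∏ t ∈ Finset.Ioc i k, m t = Gf l m i (k+1) - l k * Gf l m i k := by
    rw [h2]; ring
  rw [h1, h3, h4]
  ring

lemma Pl_rec (k : ℕ) :
    Pl l (k+2) = (l (k+1) + m (k+1)) * Pl l (k+1) - m (k+1) * l k * Pl l k := by
  rw [Pl, Pl, Pl, Finset.prod_range_succ, Finset.prod_range_succ]
  ring

lemma Bc_rec (k : ℕ) :
    Bc l m (k+2) = Pl l (k+1) + (l (k+1) + m (k+1)) * Bc l m (k+1) - m (k+1) * l k * Bc l m k := by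
  rw [Bc, Finset.sum_range_succ, Gf_succ_self, mul_one]
  have : ∀ i ∈ Finset.range (k+1), Pl l i * Gf l m i (k+2)
      = (l (k+1) + m (k+1)) * (Pl l i * Gf l m i (k+1)) - m (k+1) * l k * (Pl l i * Gf l m i k) := by
    intro i hi
    rw [Finset.mem_range] at hi
    rw [Gf_rec l m (by omega)]
    ring
  rw [Finset.sum_congr rfl this, Finset.sum_sub_distrib, ← Finset.mul_sum, ← Finset.mul_sum]
  have hB1 : ∑ i ∈ Finset.range (k+1), Pl l i * Gf l m i (k+1) = Bc l m (k+1) := rfl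
  have hB0 : ∑ i ∈ Finset.range (k+1), Pl l i * Gf l m i k = Bc l m k := by
    rw [Finset.sum_range_succ, Gf_self, mul_zero, add_zero]; rfl
  rw [hB1, hB0]
  ring

lemma Hc_rec (k : ℕ) :
    Hc l m (k+2) = Bc l m (k+1) + (l (k+1) + m (k+1)) * Hc l m (k+1) - m (k+1) * l k * Hc l m k := by
  rw [Hc, Finset.sum_range_succ]
  have hlast : ∑ i ∈ Finset.range (k+1), Pl l i * Gf l m i (k+1) * Gf l m (k+1) (k+2)
      = Bc l m (k+1) := by
    rw [Gf_succ_self]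
    simp only [mul_one]
    rfl
  have hrest : ∀ j ∈ Finset.range (k+1),
      (∑ i ∈ Finset.range j, Pl l i * Gf l m i j * Gf l m j (k+2))
      = (l (k+1) + m (k+1)) * (∑ i ∈ Finset.range j, Pl l i * Gf l m i j * Gf l m j (k+1))
        - m (k+1) * l k * (∑ i ∈ Finset.range j, Pl l i * Gf l m i j * Gf l m j k) := by
    intro j hj
    rw [Finset.mem_range] at hj
    rw [Finset.mul_sum, Finset.mul_sum, ← Finset.sum_sub_distrib]
    refine Finset.sum_congr rfl fun i _ => ?_
    rw [Gf_rec l m (by omega)]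
    ring
  rw [Finset.sum_congr rfl hrest, Finset.sum_sub_distrib, ← Finset.mul_sum, ← Finset.mul_sum]
  have hH1 : ∑ j ∈ Finset.range (k+1), ∑ i ∈ Finset.range j, Pl l i * Gf l m i j * Gf l m j (k+1)
      = Hc l m (k+1) := rfl
  have hH0 : ∑ j ∈ Finset.range (k+1), ∑ i ∈ Finset.range j, Pl l i * Gf l m i j * Gf l m j k
      = Hc l m k := by
    rw [Finset.sum_range_succ, Gf_self]
    simp only [mul_zero, Finset.sum_const_zero, add_zero]
    rfl
  rw [hH1, hH0, hlast]
  ring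
end seqs

lemma trid_det_zero (l m : ℕ → ℝ) : (trid l m 0).det = 1 := Matrix.det_isEmpty

lemma trid_det_one (l m : ℕ → ℝ) : (trid l m 1).det = X - C (1 - l 0 - m 0) := by
  rw [Matrix.det_fin_one, trid_apply]
  show tridFun l m 0 0 = _
  rw [tridFun, if_neg (by omega), if_neg (by omega), if_pos rfl]

lemma trid_evals (l m : ℕ → ℝ) (hm0 : m 0 = 0) (k : ℕ) :
    (trid l m k).det.eval 1 = Pl l k
    ∧ ((trid l m k).det.derivative).eval 1 = Bc l m k
    ∧ ((derivative (derivative (trid l m k).det))).eval 1 = 2 * Hc l m k := by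
  have key : ∀ k : ℕ,
      ((trid l m k).det.eval 1 = Pl l k
        ∧ ((trid l m k).det.derivative).eval 1 = Bc l m k
        ∧ ((derivative (derivative (trid l m k).det))).eval 1 = 2 * Hc l m k)
      ∧ ((trid l m (k+1)).det.eval 1 = Pl l (k+1)
        ∧ ((trid l m (k+1)).det.derivative).eval 1 = Bc l m (k+1)
        ∧ ((derivative (derivative (trid l m (k+1)).det))).eval 1 = 2 * Hc l m (k+1)) := by
    intro k
    induction k with
    | zero =>
      constructor
      · rw [trid_det_zero]
        refine ⟨by simp [Pl], by simp [Bc], by simp [Hc]⟩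
      · rw [trid_det_one]
        refine ⟨?_, ?_, ?_⟩
        · simp [Pl, hm0]
        · simp only [derivative_sub, derivative_X, derivative_C, sub_zero, eval_one]
          rw [Bc]
          rw [show Finset.range 1 = {0} from rfl, Finset.sum_singleton, Gf_succ_self]
          simp [Pl]
        · simp only [derivative_sub, derivative_X, derivative_C, sub_zero, derivative_one]
          rw [Hc]
          simp
      | succ k ih =>
      refine ⟨ih.2, ?_, ?_, ?_⟩
      · rw [trid_rec, Pl_rec l m]
        simp only [eval_sub, eval_mul, eval_X, eval_C]
        rw [ih.2.1, ih.1.1]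
        ring
      · rw [trid_rec, Bc_rec]
        simp only [derivative_sub, derivative_mul, derivative_X, derivative_C,
          zero_mul, add_zero, zero_add, one_mul, zero_sub, eval_sub, eval_add, eval_mul,
          eval_X, eval_C, eval_neg, eval_one, eval_zero, mul_zero, neg_zero, sub_zero]
        rw [ih.2.1, ih.2.2.1, ih.1.2.1]
        ring
      · rw [trid_rec, Hc_rec]
        simp only [derivative_sub, derivative_mul, derivative_add, derivative_X, derivative_C,
          zero_mul, add_zero, zero_add, one_mul, zero_sub, derivative_neg, eval_sub, eval_add,
          eval_mul, eval_X, eval_C, eval_neg, eval_one, eval_zero, mul_zero, neg_zero, sub_zero,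
          derivative_one, derivative_zero]
        rw [ih.2.2.1, ih.2.2.2, ih.1.2.2]
        ring
  exact (key k).1

lemma multiset_inv_sum_lemma :
    ∀ s : Multiset ℂ, (∀ a ∈ s, a ≠ 1) →
      (s.map (fun a => (1 - a)⁻¹)).sum * ((s.map (fun a => X - C a)).prod).eval 1
        = (((s.map (fun a => X - C a)).prod).derivative).eval 1 := by
  intro s
  induction s using Multiset.induction_on with
  | empty => simp
  | cons a t ih =>
    intro h
    have ha : a ≠ 1 := h a (Multiset.mem_cons_self a t)
    have ht : ∀ b ∈ t, b ≠ 1 := fun b hb => h b (Multiset.mem_cons_of_mem hb)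
    have ih' := ih ht
    simp only [Multiset.map_cons, Multiset.sum_cons, Multiset.prod_cons]
    rw [derivative_mul]
    simp only [derivative_sub, derivative_X, derivative_C, sub_zero, one_mul]
    simp only [eval_add, eval_mul, eval_sub, eval_X, eval_C]
    have h1a : (1 : ℂ) - a ≠ 0 := sub_ne_zero.mpr (fun hh => ha hh.symm)
    have expand : ∀ SS EE DD : ℂ, SS * EE = DD →
        ((1 - a)⁻¹ + SS) * ((1 - a) * EE) = EE + (1 - a) * DD := by
      intro SS EE DD hh
      rw [add_mul, ← mul_assoc, inv_mul_cancel₀ h1a, one_mul, ← hh]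
      ring
    exact expand _ _ _ ih'

lemma kemeny_core (p : Polynomial ℂ) (hp : p.Monic)
    (h0 : p.eval 1 = 0) (b h : ℝ) (hb : b ≠ 0)
    (h1 : (p.derivative).eval 1 = (b : ℂ))
    (h2 : ((derivative (derivative p))).eval 1 = 2 * (h : ℂ)) :
    ((p.roots.filter (· ≠ (1:ℂ))).map (fun μ => (1 - μ)⁻¹)).sum = ((h / b : ℝ) : ℂ) := by
  classical
  have hpne : p ≠ 0 := hp.ne_zero
  have hbC : ((b : ℂ)) ≠ 0 := by exact_mod_cast hb
  -- root multiplicity of 1 is exactly 1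
  have hcount : p.roots.count 1 = 1 := by
    rw [Polynomial.count_roots]
    have hpos : 0 < p.rootMultiplicity 1 := (Polynomial.rootMultiplicity_pos hpne).mpr h0
    have hle : p.rootMultiplicity 1 ≤ 1 := by
      rw [Polynomial.rootMultiplicity_le_iff hpne]
      intro hdvd
      obtain ⟨q, hq⟩ := hdvd
      have : (p.derivative).eval 1 = 0 := by
        rw [hq]
        simp only [derivative_mul, derivative_pow]
        simp [eval_add, eval_mul, eval_pow, eval_sub, eval_X, eval_C]
      rw [h1] at this
      exact hbC this
    omega
  have hmem : (1 : ℂ) ∈ p.roots := by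
    rw [← Multiset.count_pos, hcount]; norm_num
  set s := p.roots.erase 1 with hs
  have hroots : p.roots = 1 ::ₘ s := (Multiset.cons_erase hmem).symm
  have hnotin : ∀ a ∈ s, a ≠ (1:ℂ) := by
    intro a hain
    have : s.count 1 = 0 := by
      rw [hs, Multiset.count_erase_self, hcount]
    intro hae
    subst hae
    rw [Multiset.count_eq_zero] at this
    exact this hain
  have hfilter : p.roots.filter (· ≠ (1:ℂ)) = s := by
    rw [hroots, Multiset.filter_cons_of_neg _ (by simp), Multiset.filter_eq_self.mpr hnotin]
  -- factorization
  have hsplit := IsAlgClosed.splits p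
  have hfact : p = (p.roots.map fun a => X - C a).prod :=
    hsplit.eq_prod_roots_of_monic hp
  set q : Polynomial ℂ := (s.map fun a => X - C a).prod with hq
  have hpq : p = (X - C 1) * q := by
    rw [hfact, hroots, Multiset.map_cons, Multiset.prod_cons]
  have hq1 : q.eval 1 = (b : ℂ) := by
    have : (p.derivative).eval 1 = q.eval 1 := by
      rw [hpq, derivative_mul]
      simp
    rw [← this, h1]
  have hq'1 : (q.derivative).eval 1 = (h : ℂ) := by
    have hd1 : derivative p = q + (X - C 1) * derivative q := by
      rw [hpq, derivative_mul]
      simp only [derivative_sub, derivative_X, derivative_C, sub_zero, one_mul]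
    have : ((derivative (derivative p))).eval 1 = 2 * (q.derivative).eval 1 := by
      rw [hd1, derivative_add, derivative_mul]
      simp only [derivative_sub, derivative_X, derivative_C, sub_zero, one_mul,
        eval_add, eval_mul, eval_sub, eval_X, eval_C]
      ring
    rw [h2] at this
    have h2ne : (2 : ℂ) ≠ 0 := by norm_num
    exact (mul_left_cancel₀ h2ne this).symm
  have key := multiset_inv_sum_lemma s hnotin
  rw [← hq, hq1, hq'1] at key
  rw [hfilter]
  rw [show ((h / b : ℝ) : ℂ) = (h : ℂ) / (b : ℂ) by push_cast; ring, eq_div_iff hbC]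
  exact key

lemma triple_reindex (n : ℕ) (f : ℕ → ℕ → ℕ → ℝ) :
    ∑ k ∈ Finset.range (n-1), ∑ i ∈ Finset.range (k+1), ∑ j ∈ Finset.Ico (k+1) n, f i k j
      = ∑ j ∈ Finset.range n, ∑ i ∈ Finset.range j, ∑ k ∈ Finset.Ico i j, f i k j := by
  have hA : ∑ k ∈ Finset.range (n-1), ∑ i ∈ Finset.range (k+1), ∑ j ∈ Finset.Ico (k+1) n, f i k j
      = ∑ k ∈ Finset.range n, ∑ i ∈ Finset.range n, ∑ j ∈ Finset.range n,
          if i ≤ k ∧ k < j then f i k j else 0 := by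
    rw [Finset.sum_subset (Finset.range_subset_range.mpr (show n - 1 ≤ n by omega))
      (by
        intro k hk hk'
        rw [Finset.mem_range] at hk
        rw [Finset.mem_range] at hk'
        have : k + 1 = n := by omega
        rw [this]
        simp)]
    refine Finset.sum_congr rfl fun k hk => ?_
    rw [Finset.mem_range] at hk
    have h1 : ∀ i, (∑ j ∈ Finset.range n, if i ≤ k ∧ k < j then f i k j else 0)
        = if i ≤ k then ∑ j ∈ Finset.Ico (k+1) n, f i k j else 0 := by
      intro i
      by_cases hik : i ≤ k
      · rw [if_pos hik]
        rw [show (Finset.Ico (k+1) n) = (Finset.range n).filter (fun j => k < j) by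
          ext a; simp [Finset.mem_Ico, Finset.mem_filter]; omega]
        rw [Finset.sum_filter]
        refine Finset.sum_congr rfl fun j _ => ?_
        by_cases hkj : k < j
        · rw [if_pos ⟨hik, hkj⟩, if_pos hkj]
        · rw [if_neg (fun hc => hkj hc.2), if_neg hkj]
      · rw [if_neg hik]
        refine Finset.sum_eq_zero fun j _ => ?_
        rw [if_neg (fun hc => hik hc.1)]
    rw [Finset.sum_congr rfl fun i _ => h1 i]
    rw [← Finset.sum_filter]
    rw [show (Finset.range n).filter (fun i => i ≤ k) = Finset.range (k+1) by
      ext a; simp [Finset.mem_filter]; omega]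
  have hB : ∑ j ∈ Finset.range n, ∑ i ∈ Finset.range j, ∑ k ∈ Finset.Ico i j, f i k j
      = ∑ k ∈ Finset.range n, ∑ i ∈ Finset.range n, ∑ j ∈ Finset.range n,
          if i ≤ k ∧ k < j then f i k j else 0 := by
    have s1 : (∑ k ∈ Finset.range n, ∑ i ∈ Finset.range n, ∑ j ∈ Finset.range n,
          if i ≤ k ∧ k < j then f i k j else 0)
        = ∑ i ∈ Finset.range n, ∑ k ∈ Finset.range n, ∑ j ∈ Finset.range n,
          if i ≤ k ∧ k < j then f i k j else 0 := Finset.sum_comm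
    have s2 : (∑ i ∈ Finset.range n, ∑ k ∈ Finset.range n, ∑ j ∈ Finset.range n,
          if i ≤ k ∧ k < j then f i k j else 0)
        = ∑ i ∈ Finset.range n, ∑ j ∈ Finset.range n, ∑ k ∈ Finset.range n,
          if i ≤ k ∧ k < j then f i k j else 0 :=
      Finset.sum_congr rfl fun i _ => Finset.sum_comm
    have s3 : (∑ i ∈ Finset.range n, ∑ j ∈ Finset.range n, ∑ k ∈ Finset.range n,
          if i ≤ k ∧ k < j then f i k j else 0)
        = ∑ j ∈ Finset.range n, ∑ i ∈ Finset.range n, ∑ k ∈ Finset.range n,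
          if i ≤ k ∧ k < j then f i k j else 0 := Finset.sum_comm
    rw [s1, s2, s3]
    refine Finset.sum_congr rfl fun j hj => ?_
    rw [Finset.mem_range] at hj
    have h1 : ∀ i, (∑ k ∈ Finset.range n, if i ≤ k ∧ k < j then f i k j else 0)
        = ∑ k ∈ Finset.Ico i j, f i k j := by
      intro i
      rw [show (Finset.Ico i j) = (Finset.range n).filter (fun k => i ≤ k ∧ k < j) by
        ext a; simp [Finset.mem_Ico, Finset.mem_filter]; omega]
      rw [Finset.sum_filter]
    rw [Finset.sum_congr rfl fun i _ => h1 i]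
    rw [Finset.sum_subset (Finset.range_subset_range.mpr (show j ≤ n by omega))
      (by
        intro i hi hi'
        rw [Finset.mem_range] at hi hi'
        rw [show Finset.Ico i j = ∅ by ext a; simp [Finset.mem_Ico]; omega]
        simp)]
  rw [hA, ← hB]
end auxiliary
/-- Kemeny's constant of an irreducible birth-death chain equals
`∑_{k=0}^{n-2} σ_k(1-σ_k)/(λ_k π_k)` with `σ_k = ∑_{j≤k} π_j`. -/
theorem kemeny_birth_death {n : ℕ} (hn : 1 ≤ n)
    (lam mu : Fin n → ℝ)
    (hlam : ∀ i : Fin n, (i : ℕ) < n - 1 → 0 < lam i)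
    (hlamtop : ∀ i : Fin n, (i : ℕ) = n - 1 → lam i = 0)
    (hmu0 : ∀ i : Fin n, (i : ℕ) = 0 → mu i = 0)
    (hmu : ∀ i : Fin n, 0 < (i : ℕ) → 0 < mu i)
    (hdiag : ∀ i : Fin n, 0 ≤ 1 - lam i - mu i)
    (pi : Fin n → ℝ) (hpos : ∀ i, 0 < pi i) (hsum : ∑ i, pi i = 1)
    (hstat : Matrix.vecMul pi (bdP lam mu) = pi)
    (sigma : Fin n → ℝ)
    (hsigma : ∀ k, sigma k = ∑ j ∈ Finset.univ.filter (· ≤ k), pi j) :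
    kemeny (bdP lam mu)
      = ((∑ k ∈ Finset.univ.filter (fun k : Fin n => (k : ℕ) < n - 1),
          sigma k * (1 - sigma k) / (lam k * pi k) : ℝ) : ℂ) := by
  classical
  set l : ℕ → ℝ := fun i => if h : i < n then lam ⟨i, h⟩ else 0 with hldef
  set mm : ℕ → ℝ := fun i => if h : i < n then mu ⟨i, h⟩ else 0 with hmdef
  set pp : ℕ → ℝ := fun i => if h : i < n then pi ⟨i, h⟩ else 0 with hpdef
  have hlval : ∀ i : Fin n, l (i : ℕ) = lam i := fun i => by
    rw [hldef]; simp only []; rw [dif_pos i.isLt]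
  have hmval : ∀ i : Fin n, mm (i : ℕ) = mu i := fun i => by
    rw [hmdef]; simp only []; rw [dif_pos i.isLt]
  have hpval : ∀ i : Fin n, pp (i : ℕ) = pi i := fun i => by
    rw [hpdef]; simp only []; rw [dif_pos i.isLt]
  have hm0 : mm 0 = 0 := by
    rw [hmdef]; simp only []; rw [dif_pos (show 0 < n by omega)]
    exact hmu0 _ rfl
  have hltop : l (n-1) = 0 := by
    rw [hldef]; simp only []; rw [dif_pos (show n-1 < n by omega)]
    exact hlamtop _ rfl
  have hlpos : ∀ i, i < n - 1 → 0 < l i := by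
    intro i hi
    rw [hldef]; simp only []; rw [dif_pos (show i < n by omega)]
    exact hlam _ hi
  have hlnn : ∀ i, 0 ≤ l i := by
    intro i
    rw [hldef]; simp only []
    by_cases h : i < n
    · rw [dif_pos h]
      by_cases h2 : i < n - 1
      · exact le_of_lt (hlam _ h2)
      · have : i = n - 1 := by omega
        rw [hlamtop ⟨i, h⟩ this]
    · rw [dif_neg h]
  have hmpos : ∀ i, 1 ≤ i → i < n → 0 < mm i := by
    intro i h1 h2
    rw [hmdef]; simp only []; rw [dif_pos h2]
    exact hmu _ (show 0 < i by omega)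
  have hppos : ∀ i, i < n → 0 < pp i := by
    intro i h
    rw [hpdef]; simp only []; rw [dif_pos h]
    exact hpos _
  -- the characteristic matrix is tridiagonal
  have hchar : Matrix.charmatrix (bdP lam mu) = trid l mm n := by
    refine Matrix.ext fun i j => ?_
    rw [trid_apply]
    by_cases hij : i = j
    · subst hij
      rw [Matrix.charmatrix_apply_eq]
      rw [tridFun, if_neg (by omega), if_neg (by omega), if_pos rfl]
      have hbd : bdP lam mu i i = 1 - lam i - mu i := by
        rw [bdP]
        simp only [Matrix.of_apply]
        rw [if_neg (by omega), if_neg (by omega)]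
        simp
      rw [hbd, hlval, hmval]
    · rw [Matrix.charmatrix_apply_ne _ _ _ hij]
      have hijv : (i : ℕ) ≠ (j : ℕ) := fun h => hij (Fin.ext h)
      rw [bdP]
      simp only [Matrix.of_apply]
      by_cases h1 : (j : ℕ) = (i : ℕ) + 1
      · rw [if_pos h1, tridFun, if_pos h1, hlval]
      · rw [if_neg h1]
        by_cases h2 : (j : ℕ) + 1 = (i : ℕ)
        · rw [if_pos h2, tridFun, if_neg h1, if_pos h2, hmval]
        · rw [if_neg h2, if_neg (fun h : j = i => hij h.symm), tridFun, if_neg h1, if_neg h2,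
            if_neg (fun h => hijv h.symm)]
          simp
  have hev := trid_evals l mm hm0 n
  set Bn : ℝ := Bc l mm n with hBndef
  set Hn : ℝ := Hc l mm n with hHndef
  -- Gf at n collapses
  have hGfn : ∀ i, i < n → Gf l mm i n = ∏ t ∈ Finset.Ioc i (n-1), mm t := by
    intro i hi
    rw [Gf]
    rw [Finset.sum_eq_single_of_mem (n-1) (by rw [Finset.mem_Ico]; omega)
      (by
        intro a ha hne
        rw [Finset.mem_Ico] at ha
        rw [Finset.prod_eq_zero (show n-1 ∈ Finset.Ioo a n by
          rw [Finset.mem_Ioo]; omega) hltop, mul_zero])]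
    rw [show Finset.Ioo (n-1) n = ∅ by ext a; rw [Finset.mem_Ioo]; simp; omega]
    simp
  set c : ℕ → ℝ := fun i => Pl l i * ∏ t ∈ Finset.Ioc i (n-1), mm t with hcdef
  have hcval : ∀ i, c i = Pl l i * ∏ t ∈ Finset.Ioc i (n-1), mm t := fun i => rfl
  have hcpos : ∀ i, i < n → 0 < c i := by
    intro i hi
    rw [hcval]
    apply mul_pos
    · rw [Pl]
      apply Finset.prod_pos
      intro j hj
      rw [Finset.mem_range] at hj
      exact hlpos j (by omega)
    · apply Finset.prod_pos
      intro t ht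
      rw [Finset.mem_Ioc] at ht
      exact hmpos t (by omega) (by omega)
  have hBc : Bn = ∑ i ∈ Finset.range n, c i := by
    rw [hBndef, Bc]
    refine Finset.sum_congr rfl fun i hi => ?_
    rw [Finset.mem_range] at hi
    rw [hGfn i hi, hcval]
  have hBnpos : 0 < Bn := by
    rw [hBc]
    apply Finset.sum_pos
    · intro i hi
      rw [Finset.mem_range] at hi
      exact hcpos i hi
    · exact Finset.nonempty_range_iff.mpr (by omega)
  -- stationarity in ℕ form
  have hstatN : ∀ j, j < n →
      (if 1 ≤ j then pp (j-1) * l (j-1) else 0) + pp j * (1 - l j - mm j)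
        + pp (j+1) * mm (j+1) = pp j := by
    intro j hj
    have hcol := congrFun hstat ⟨j, hj⟩
    rw [Matrix.vecMul, dotProduct] at hcol
    set F : ℕ → ℝ := fun i =>
      (if i = j - 1 then (if 1 ≤ j then pp (j-1) * l (j-1) else 0) else 0)
      + (if i = j then pp j * (1 - l j - mm j) else 0)
      + (if i = j + 1 then pp (j+1) * mm (j+1) else 0) with hF
    have hjv : ((⟨j, hj⟩ : Fin n) : ℕ) = j := rfl
    have hpt : ∀ i : Fin n, pi i * bdP lam mu i ⟨j, hj⟩ = F (i : ℕ) := by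
      intro i
      rw [hF]
      simp only []
      rw [bdP]
      simp only [Matrix.of_apply, hjv]
      by_cases h1 : j = (i : ℕ) + 1
      · rw [if_pos h1, if_pos (show (i:ℕ) = j - 1 by omega), if_pos (show 1 ≤ j by omega),
          if_neg (show ¬(i:ℕ) = j by omega), if_neg (show ¬(i:ℕ) = j + 1 by omega)]
        rw [show j - 1 = (i:ℕ) by omega, hpval, hlval]
        ring
      · rw [if_neg h1]
        by_cases h2 : j + 1 = (i : ℕ)
        · rw [if_pos h2, if_neg (show ¬(i:ℕ) = j - 1 by omega),
            if_neg (show ¬(i:ℕ) = j by omega), if_pos (show (i:ℕ) = j + 1 by omega)]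
          rw [show j + 1 = (i:ℕ) from h2, hpval, hmval]
          ring
        · rw [if_neg h2]
          by_cases h3 : (⟨j, hj⟩ : Fin n) = i
          · have h3v : j = (i : ℕ) := by rw [← h3]
            rw [if_pos h3]
            rw [if_neg (show ¬(i:ℕ) = j + 1 by omega), if_pos (show (i:ℕ) = j by omega)]
            have : (if (i:ℕ) = j - 1 then (if 1 ≤ j then pp (j-1) * l (j-1) else 0) else 0)
                = 0 := by
              by_cases h4 : (i:ℕ) = j - 1
              · rw [if_pos h4, if_neg (show ¬ 1 ≤ j by omega)]
              · rw [if_neg h4]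
            rw [this, h3v, hpval, hlval, hmval]
            ring
          · have h3v : ¬ (i:ℕ) = j := fun h => h3 (Fin.ext h.symm)
            rw [if_neg h3, if_neg (show ¬(i:ℕ) = j - 1 by omega), if_neg h3v,
              if_neg (show ¬(i:ℕ) = j + 1 by omega)]
            ring
    have hsum1 : (∑ i : Fin n, pi i * bdP lam mu i ⟨j, hj⟩) = ∑ i ∈ Finset.range n, F i := by
      rw [Finset.sum_congr rfl fun i _ => hpt i]
      exact Fin.sum_univ_eq_sum_range F n
    rw [hsum1] at hcol
    rw [hF] at hcol
    simp only [] at hcol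
    rw [Finset.sum_add_distrib, Finset.sum_add_distrib] at hcol
    rw [Finset.sum_ite_eq' (Finset.range n) (j-1), Finset.sum_ite_eq' (Finset.range n) j,
      Finset.sum_ite_eq' (Finset.range n) (j+1)] at hcol
    rw [if_pos (Finset.mem_range.mpr (show j - 1 < n by omega)),
      if_pos (Finset.mem_range.mpr hj)] at hcol
    have h3rd : (if j + 1 ∈ Finset.range n then pp (j+1) * mm (j+1) else 0)
        = pp (j+1) * mm (j+1) := by
      by_cases hjn : j + 1 < n
      · rw [if_pos (Finset.mem_range.mpr hjn)]
      · rw [if_neg (fun hc => hjn (Finset.mem_range.mp hc))]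
        have : pp (j+1) = 0 := by rw [hpdef]; simp only []; rw [dif_neg hjn]
        rw [this, zero_mul]
    rw [h3rd] at hcol
    have hpj : pi ⟨j, hj⟩ = pp j := (hpval ⟨j, hj⟩).symm
    rw [hpj] at hcol
    exact hcol
  -- detailed balance
  have db : ∀ k, k + 1 < n → pp k * l k = pp (k+1) * mm (k+1) := by
    intro k
    induction k with
    | zero =>
      intro h
      have h0 := hstatN 0 (by omega)
      rw [if_neg (by omega)] at h0
      rw [hm0] at h0
      nlinarith [h0]
    | succ k ih =>
      intro h
      have hs := hstatN (k+1) (by omega)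
      rw [if_pos (by omega)] at hs
      simp only [Nat.add_sub_cancel] at hs
      have ihh := ih (by omega)
      nlinarith [hs, ihh]
  -- ladder for c
  have lc : ∀ i, i + 1 < n → l i * c i = mm (i+1) * c (i+1) := by
    intro i hi
    rw [hcval, hcval]
    have h1 : l i * Pl l i = Pl l (i+1) := by
      rw [Pl, Pl, Finset.prod_range_succ]; ring
    have h2 : ∏ t ∈ Finset.Ioc i (n-1), mm t
        = mm (i+1) * ∏ t ∈ Finset.Ioc (i+1) (n-1), mm t := by
      rw [show Finset.Ioc i (n-1) = insert (i+1) (Finset.Ioc (i+1) (n-1)) by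
        ext a; simp [Finset.mem_Ioc, Finset.mem_insert]; omega]
      rw [Finset.prod_insert (by simp)]
    rw [h2, ← h1]
    ring
  have hq : ∀ i, i < n → pp i * c 0 = pp 0 * c i := by
    intro i
    induction i with
    | zero => intro _; ring
    | succ i ih =>
      intro h
      have ihh := ih (by omega)
      have hdb := db i (by omega)
      have hlc := lc i (by omega)
      have hmmpos := hmpos (i+1) (by omega) h
      apply mul_left_cancel₀ (ne_of_gt hmmpos)
      calc mm (i+1) * (pp (i+1) * c 0) = (pp (i+1) * mm (i+1)) * c 0 := by ring
        _ = (pp i * l i) * c 0 := by rw [← hdb]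
        _ = l i * (pp i * c 0) := by ring
        _ = l i * (pp 0 * c i) := by rw [ihh]
        _ = pp 0 * (l i * c i) := by ring
        _ = pp 0 * (mm (i+1) * c (i+1)) := by rw [hlc]
        _ = mm (i+1) * (pp 0 * c (i+1)) := by ring
  have hpsum : ∑ i ∈ Finset.range n, pp i = 1 := by
    rw [← Fin.sum_univ_eq_sum_range pp n,
      Finset.sum_congr rfl fun (i : Fin n) _ => hpval i]
    exact hsum
  have hc0 : c 0 = pp 0 * Bn := by
    have : c 0 = ∑ i ∈ Finset.range n, pp i * c 0 := by
      rw [← Finset.sum_mul, hpsum, one_mul]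
    rw [this, Finset.sum_congr rfl (fun i hi => hq i (Finset.mem_range.mp hi)),
      ← Finset.mul_sum, ← hBc]
  have hpc : ∀ i, i < n → pp i * Bn = c i := by
    intro i hi
    have hp0 := hppos 0 (by omega)
    apply mul_left_cancel₀ (ne_of_gt hp0)
    calc pp 0 * (pp i * Bn) = pp i * (pp 0 * Bn) := by ring
      _ = pp i * c 0 := by rw [← hc0]
      _ = pp 0 * c i := hq i hi
  -- Kemeny's constant equals Hn / Bn
  have hkem : kemeny (bdP lam mu) = ((Hn / Bn : ℝ) : ℂ) := by
    have hcp : ((bdP lam mu).map (fun x : ℝ => (x : ℂ))).charpoly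
        = ((bdP lam mu).charpoly).map (Complex.ofRealHom) :=
      Matrix.charpoly_map (bdP lam mu) Complex.ofRealHom
    have hdet : (bdP lam mu).charpoly = (trid l mm n).det := by
      rw [Matrix.charpoly, hchar]
    have hmonic : ((bdP lam mu).map (fun x : ℝ => (x : ℂ))).charpoly.Monic :=
      Matrix.charpoly_monic _
    have he0 : ((bdP lam mu).map (fun x : ℝ => (x : ℂ))).charpoly.eval 1 = 0 := by
      rw [hcp, hdet, Polynomial.eval_map, Polynomial.eval₂_at_one, hev.1]
      rw [show Pl l n = 0 by
        rw [Pl]; exact Finset.prod_eq_zero (Finset.mem_range.mpr (by omega)) hltop]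
      simp
    have he1 : (Polynomial.derivative
        ((bdP lam mu).map (fun x : ℝ => (x : ℂ))).charpoly).eval 1 = ((Bn : ℝ) : ℂ) := by
      rw [hcp, hdet, Polynomial.derivative_map, Polynomial.eval_map,
        Polynomial.eval₂_at_one, hev.2.1]
      simp [Complex.ofRealHom_eq_coe]
    have he2 : (Polynomial.derivative (Polynomial.derivative
        ((bdP lam mu).map (fun x : ℝ => (x : ℂ))).charpoly)).eval 1 = 2 * ((Hn : ℝ) : ℂ) := by
      rw [hcp, hdet, Polynomial.derivative_map, Polynomial.derivative_map, Polynomial.eval_map,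
        Polynomial.eval₂_at_one, hev.2.2]
      simp [Complex.ofRealHom_eq_coe]
    exact kemeny_core _ hmonic he0 Bn Hn (ne_of_gt hBnpos) he1 he2
  -- sigma in ℕ form
  have hsig : ∀ k : Fin n, sigma k = ∑ i ∈ Finset.range ((k:ℕ)+1), pp i := by
    intro k
    rw [hsigma k, Finset.sum_filter]
    have e1 : ∀ j : Fin n, (if j ≤ k then pi j else 0)
        = (fun jj : ℕ => if jj ≤ (k:ℕ) then pp jj else 0) ((j : Fin n) : ℕ) := by
      intro j
      simp only []
      by_cases hjk : j ≤ k
      · rw [if_pos hjk, if_pos (Fin.le_def.mp hjk), hpval]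
      · rw [if_neg hjk, if_neg (fun h => hjk (Fin.le_def.mpr h))]
    rw [Finset.sum_congr rfl fun j _ => e1 j,
      Fin.sum_univ_eq_sum_range (fun jj => if jj ≤ (k:ℕ) then pp jj else 0) n,
      ← Finset.sum_filter,
      show (Finset.range n).filter (fun i => i ≤ (k:ℕ)) = Finset.range ((k:ℕ)+1) by
        ext a; simp only [Finset.mem_filter, Finset.mem_range]
        have := k.isLt; omega]
  have h1sig : ∀ k : Fin n, 1 - sigma k = ∑ j ∈ Finset.Ico ((k:ℕ)+1) n, pp j := by
    intro k
    have hsplit := Finset.sum_range_add_sum_Ico pp (show (k:ℕ)+1 ≤ n from k.isLt)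
    rw [hsig k]
    rw [hpsum] at hsplit
    linarith
  -- RHS in ℕ form
  have hRHSN : (∑ k ∈ Finset.univ.filter (fun k : Fin n => (k : ℕ) < n - 1),
        sigma k * (1 - sigma k) / (lam k * pi k))
      = ∑ k ∈ Finset.range (n-1),
          (∑ i ∈ Finset.range (k+1), pp i) * (∑ j ∈ Finset.Ico (k+1) n, pp j)
            / (l k * pp k) := by
    rw [Finset.sum_filter]
    have e1 : ∀ kk : Fin n,
        (if (kk:ℕ) < n - 1 then sigma kk * (1 - sigma kk) / (lam kk * pi kk) else 0)
        = (fun k : ℕ => if k < n - 1 then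
            (∑ i ∈ Finset.range (k+1), pp i) * (∑ j ∈ Finset.Ico (k+1) n, pp j)
              / (l k * pp k) else 0) ((kk : Fin n) : ℕ) := by
      intro kk
      simp only []
      by_cases hk : (kk:ℕ) < n - 1
      · rw [if_pos hk, if_pos hk, h1sig kk, hsig kk, hlval, hpval]
      · rw [if_neg hk, if_neg hk]
    rw [Finset.sum_congr rfl fun kk _ => e1 kk,
      Fin.sum_univ_eq_sum_range (fun k : ℕ => if k < n - 1 then
        (∑ i ∈ Finset.range (k+1), pp i) * (∑ j ∈ Finset.Ico (k+1) n, pp j)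
          / (l k * pp k) else 0) n, ← Finset.sum_filter,
      show (Finset.range n).filter (fun k => k < n-1) = Finset.range (n-1) by
        ext a; simp only [Finset.mem_filter, Finset.mem_range]; omega]
  -- the core real identity
  have hcore : Hn / Bn = ∑ k ∈ Finset.range (n-1),
      (∑ i ∈ Finset.range (k+1), pp i) * (∑ j ∈ Finset.Ico (k+1) n, pp j) / (l k * pp k) := by
    have hsummand : ∀ k, k < n - 1 →
        (∑ i ∈ Finset.range (k+1), pp i) * (∑ j ∈ Finset.Ico (k+1) n, pp j) / (l k * pp k)
          = (∑ i ∈ Finset.range (k+1), ∑ j ∈ Finset.Ico (k+1) n,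
              c i * c j / (l k * c k)) / Bn := by
      intro k hk
      rw [Finset.sum_mul, Finset.sum_div, Finset.sum_div]
      refine Finset.sum_congr rfl fun i hi => ?_
      rw [Finset.mem_range] at hi
      rw [Finset.mul_sum, Finset.sum_div, Finset.sum_div]
      refine Finset.sum_congr rfl fun j hj => ?_
      rw [Finset.mem_Ico] at hj
      have hin : i < n := by omega
      have hjn : j < n := hj.2
      have hkn : k < n := by omega
      have hlk := hlpos k hk
      have hck := hcpos k hkn
      have hpk := hppos k hkn
      rw [div_div, div_eq_div_iff (by positivity) (by positivity),
        ← hpc i hin, ← hpc j hjn, ← hpc k hkn]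
      ring
    rw [Finset.sum_congr rfl (fun k hk => hsummand k (Finset.mem_range.mp hk)),
      ← Finset.sum_div]
    congr 1
    rw [triple_reindex n (fun i k j => c i * c j / (l k * c k))]
    rw [hHndef, Hc]
    refine Finset.sum_congr rfl fun j hj => ?_
    rw [Finset.mem_range] at hj
    refine Finset.sum_congr rfl fun i hi => ?_
    rw [Finset.mem_range] at hi
    have hterm : ∀ k, i ≤ k → k < j →
        c i * c j / (l k * c k)
          = Pl l i * ((∏ t ∈ Finset.Ioc i k, mm t) * ∏ t ∈ Finset.Ioo k j, l t)
              * ∏ t ∈ Finset.Ioc j (n-1), mm t := by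
      intro k hik hkj
      have hkn1 : k < n - 1 := by omega
      have hlkck : l k * c k ≠ 0 :=
        ne_of_gt (mul_pos (hlpos k hkn1) (hcpos k (by omega)))
      rw [div_eq_iff hlkck, hcval i, hcval j, hcval k]
      have hsplit1 : ∏ t ∈ Finset.Ioc i (n-1), mm t
          = (∏ t ∈ Finset.Ioc i k, mm t) * ∏ t ∈ Finset.Ioc k (n-1), mm t :=
        (Finset.prod_Ioc_consecutive mm hik (by omega)).symm
      have hsplit2 : Pl l j = Pl l k * l k * ∏ t ∈ Finset.Ioo k j, l t := by
        rw [Pl, Pl, ← Finset.prod_range_mul_prod_Ico l (show k+1 ≤ j by omega),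
          Finset.prod_range_succ,
          show Finset.Ico (k+1) j = Finset.Ioo k j by
            ext a; simp only [Finset.mem_Ico, Finset.mem_Ioo]; omega]
      rw [hsplit1, hsplit2]
      ring
    rw [Finset.sum_congr rfl
      (fun k hk => hterm k (Finset.mem_Ico.mp hk).1 (Finset.mem_Ico.mp hk).2)]
    rw [hGfn j hj, Gf, Finset.mul_sum, Finset.sum_mul]
  rw [hkem, hRHSN, ← hcore]
end

section
/- Let A_n(α,β) be the n×n tridiagonal adjacency matrix with 1 on the sub- and super-diagonals, α in position (1,1), β in position (n,n), and zeros elsewhere on the diagonal (α, β ≥ 0). Then Kemeny's constant of the random walk on the corresponding one-path graph equals (n-1)·((2/3)n² + n(α + β - 4/3) + αβ - α - β + 1)/(2n + α + β - 2). -/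
open Matrix Polynomial

/-- Adjacency matrix `A_n(α,β)` of the path on `n` vertices with loops of
weight `α` at the first vertex and `β` at the last vertex. -/
noncomputable def pathLoopA (n : ℕ) (a b : ℝ) : Matrix (Fin n) (Fin n) ℝ :=
  Matrix.of fun i j =>
    (if (i : ℕ) + 1 = (j : ℕ) ∨ (j : ℕ) + 1 = (i : ℕ) then 1 else 0)
    + (if i = j ∧ (i : ℕ) = 0 then a else 0)
    + (if i = j ∧ (i : ℕ) = n - 1 then b else 0)

noncomputable def adiag (n : ℕ) (a b : ℝ) (j : ℕ) : ℝ :=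
  (if j = 0 then a else 0) + (if j = n - 1 then b else 0)

noncomputable def dnat (n : ℕ) (a b : ℝ) (j : ℕ) : ℝ :=
  adiag n a b j + (if 0 < j then 1 else 0) + (if j + 1 < n then 1 else 0)

section facts
variable {n : ℕ} (a b : ℝ)

lemma pathLoopA_diag (i : Fin n) : pathLoopA n a b i i = adiag n a b i := by
  simp only [pathLoopA, adiag, Matrix.of_apply]
  have : ¬((i:ℕ) + 1 = (i:ℕ) ∨ (i:ℕ) + 1 = (i:ℕ)) := by omega
  rw [if_neg this]
  simp

lemma pathLoopA_offdiag {i j : Fin n} (h : (i:ℕ) ≠ j) :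
    pathLoopA n a b i j = if (i : ℕ) + 1 = (j : ℕ) ∨ (j : ℕ) + 1 = (i : ℕ) then 1 else 0 := by
  have : ¬ (i = j) := fun hh => h (by rw [hh])
  simp [pathLoopA, this]

lemma pathLoopA_near {i j : Fin n} (h : (i:ℕ) + 1 = (j:ℕ) ∨ (j:ℕ) + 1 = (i:ℕ)) :
    pathLoopA n a b i j = 1 := by
  rw [pathLoopA_offdiag a b (by omega), if_pos h]

lemma pathLoopA_far {i j : Fin n} (h : (i:ℕ) ≠ j) (h1 : (i:ℕ) + 1 ≠ j) (h2 : (j:ℕ) + 1 ≠ i) :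
    pathLoopA n a b i j = 0 := by
  rw [pathLoopA_offdiag a b h, if_neg (by tauto)]

lemma rowsum_eq (i : Fin n) :
    (pathLoopA n a b).mulVec (fun _ => (1:ℝ)) i = dnat n a b i := by
  unfold Matrix.mulVec dotProduct
  simp only [mul_one]
  have expand : ∀ j : Fin n, pathLoopA n a b i j =
      (if (i:ℕ) + 1 = (j:ℕ) then 1 else 0) + (if (j:ℕ) + 1 = (i:ℕ) then 1 else 0)
      + ((if i = j ∧ (i:ℕ) = 0 then a else 0) + (if i = j ∧ (i:ℕ) = n - 1 then b else 0)) := by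
    intro j
    simp only [pathLoopA, Matrix.of_apply]
    by_cases h1 : (i:ℕ) + 1 = (j:ℕ) <;> by_cases h2 : (j:ℕ) + 1 = (i:ℕ)
    · exfalso; omega
    all_goals simp [h1, h2] <;> ring
  rw [Finset.sum_congr rfl (fun j _ => expand j)]
  rw [Finset.sum_add_distrib, Finset.sum_add_distrib, Finset.sum_add_distrib]
  have s1 : (∑ j : Fin n, if (i:ℕ) + 1 = (j:ℕ) then (1:ℝ) else 0)
      = if (i:ℕ) + 1 < n then 1 else 0 := by
    by_cases h : (i:ℕ) + 1 < n
    · rw [if_pos h, Finset.sum_eq_single (⟨(i:ℕ)+1, h⟩ : Fin n)]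
      · simp
      · intro j _ hj
        have : ¬((i:ℕ) + 1 = (j:ℕ)) := fun hc => hj (Fin.ext hc.symm)
        rw [if_neg this]
      · simp
    · rw [if_neg h, Finset.sum_eq_zero]
      intro j _
      have : ¬((i:ℕ) + 1 = (j:ℕ)) := fun hc => h (hc ▸ j.2)
      rw [if_neg this]
  have s2 : (∑ j : Fin n, if (j:ℕ) + 1 = (i:ℕ) then (1:ℝ) else 0)
      = if 0 < (i:ℕ) then 1 else 0 := by
    by_cases h : 0 < (i:ℕ)
    · rw [if_pos h, Finset.sum_eq_single (⟨(i:ℕ)-1, by omega⟩ : Fin n)]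
      · rw [if_pos (by simp; omega)]
      · intro j _ hj
        have : ¬((j:ℕ) + 1 = (i:ℕ)) := by
          intro hc; apply hj; apply Fin.ext; simp; omega
        rw [if_neg this]
      · simp
    · rw [if_neg h, Finset.sum_eq_zero]
      intro j _
      rw [if_neg (by omega)]
  have s3 : (∑ j : Fin n, if i = j ∧ (i:ℕ) = 0 then a else 0) = if (i:ℕ) = 0 then a else 0 := by
    rw [Finset.sum_eq_single i]
    · simp
    · intro j _ hj
      have : ¬(i = j ∧ (i:ℕ) = 0) := fun hc => hj hc.1.symm
      rw [if_neg this]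
    · simp
  have s4 : (∑ j : Fin n, if i = j ∧ (i:ℕ) = n - 1 then b else 0)
      = if (i:ℕ) = n - 1 then b else 0 := by
    rw [Finset.sum_eq_single i]
    · simp
    · intro j _ hj
      have : ¬(i = j ∧ (i:ℕ) = n - 1) := fun hc => hj hc.1.symm
      rw [if_neg this]
    · simp
  rw [s1, s2, s3, s4]
  unfold dnat adiag
  ring

end facts

noncomputable def cpoly (n : ℕ) (a b : ℝ) (j : ℕ) : Polynomial ℝ :=
  C (dnat n a b j) * X - C (adiag n a b j)

noncomputable def detm (n : ℕ) (a b : ℝ) : ℕ → Polynomial ℝ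
  | 0 => 1
  | 1 => cpoly n a b 0
  | (k+2) => cpoly n a b (k+1) * detm n a b (k+1) - detm n a b k

noncomputable def Tmat (n : ℕ) (a b : ℝ) : Matrix (Fin n) (Fin n) (Polynomial ℝ) :=
  Matrix.of fun i j =>
    (if i = j then C (dnat n a b i) * X else 0) - C (pathLoopA n a b i j)

section tmat
variable {n : ℕ} (a b : ℝ)

lemma Tmat_diag (i : Fin n) : Tmat n a b i i = cpoly n a b i := by
  simp [Tmat, cpoly, pathLoopA_diag]

lemma Tmat_near {i j : Fin n} (h : (i:ℕ) + 1 = (j:ℕ) ∨ (j:ℕ) + 1 = (i:ℕ)) :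
    Tmat n a b i j = -1 := by
  have hne : ¬(i = j) := by intro hh; subst hh; omega
  simp [Tmat, hne, pathLoopA_near a b h]

lemma Tmat_far {i j : Fin n} (h : (i:ℕ) ≠ j) (h1 : (i:ℕ) + 1 ≠ j) (h2 : (j:ℕ) + 1 ≠ i) :
    Tmat n a b i j = 0 := by
  have hne : ¬(i = j) := by intro hh; subst hh; omega
  simp [Tmat, hne, pathLoopA_far a b h h1 h2]

/-- Any submatrix given by coercion-preserving index maps is the leading principal minor. -/
lemma submatrix_coe {m : ℕ} (hm : m ≤ n) (f g : Fin m → Fin n)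
    (hf : ∀ i, ((f i) : ℕ) = i) (hg : ∀ j, ((g j) : ℕ) = j) :
    (Tmat n a b).submatrix f g = (Tmat n a b).submatrix (Fin.castLE hm) (Fin.castLE hm) := by
  have hf' : f = Fin.castLE hm := funext fun i => Fin.ext (by simp [hf])
  have hg' : g = Fin.castLE hm := funext fun j => Fin.ext (by simp [hg])
  rw [hf', hg']

lemma det_Tmat_sub : ∀ (k : ℕ) (hk : k ≤ n),
    ((Tmat n a b).submatrix (Fin.castLE hk) (Fin.castLE hk)).det = detm n a b k := by
  intro k
  induction k using Nat.strong_induction_on with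
  | _ k ih =>
  match k with
  | 0 => intro hk; simp [detm, Matrix.det_fin_zero]
  | 1 =>
    intro hk
    rw [Matrix.det_fin_one]
    simp only [Matrix.submatrix_apply]
    rw [show ((Fin.castLE hk (0 : Fin 1))) = (⟨0, by omega⟩ : Fin n) from rfl]
    rw [Tmat_diag]
    rfl
  | (k+2) =>
    intro hk
    set M := (Tmat n a b).submatrix (Fin.castLE hk) (Fin.castLE hk) with hM
    rw [Matrix.det_succ_row M (Fin.last (k+1))]
    rw [Fin.sum_univ_castSucc, Fin.sum_univ_castSucc]
    -- the generic term over Fin k vanishes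
    have hzero : ∀ j : Fin k,
        ((-1:Polynomial ℝ)) ^ (((Fin.last (k+1)):ℕ) + ((j.castSucc.castSucc : Fin (k+2)):ℕ)) *
          M (Fin.last (k+1)) j.castSucc.castSucc *
          (M.submatrix (Fin.last (k+1)).succAbove (j.castSucc.castSucc).succAbove).det = 0 := by
      intro j
      have : M (Fin.last (k+1)) j.castSucc.castSucc = 0 := by
        rw [hM, Matrix.submatrix_apply]
        apply Tmat_far <;> simp [Fin.last] <;> omega
      rw [this, mul_zero, zero_mul]
    rw [Finset.sum_eq_zero (fun j _ => hzero j), zero_add]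
    -- entry at column k
    have hentry1 : M (Fin.last (k+1)) ((Fin.last k).castSucc) = -1 := by
      rw [hM, Matrix.submatrix_apply]
      apply Tmat_near
      right; simp [Fin.last]
    -- entry at column k+1 (diagonal)
    have hentry2 : M (Fin.last (k+1)) (Fin.last (k+1)) = cpoly n a b (k+1) := by
      rw [hM, Matrix.submatrix_apply]
      rw [show (Fin.castLE hk (Fin.last (k+1))) = (⟨k+1, by omega⟩ : Fin n) from rfl]
      rw [Tmat_diag]
    -- minor at (last,last) is the (k+1) principal minor
    have hminor1 : (M.submatrix (Fin.last (k+1)).succAbove (Fin.last (k+1)).succAbove).det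
        = detm n a b (k+1) := by
      rw [hM, Matrix.submatrix_submatrix]
      rw [submatrix_coe a b (by omega : k+1 ≤ n) _ _
        (fun i => by simp [Fin.succAbove_last]) (fun j => by simp [Fin.succAbove_last])]
      exact ih (k+1) (by omega) (by omega)
    -- minor at (last, castSucc last): expand along its last column
    have hminor2 : (M.submatrix (Fin.last (k+1)).succAbove ((Fin.last k).castSucc).succAbove).det
        = - detm n a b k := by
      set N := M.submatrix (Fin.last (k+1)).succAbove ((Fin.last k).castSucc).succAbove with hN
      rw [Matrix.det_succ_column N (Fin.last k)]
      rw [Fin.sum_univ_castSucc]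
      have hcoe : ∀ i : Fin (k+1), ((((Fin.last (k+1)).succAbove i) : Fin (k+2)) : ℕ) = i := by
        intro i; simp [Fin.succAbove_last]
      have hcol : (((((Fin.last k).castSucc).succAbove (Fin.last k)) : Fin (k+2)) : ℕ) = k + 1 := by
        simp [Fin.succAbove, Fin.lt_def]
      have hz2 : ∀ i : Fin k, ((-1:Polynomial ℝ)) ^ (((i.castSucc : Fin (k+1)):ℕ) + ((Fin.last k):ℕ)) *
          N i.castSucc (Fin.last k) *
          (N.submatrix (i.castSucc).succAbove (Fin.last k).succAbove).det = 0 := by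
        intro i
        have : N i.castSucc (Fin.last k) = 0 := by
          rw [hN, Matrix.submatrix_apply, hM, Matrix.submatrix_apply]
          apply Tmat_far <;>
            simp only [Fin.coe_castLE, hcoe, hcol, Fin.coe_castSucc] <;> omega
        rw [this, mul_zero, zero_mul]
      rw [Finset.sum_eq_zero (fun i _ => hz2 i), zero_add]
      have hentry3 : N (Fin.last k) (Fin.last k) = -1 := by
        rw [hN, Matrix.submatrix_apply, hM, Matrix.submatrix_apply]
        apply Tmat_near
        left
        simp only [Fin.coe_castLE, hcoe, hcol, Fin.coe_castSucc]
        simp [Fin.last]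
      have hminor3 : (N.submatrix (Fin.last k).succAbove (Fin.last k).succAbove).det
          = detm n a b k := by
        rw [hN, Matrix.submatrix_submatrix, Matrix.submatrix_submatrix]
        rw [submatrix_coe a b (by omega : k ≤ n) _ _
          (fun i => by
            simp only [Function.comp_apply, Fin.coe_castLE, hcoe]
            simp [Fin.succAbove_last])
          (fun j => by
            simp only [Function.comp_apply, Fin.coe_castLE]
            rw [show ((Fin.last k).castSucc).succAbove ((Fin.last k).succAbove j)
              = ((Fin.last k).castSucc).succAbove j.castSucc from by rw [Fin.succAbove_last]]
            simp [Fin.succAbove, Fin.lt_def])]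
        exact ih k (by omega) (by omega)
      rw [hentry3, hminor3]
      simp only [Fin.val_last]
      rw [show k + k = 2*k from by omega, pow_mul]
      simp
    rw [hentry1, hentry2, hminor1, hminor2]
    show _ = detm n a b (k+2)
    rw [show detm n a b (k+2) = cpoly n a b (k+1) * detm n a b (k+1) - detm n a b k from rfl]
    simp only [Fin.coe_castSucc, Fin.val_last]
    have h2 : ∀ j:ℕ, ((-1:Polynomial ℝ))^(2*j) = 1 := fun j => by rw [pow_mul]; simp
    rw [show k+1+k = 2*k+1 from by omega, show k+1+(k+1) = 2*(k+1) from by omega,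
      pow_succ, h2 k, h2 (k+1)]
    ring
end tmat

section evalrec
variable (n : ℕ) (a b : ℝ)

lemma cpoly_eval (j : ℕ) : (cpoly n a b j).eval 1 = dnat n a b j - adiag n a b j := by
  simp [cpoly]

lemma cpoly_deriv (j : ℕ) : (cpoly n a b j).derivative = C (dnat n a b j) := by
  simp [cpoly]

lemma adiag_mid {j : ℕ} (hj : j ≠ 0) (hj2 : j + 1 < n) : adiag n a b j = 0 := by
  unfold adiag
  rw [if_neg hj, if_neg (by omega)]
  simp

lemma dnat_mid {j : ℕ} (hj : j ≠ 0) (hj2 : j + 1 < n) : dnat n a b j = 2 := by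
  unfold dnat
  rw [adiag_mid n a b hj hj2, if_pos (by omega), if_pos hj2]
  norm_num

lemma adiag_zero (hn : 2 ≤ n) : adiag n a b 0 = a := by
  unfold adiag
  rw [if_pos rfl, if_neg (by omega)]
  simp

lemma dnat_zero (hn : 2 ≤ n) : dnat n a b 0 = 1 + a := by
  unfold dnat
  rw [adiag_zero n a b hn, if_neg (by omega), if_pos (by omega)]
  ring

lemma adiag_last (hn : 2 ≤ n) : adiag n a b (n-1) = b := by
  unfold adiag
  rw [if_neg (by omega), if_pos rfl]
  simp

lemma dnat_last (hn : 2 ≤ n) : dnat n a b (n-1) = 1 + b := by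
  unfold dnat
  rw [adiag_last n a b hn, if_pos (by omega), if_neg (by omega)]
  ring

lemma eval_detm (hn : 2 ≤ n) : ∀ k, k ≤ n - 1 →
    (detm n a b k).eval 1 = 1 ∧
    ((detm n a b k).derivative).eval 1 = (k:ℝ)^2 + a*(k:ℝ) ∧
    (((detm n a b k).derivative).derivative).eval 1
      = (k:ℝ)*((k:ℝ)^2-1)*((k:ℝ)+2*a)/3 := by
  intro k
  induction k using Nat.strong_induction_on with
  | _ k ih =>
  match k with
  | 0 => intro _; simp [detm]
  | 1 =>
    intro _
    rw [show detm n a b 1 = cpoly n a b 0 from rfl]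
    rw [cpoly_deriv]
    refine ⟨?_, ?_, ?_⟩
    · rw [cpoly_eval, dnat_zero n a b hn, adiag_zero n a b hn]; norm_num
    · rw [eval_C, dnat_zero n a b hn]; norm_num
    · simp
  | (k+2) =>
    intro hk
    obtain ⟨g1, u1, v1⟩ := ih (k+1) (by omega) (by omega)
    obtain ⟨g0, u0, v0⟩ := ih k (by omega) (by omega)
    have hdn : dnat n a b (k+1) = 2 := dnat_mid n a b (by omega) (by omega)
    have had : adiag n a b (k+1) = 0 := adiag_mid n a b (by omega) (by omega)
    have hceval : (cpoly n a b (k+1)).eval 1 = 2 := by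
      rw [cpoly_eval, hdn, had]; ring
    rw [show detm n a b (k+2) = cpoly n a b (k+1) * detm n a b (k+1) - detm n a b k from rfl]
    simp only [derivative_sub, derivative_mul, cpoly_deriv, derivative_add, derivative_C,
      eval_sub, eval_add, eval_mul, eval_C, zero_mul, add_zero, zero_add]
    rw [hceval, hdn, g1, u1, v1, u0, v0, g0]
    refine ⟨by ring, by push_cast; ring, by push_cast; field_simp; ring⟩

end evalrec

lemma aux_sum_inv_mul (s : Multiset ℂ) (hs : ∀ μ ∈ s, μ ≠ 1) :
    (s.map fun μ => (1 - μ)⁻¹).sum * ((s.map fun μ => X - C μ).prod.eval 1)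
      = ((s.map fun μ => X - C μ).prod.derivative.eval 1) := by
  induction s using Multiset.induction with
  | empty => simp
  | cons μ s ih =>
    have hμ : (1 : ℂ) - μ ≠ 0 := sub_ne_zero.mpr (Ne.symm (hs μ (Multiset.mem_cons_self _ _)))
    have ih' := ih (fun x hx => hs x (Multiset.mem_cons_of_mem hx))
    simp only [Multiset.map_cons, Multiset.sum_cons, Multiset.prod_cons, derivative_mul,
      eval_add, eval_mul, eval_sub, eval_X, eval_C, derivative_sub, derivative_X, derivative_C,
      sub_zero, eval_one, one_mul]
    field_simp
    simp only [one_div]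
    linear_combination (1 - μ) * ih'

lemma aux_eval_prod_ne_zero (s : Multiset ℂ) (hs : ∀ μ ∈ s, μ ≠ 1) :
    (s.map fun μ => X - C μ).prod.eval 1 ≠ 0 := by
  induction s using Multiset.induction with
  | empty => simp
  | cons μ s ih =>
    simp only [Multiset.map_cons, Multiset.prod_cons, eval_mul, eval_sub, eval_X, eval_C]
    exact mul_ne_zero (sub_ne_zero.mpr (Ne.symm (hs μ (Multiset.mem_cons_self _ _))))
      (ih (fun x hx => hs x (Multiset.mem_cons_of_mem hx)))

/-- Main roots lemma. -/
lemma kemeny_eq_deriv (p : Polynomial ℂ) (hm : p.Monic) (h0 : p.eval 1 = 0)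
    (h1 : p.derivative.eval 1 ≠ 0) :
    (((p.roots.filter (· ≠ 1)).map (fun μ => (1 - μ)⁻¹)).sum)
      = p.derivative.derivative.eval 1 / (2 * p.derivative.eval 1) := by
  have hp0 : p ≠ 0 := hm.ne_zero
  have hroot : p.IsRoot 1 := h0
  set q := p / (X - C 1) with hq
  have hfac : (X - C 1) * q = p := (mul_div_eq_iff_isRoot).mpr hroot
  have hqm : q.Monic := by
    have := hm
    rw [← hfac] at this
    exact (monic_X_sub_C 1).of_mul_monic_left this
  have hd : p.derivative = q + (X - C 1) * q.derivative := by
    rw [← hfac, derivative_mul, derivative_sub, derivative_X, derivative_C, sub_zero, one_mul]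
  have hq1 : q.eval 1 ≠ 0 := by
    intro h
    apply h1
    rw [hd]; simp [h]
  have hdd : p.derivative.derivative.eval 1 = 2 * q.derivative.eval 1 := by
    rw [hd, derivative_add, derivative_mul, derivative_sub, derivative_X, derivative_C, sub_zero,
      one_mul]
    simp
    ring
  have hd1 : p.derivative.eval 1 = q.eval 1 := by rw [hd]; simp
  have hroots : p.roots = 1 ::ₘ q.roots := by
    rw [← hfac, roots_mul (hfac ▸ hp0), roots_X_sub_C]
    rfl
  have hq1root : (1 : ℂ) ∉ q.roots := by
    intro h
    exact hq1 (isRoot_of_mem_roots h)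
  have hqs : ∀ μ ∈ q.roots, μ ≠ 1 := fun μ hμ h => hq1root (h ▸ hμ)
  have hfilter : p.roots.filter (· ≠ 1) = q.roots := by
    rw [hroots]
    rw [Multiset.filter_cons]
    simp only [ne_eq, not_true_eq_false, if_neg]
    rw [Multiset.filter_eq_self.mpr hqs]
    simp
  rw [hfilter]
  have hsplit : q = (q.roots.map fun μ => X - C μ).prod :=
    ((IsAlgClosed.splits q).eq_prod_roots_of_monic hqm)
  have key := aux_sum_inv_mul q.roots hqs
  rw [← hsplit] at key
  have hne := aux_eval_prod_ne_zero q.roots hqs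
  rw [← hsplit] at hne
  rw [hdd, hd1]
  field_simp
  simp only [one_div]
  linear_combination key

set_option maxHeartbeats 1000000 in
/-- Kemeny's constant of the random walk on the one-path graph
with adjacency matrix `A_n(α,β)` equals
`(n-1)·((2/3)n² + n(α+β-4/3) + αβ - α - β + 1)/(2n + α + β - 2)`. -/
theorem kemeny_one_path {n : ℕ} (hn : 2 ≤ n) (a b : ℝ)
    (ha : 0 ≤ a) (hb : 0 ≤ b)
    (P : Matrix (Fin n) (Fin n) ℝ)
    (hP : P = (Matrix.diagonal ((pathLoopA n a b).mulVec (fun _ => 1)))⁻¹ *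
      pathLoopA n a b) :
    kemeny P = ((((n : ℝ) - 1) *
        ((2 / 3) * n ^ 2 + n * (a + b - 4 / 3) + a * b - a - b + 1)
      / (2 * n + a + b - 2) : ℝ) : ℂ) := by
  obtain ⟨m, rfl⟩ : ∃ m, n = m + 2 := ⟨n - 2, by omega⟩
  set dv := (pathLoopA (m+2) a b).mulVec (fun _ => (1:ℝ)) with hdvdef
  have hdv : ∀ i : Fin (m+2), dv i = dnat (m+2) a b i := fun i => rowsum_eq a b i
  have hpos : ∀ i : Fin (m+2), 0 < dnat (m+2) a b (i : ℕ) := by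
    intro i
    have hi2 := i.2
    unfold dnat adiag
    split_ifs <;> first | linarith | (exfalso; omega)
  have hD : (∏ i, dv i) ≠ 0 := by
    apply Finset.prod_ne_zero_iff.mpr
    intro i _
    rw [hdv i]
    exact ne_of_gt (hpos i)
  have hunit : IsUnit (Matrix.diagonal dv).det := by
    rw [Matrix.det_diagonal]
    exact isUnit_iff_ne_zero.mpr hD
  have hDP : Matrix.diagonal dv * P = pathLoopA (m+2) a b := by
    rw [hP, ← mul_assoc, Matrix.mul_nonsing_inv _ hunit, one_mul]
  have hent : ∀ i j, dv i * P i j = pathLoopA (m+2) a b i j := by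
    intro i j
    rw [← hDP, Matrix.diagonal_mul]
  have hC : (Matrix.diagonal dv).map C * charmatrix P = Tmat (m+2) a b := by
    rw [Matrix.diagonal_map (map_zero C)]
    refine Matrix.ext (fun i j => ?_)
    rw [Matrix.diagonal_mul]
    by_cases hij : i = j
    · subst hij
      rw [charmatrix_apply_eq, mul_sub, ← C_mul, hent]
      simp only [Tmat, Matrix.of_apply]
      simp [hdv i]
    · rw [charmatrix_apply_ne _ _ _ hij, mul_neg, ← C_mul, hent]
      simp only [Tmat, Matrix.of_apply]
      rw [if_neg hij, zero_sub]
  have hdetT : (Tmat (m+2) a b).det = detm (m+2) a b (m+2) := by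
    have := det_Tmat_sub a b (m+2) (le_refl (m+2))
    rwa [show Fin.castLE (le_refl (m+2)) = id from funext fun i => Fin.ext (by simp),
      Matrix.submatrix_id_id] at this
  have hdet : C (∏ i, dv i) * Matrix.charpoly P = detm (m+2) a b (m+2) := by
    have h := congrArg Matrix.det hC
    rw [Matrix.det_mul, Matrix.diagonal_map (map_zero C), Matrix.det_diagonal, hdetT] at h
    rw [← h, map_prod]
    rfl
  -- evaluations of detm at N
  obtain ⟨g1, u1, v1⟩ := eval_detm (m+2) a b (by omega) (m+1) (by omega)
  obtain ⟨g0, u0, v0⟩ := eval_detm (m+2) a b (by omega) m (by omega)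
  have hcN : cpoly (m+2) a b (m+1) = C (1 + b) * X - C b := by
    have h1 : dnat (m+2) a b (m+1) = 1 + b := dnat_last (m+2) a b (by omega)
    have h2 : adiag (m+2) a b (m+1) = b := adiag_last (m+2) a b (by omega)
    rw [show cpoly (m+2) a b (m+1)
      = C (dnat (m+2) a b (m+1)) * X - C (adiag (m+2) a b (m+1)) from rfl, h1, h2]
  have hdetmN : detm (m+2) a b (m+2) = cpoly (m+2) a b (m+1) * detm (m+2) a b (m+1) - detm (m+2) a b m := rfl
  have hG : (detm (m+2) a b (m+2)).eval 1 = 0 := by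
    rw [hdetmN, hcN]
    simp only [eval_sub, eval_mul, eval_add, eval_C, eval_X, mul_one]
    rw [g1, g0]; ring
  have hd1 : derivative (detm (m+2) a b (m+2))
      = C (1+b) * detm (m+2) a b (m+1)
        + (C (1+b) * X - C b) * derivative (detm (m+2) a b (m+1))
        - derivative (detm (m+2) a b m) := by
    rw [hdetmN, hcN]
    simp only [derivative_sub, derivative_mul, derivative_C_mul, derivative_X, derivative_C,
      mul_one, sub_zero, zero_mul, zero_add, add_zero]
  have hd2 : derivative (derivative (detm (m+2) a b (m+2)))
      = C (1+b) * derivative (detm (m+2) a b (m+1))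
        + (C (1+b) * derivative (detm (m+2) a b (m+1))
          + (C (1+b) * X - C b) * derivative (derivative (detm (m+2) a b (m+1))))
        - derivative (derivative (detm (m+2) a b m)) := by
    rw [hd1]
    simp only [derivative_sub, derivative_add, derivative_mul, derivative_C_mul, derivative_X,
      derivative_C]
    ring
  have hU : ((detm (m+2) a b (m+2)).derivative).eval 1
      = (1+b) + ((m+1:ℝ)^2 + a*(m+1)) - ((m:ℝ)^2 + a*m) := by
    rw [hd1]
    simp only [eval_sub, eval_add, eval_mul, eval_C, eval_X, mul_one]
    rw [g1, u1, u0]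
    push_cast; ring
  have hV : (((detm (m+2) a b (m+2)).derivative).derivative).eval 1
      = 2*(1+b)*((m+1:ℝ)^2 + a*(m+1))
        + (m+1:ℝ)*((m+1:ℝ)^2-1)*((m+1:ℝ)+2*a)/3 - (m:ℝ)*((m:ℝ)^2-1)*((m:ℝ)+2*a)/3 := by
    rw [hd2]
    simp only [eval_sub, eval_add, eval_mul, eval_C, eval_X, mul_one]
    rw [u1, v1, v0]
    push_cast; ring
  -- transfer to charpoly values
  set p := Matrix.charpoly P with hp
  set D := (∏ i, dv i) with hDdef
  have hUval : D * (p.derivative.eval 1)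
      = (1+b) + ((m+1:ℝ)^2 + a*(m+1)) - ((m:ℝ)^2 + a*m) := by
    rw [← hU, ← hdet, derivative_C_mul]
    simp
  have hGval : p.eval 1 = 0 := by
    have : D * p.eval 1 = 0 := by
      rw [← hG, ← hdet]; simp
    rcases mul_eq_zero.mp this with h | h
    · exact absurd h hD
    · exact h
  have hVval : D * ((p.derivative.derivative).eval 1)
      = 2*(1+b)*((m+1:ℝ)^2 + a*(m+1))
        + (m+1:ℝ)*((m+1:ℝ)^2-1)*((m+1:ℝ)+2*a)/3 - (m:ℝ)*((m:ℝ)^2-1)*((m:ℝ)+2*a)/3 := by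
    rw [← hV, ← hdet, derivative_C_mul, derivative_C_mul]
    simp
  have hUpos : (0:ℝ) < (1+b) + ((m+1:ℝ)^2 + a*(m+1)) - ((m:ℝ)^2 + a*m) := by
    have hmm : ((m:ℝ)+1)^2 - (m:ℝ)^2 = 2*m+1 := by ring
    have : (0:ℝ) ≤ (m:ℝ) := Nat.cast_nonneg m
    nlinarith
  have hp'ne : p.derivative.eval 1 ≠ 0 := by
    intro h
    rw [h, mul_zero] at hUval
    linarith
  -- complex side
  have hmap : (P.map (fun x : ℝ => (x : ℂ))).charpoly = p.map Complex.ofRealHom := by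
    rw [show (P.map (fun x : ℝ => (x:ℂ))) = P.map Complex.ofRealHom from rfl,
      Matrix.charpoly_map]
  have heval : ∀ q : Polynomial ℝ, (q.map Complex.ofRealHom).eval 1 = ((q.eval 1 : ℝ) : ℂ) := by
    intro q
    rw [eval_map, eval₂_at_one]
    rfl
  have hkem : kemeny P
      = ((p.derivative.derivative.eval 1 : ℝ) : ℂ) / (2 * ((p.derivative.eval 1 : ℝ) : ℂ)) := by
    unfold kemeny
    rw [hmap]
    rw [kemeny_eq_deriv _ ((Matrix.charpoly_monic P).map _)
      (by rw [heval, hGval]; simp)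
      (by rw [derivative_map, heval]; exact_mod_cast hp'ne)]
    rw [derivative_map, derivative_map, heval, heval]
  rw [hkem]
  rw [show (2 : ℂ) * ((p.derivative.eval 1 : ℝ) : ℂ) = (((2 * (p.derivative.eval 1) : ℝ)) : ℂ)
    from by push_cast; ring, ← Complex.ofReal_div]
  congr 1
  -- final real algebra
  have hU' : p.derivative.eval 1 = ((1+b) + ((m+1:ℝ)^2 + a*(m+1)) - ((m:ℝ)^2 + a*m)) / D := by
    field_simp
    linarith [hUval]
  have hV' : (p.derivative.derivative).eval 1
      = (2*(1+b)*((m+1:ℝ)^2 + a*(m+1))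
        + (m+1:ℝ)*((m+1:ℝ)^2-1)*((m+1:ℝ)+2*a)/3 - (m:ℝ)*((m:ℝ)^2-1)*((m:ℝ)+2*a)/3) / D := by
    field_simp
    linarith [hVval]
  rw [hU', hV']
  have hNcast : (((m+2:ℕ):ℝ)) = (m:ℝ) + 2 := by push_cast; ring
  rw [hNcast]
  have hden : (2 * ((m:ℝ)+2) + a + b - 2) = (1+b) + ((m+1:ℝ)^2 + a*(m+1)) - ((m:ℝ)^2 + a*m) := by
    push_cast; ring
  rw [hden]
  set U := (1+b) + ((m+1:ℝ)^2 + a*(m+1)) - ((m:ℝ)^2 + a*m) with hUdef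
  have hUne : U ≠ 0 := ne_of_gt hUpos
  field_simp
  push_cast
  ring
end
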